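/- arXiv:2310.15619 — 6 statements merged into one kernel-verified Lean document; each statement's English description precedes it below -/
import Mathlib

section
/- Let f(t) = a_d t^d + ⋯ + a_0 ∈ ℤ[t] be a nonzero polynomial of degree d, and view its roots α_1, …, α_d (counted with multiplicity) as elements of ℚ̄_p via a fixed embedding. Then for every n ∈ ℕ one has |Δ_n(f)|_p = M_p(f)^n · ∏_{i : |α_i|_p = 1} |α_i^n − 1|_p. -/
open Polynomial

/-- The Pierce–Lehmer sequence `Δ_n(f) = a_d^n ∏_i (α_i^n - 1)` of an integer polynomial,
computed inside a field `K` containing all the roots of `f`. -/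
noncomputable def pierceLehmer (K : Type*) [Field K] (f : Polynomial ℤ) (n : ℕ) : K :=
  ((f.map (Int.castRingHom K)).leadingCoeff) ^ n *
    (((f.map (Int.castRingHom K)).roots).map (fun α => α ^ n - 1)).prod

/-- The Mahler measure `|a_d| ∏_i max(1, |α_i|)` of an integer polynomial, computed using
the norm of a normed field `K` containing all the roots of `f`. -/
noncomputable def mahlerMeasure (K : Type*) [NormedField K] (f : Polynomial ℤ) : ℝ :=
  ‖(f.map (Int.castRingHom K)).leadingCoeff‖ *
    (((f.map (Int.castRingHom K)).roots).map (fun α => max 1 ‖α‖)).prod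

lemma multiset_prod_map_ite {α : Type*} (s : Multiset α) (P : α → Prop) [DecidablePred P]
    (h : α → ℝ) :
    (s.map (fun a => if P a then h a else 1)).prod = ((s.filter P).map h).prod := by
  induction s using Multiset.induction with
  | empty => simp
  | cons a s ih =>
    by_cases hP : P a <;> simp [Multiset.filter_cons, hP, ih]

lemma key_pointwise {K : Type*} [NormedField K] [IsUltrametricDist K] (α : K) {n : ℕ}
    (hn : 0 < n) :
    ‖α ^ n - 1‖ = (max 1 ‖α‖) ^ n * (if ‖α‖ = 1 then ‖α ^ n - 1‖ else 1) := by
  rcases lt_trichotomy ‖α‖ 1 with h | h | h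
  · have h1 : ‖α ^ n‖ < 1 := by
      rw [norm_pow]; exact pow_lt_one₀ (norm_nonneg _) h hn.ne'
    have h2 : ‖α ^ n - 1‖ = max ‖α ^ n‖ ‖(1 : K)‖ := by
      have := IsUltrametricDist.norm_add_eq_max_of_norm_ne_norm
        (x := α ^ n) (y := (-1 : K)) (by simpa using h1.ne)
      simpa [sub_eq_add_neg] using this
    rw [h2]
    simp [h.ne, max_eq_right h1.le, max_eq_left h.le,
      pow_le_one₀ (norm_nonneg α) h.le]
  · simp [h]
  · have h1 : (1 : ℝ) < ‖α ^ n‖ := by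
      rw [norm_pow]; exact one_lt_pow₀ h hn.ne'
    have h2 : ‖α ^ n - 1‖ = max ‖α ^ n‖ ‖(1 : K)‖ := by
      have := IsUltrametricDist.norm_add_eq_max_of_norm_ne_norm
        (x := α ^ n) (y := (-1 : K)) (by simpa using h1.ne')
      simpa [sub_eq_add_neg] using this
    rw [h2]
    simp [h.ne', max_eq_left h1.le, max_eq_right h.le, norm_pow, one_le_pow₀ h.le]

lemma ultra_of_ext (p : ℕ) [Fact p.Prime]
    (K : Type*) [NormedField K] [Algebra ℚ_[p] K]
    (hext : ∀ x : ℚ_[p], ‖algebraMap ℚ_[p] K x‖ = ‖x‖) : IsUltrametricDist K := by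
  apply IsUltrametricDist.isUltrametricDist_of_forall_norm_natCast_le_one
  intro m
  have h1 : (m : K) = algebraMap ℚ_[p] K (m : ℚ_[p]) := by
    rw [map_natCast]
  rw [h1, hext]
  have := Padic.norm_int_le_one (p := p) (m : ℤ)
  rwa [Int.cast_natCast] at this

open scoped Classical

/-- for a nonzero `f ∈ ℤ[t]` with roots `α_1, …, α_d ∈ ℚ̄_p`, one has
`|Δ_n(f)|_p = M_p(f)^n · ∏_{|α_i|_p = 1} |α_i^n − 1|_p` for every `n ≥ 1`. -/
theorem padic_abs_pierceLehmer
    (p : ℕ) [Fact p.Prime]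
    (K : Type*) [NormedField K] [Algebra ℚ_[p] K] [IsAlgClosure ℚ_[p] K]
    (hext : ∀ x : ℚ_[p], ‖algebraMap ℚ_[p] K x‖ = ‖x‖)
    (f : Polynomial ℤ) (hf : f ≠ 0) (n : ℕ) (hn : 0 < n) :
    ‖pierceLehmer K f n‖ =
      mahlerMeasure K f ^ n *
        ((((f.map (Int.castRingHom K)).roots).filter (fun α => ‖α‖ = 1)).map
          (fun α => ‖α ^ n - 1‖)).prod := by
  have := ultra_of_ext p K hext
  unfold pierceLehmer _root_.mahlerMeasure
  set s := (f.map (Int.castRingHom K)).roots with hs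
  have hnorm : ‖(s.map (fun α => α ^ n - 1)).prod‖
      = (s.map (fun α => ‖α ^ n - 1‖)).prod := by
    simpa [Multiset.map_map] using
      map_multiset_prod (normHom : K →*₀ ℝ) (s.map (fun α => α ^ n - 1))
  rw [norm_mul, norm_pow, hnorm, mul_pow, ← Multiset.prod_map_pow]
  rw [mul_assoc]
  congr 1
  calc (s.map (fun α => ‖α ^ n - 1‖)).prod
      = (s.map (fun α => (max 1 ‖α‖) ^ n * (if ‖α‖ = 1 then ‖α ^ n - 1‖ else 1))).prod := by
        congr 1
        exact Multiset.map_congr rfl (fun α _ => key_pointwise α hn)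
    _ = (s.map (fun α => (max 1 ‖α‖) ^ n)).prod *
        (s.map (fun α => if ‖α‖ = 1 then ‖α ^ n - 1‖ else 1)).prod := Multiset.prod_map_mul
    _ = _ := by rw [multiset_prod_map_ite]
end

section
/- Let α ∈ ℚ̄_p satisfy |α|_p = 1 and assume α is not a root of unity. Let ξ be the Teichmüller representative of α, let N be the (p-coprime) order of ξ, let s be the minimal nonnegative integer such that p^s (p−1) ord_p(α − ξ) > 1, and for n ∈ ℕ set r := min(ord_p(n), s). Then for every n ∈ ℕ: if N does not divide n then ord_p(α^n − 1) = 0, while if N divides n then ord_p(α^n − 1) = ord_p(n) + ord_p(α^{p^r} − ξ^{p^r}) − r. -/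
/-- The additive `p`-adic valuation `ord_p(x) = -log ‖x‖ / log p` on a normed field. -/
noncomputable def ordp (p : ℕ) {K : Type*} [NormedField K] (x : K) : ℝ :=
  -(Real.log ‖x‖ / Real.log p)

open IsUltrametricDist Finset in
lemma aux_pow_sub_le {K : Type*} [NormedField K] [IsUltrametricDist K] {β ω : K}
    (hβ : ‖β‖ ≤ 1) (hω : ‖ω‖ ≤ 1) (m : ℕ) : ‖β ^ m - ω ^ m‖ ≤ ‖β - ω‖ := by
  rw [← geom_sum₂_mul, norm_mul]
  have h1 : ‖∑ i ∈ range m, β ^ i * ω ^ (m - 1 - i)‖ ≤ 1 := by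
    refine norm_sum_le_of_forall_le_of_nonneg zero_le_one (fun i _ => ?_)
    rw [norm_mul, norm_pow, norm_pow]
    exact mul_le_one₀ (pow_le_one₀ (norm_nonneg _) hβ) (by positivity)
      (pow_le_one₀ (norm_nonneg _) hω)
  calc ‖∑ i ∈ range m, β ^ i * ω ^ (m - 1 - i)‖ * ‖β - ω‖
      ≤ 1 * ‖β - ω‖ := mul_le_mul_of_nonneg_right h1 (norm_nonneg _)
    _ = ‖β - ω‖ := one_mul _

open IsUltrametricDist Finset in
/-- If `‖β - ω‖ < 1 = ‖ω‖` and `m` has norm `1` in `K`, then `‖β^m - ω^m‖ = ‖β - ω‖`. -/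
lemma aux_pow_sub_eq {K : Type*} [NormedField K] [IsUltrametricDist K] {β ω : K}
    (hω : ‖ω‖ = 1) (hτ : ‖β - ω‖ < 1) {m : ℕ} (hm : ‖(m : K)‖ = 1) :
    ‖β ^ m - ω ^ m‖ = ‖β - ω‖ := by
  have hβ : ‖β‖ ≤ 1 := by
    have h : β = (β - ω) + ω := by ring
    rw [h]
    exact (norm_add_le_max _ _).trans (by rw [hω]; exact max_le hτ.le le_rfl)
  have hω1 : ‖ω‖ ≤ 1 := hω.le
  have hsplit : ∑ i ∈ range m, β ^ i * ω ^ (m - 1 - i)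
      = (m : K) * ω ^ (m - 1) + ∑ i ∈ range m, (β ^ i - ω ^ i) * ω ^ (m - 1 - i) := by
    have h1 : ∀ i ∈ range m, β ^ i * ω ^ (m - 1 - i)
        = ω ^ (m - 1) + (β ^ i - ω ^ i) * ω ^ (m - 1 - i) := by
      intro i hi
      have hi' : i ≤ m - 1 := Nat.le_sub_one_of_lt (mem_range.mp hi)
      have h2 : ω ^ i * ω ^ (m - 1 - i) = ω ^ (m - 1) := by
        rw [← pow_add, Nat.add_sub_cancel' hi']
      rw [← h2]; ring
    rw [Finset.sum_congr rfl h1, Finset.sum_add_distrib, Finset.sum_const, card_range,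
      nsmul_eq_mul]
  have hfst : ‖(m : K) * ω ^ (m - 1)‖ = 1 := by
    rw [norm_mul, norm_pow, hm, hω, one_pow, one_mul]
  have hsnd : ‖∑ i ∈ range m, (β ^ i - ω ^ i) * ω ^ (m - 1 - i)‖ ≤ ‖β - ω‖ := by
    refine norm_sum_le_of_forall_le_of_nonneg (norm_nonneg _) (fun i _ => ?_)
    rw [norm_mul, norm_pow]
    calc ‖β ^ i - ω ^ i‖ * ‖ω‖ ^ (m - 1 - i)
        ≤ ‖β - ω‖ * 1 := mul_le_mul (aux_pow_sub_le hβ hω1 i)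
          (pow_le_one₀ (norm_nonneg _) hω1) (by positivity) (norm_nonneg _)
      _ = ‖β - ω‖ := mul_one _
  have hG : ‖∑ i ∈ range m, β ^ i * ω ^ (m - 1 - i)‖ = 1 := by
    rw [hsplit, norm_add_eq_max_of_norm_ne_norm (by rw [hfst]; exact (hsnd.trans_lt hτ).ne'),
      hfst, max_eq_left ((hsnd.trans hτ.le))]
  rw [← geom_sum₂_mul, norm_mul, hG, one_mul]

open IsUltrametricDist Finset in
/-- Binomial expansion of `β^p - ω^p` in terms of `τ = β - ω`. -/
lemma aux_binom {K : Type*} [Field K] {β ω : K} {p : ℕ} (hp : 0 < p) :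
    β ^ p - ω ^ p = ∑ k ∈ Finset.range p, ω ^ k * (β - ω) ^ (p - k) * (p.choose k) := by
  have h : β = ω + (β - ω) := by ring
  calc β ^ p - ω ^ p = (ω + (β - ω)) ^ p - ω ^ p := by rw [← h]
    _ = ∑ k ∈ Finset.range p, ω ^ k * (β - ω) ^ (p - k) * (p.choose k) := by
        rw [add_pow, Finset.sum_range_succ]
        simp

open IsUltrametricDist Finset in
lemma aux_step_le {K : Type*} [NormedField K] [IsUltrametricDist K] {p : ℕ} (hp : p.Prime)
    (hpK : ‖(p : K)‖ ≤ (p : ℝ)⁻¹)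
    {β ω : K} (hω : ‖ω‖ = 1) (hτ : ‖β - ω‖ ≤ 1) :
    ‖β ^ p - ω ^ p‖ ≤ max (‖β - ω‖ ^ p) ((p : ℝ)⁻¹ * ‖β - ω‖) := by
  rw [aux_binom hp.pos]
  refine norm_sum_le_of_forall_le_of_nonneg (le_max_of_le_left (by positivity)) (fun k hk => ?_)
  rw [norm_mul, norm_mul, norm_pow, norm_pow, hω, one_pow, one_mul]
  rcases Nat.eq_zero_or_pos k with hk0 | hk0
  · subst hk0
    simp only [Nat.sub_zero, Nat.choose_zero_right, Nat.cast_one, norm_one, mul_one]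
    exact le_max_left _ _
  · refine le_max_of_le_right ?_
    have hdvd : p ∣ p.choose k := hp.dvd_choose_self hk0.ne' (mem_range.mp hk)
    obtain ⟨d, hd⟩ := hdvd
    have hC : ‖((p.choose k : ℕ) : K)‖ ≤ (p : ℝ)⁻¹ := by
      rw [hd, Nat.cast_mul, norm_mul]
      calc ‖(p : K)‖ * ‖(d : K)‖ ≤ (p : ℝ)⁻¹ * 1 := by
            refine mul_le_mul hpK (norm_natCast_le_one K d) (norm_nonneg _) (by positivity)
        _ = (p : ℝ)⁻¹ := mul_one _
    calc ‖β - ω‖ ^ (p - k) * ‖((p.choose k : ℕ) : K)‖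
        ≤ ‖β - ω‖ ^ 1 * (p : ℝ)⁻¹ := by
          refine mul_le_mul (pow_le_pow_of_le_one (norm_nonneg _) hτ ?_) hC (norm_nonneg _)
            (by positivity)
          have hkp := mem_range.mp hk
          omega
      _ = (p : ℝ)⁻¹ * ‖β - ω‖ := by rw [pow_one]; ring

open IsUltrametricDist Finset in
lemma aux_step_eq {K : Type*} [NormedField K] [IsUltrametricDist K] {p : ℕ} (hp : p.Prime)
    (hpK : ‖(p : K)‖ = (p : ℝ)⁻¹)
    {β ω : K} (hω : ‖ω‖ = 1) (hτ : ‖β - ω‖ < 1) (hτ0 : β ≠ ω)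
    (hlt : ‖β - ω‖ ^ (p - 1) < (p : ℝ)⁻¹) :
    ‖β ^ p - ω ^ p‖ = (p : ℝ)⁻¹ * ‖β - ω‖ := by
  have hτpos : 0 < ‖β - ω‖ := norm_pos_iff.mpr (sub_ne_zero.mpr hτ0)
  have hp1 : p - 1 + 1 = p := Nat.succ_pred_eq_of_pos hp.pos
  have hppos : (0:ℝ) < (p:ℝ)⁻¹ := by
    have := hp.pos; positivity
  have hlast : ‖ω ^ (p-1) * (β - ω) ^ (p - (p-1)) * ((p.choose (p-1) : ℕ) : K)‖
      = (p : ℝ)⁻¹ * ‖β - ω‖ := by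
    have h1 : p - (p - 1) = 1 := by have := hp.two_le; omega
    have h2 : p.choose (p-1) = p := by
      rw [Nat.choose_symm hp.one_lt.le, Nat.choose_one_right]
    rw [norm_mul, norm_mul, norm_pow, hω, one_pow, one_mul, h1, pow_one, h2, hpK, mul_comm]
  have hprefix : ‖∑ k ∈ range (p-1), ω ^ k * (β - ω) ^ (p - k) * (p.choose k)‖
      < (p : ℝ)⁻¹ * ‖β - ω‖ := by
    have hbound : max (‖β - ω‖ ^ p) ((p : ℝ)⁻¹ * (‖β - ω‖ * ‖β - ω‖)) < (p : ℝ)⁻¹ * ‖β - ω‖ := by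
      refine max_lt ?_ ?_
      · calc ‖β - ω‖ ^ p = ‖β - ω‖ ^ (p-1) * ‖β - ω‖ := by rw [← pow_succ, hp1]
          _ < (p : ℝ)⁻¹ * ‖β - ω‖ := by exact mul_lt_mul_of_pos_right hlt hτpos
      · calc (p : ℝ)⁻¹ * (‖β - ω‖ * ‖β - ω‖) < (p : ℝ)⁻¹ * (1 * ‖β - ω‖) := by
              refine mul_lt_mul_of_pos_left (mul_lt_mul_of_pos_right hτ hτpos) hppos
          _ = (p : ℝ)⁻¹ * ‖β - ω‖ := by ring
    refine lt_of_le_of_lt ?_ hbound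
    refine norm_sum_le_of_forall_le_of_nonneg (le_max_of_le_left (by positivity)) (fun k hk => ?_)
    have hkp : k < p - 1 := mem_range.mp hk
    rw [norm_mul, norm_mul, norm_pow, norm_pow, hω, one_pow, one_mul]
    rcases Nat.eq_zero_or_pos k with hk0 | hk0
    · subst hk0
      simp only [Nat.sub_zero, Nat.choose_zero_right, Nat.cast_one, norm_one, mul_one]
      exact le_max_left _ _
    · refine le_max_of_le_right ?_
      obtain ⟨d, hd⟩ := hp.dvd_choose_self hk0.ne' (by omega : k < p)
      have hC : ‖((p.choose k : ℕ) : K)‖ ≤ (p : ℝ)⁻¹ := by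
        rw [hd, Nat.cast_mul, norm_mul]
        calc ‖(p : K)‖ * ‖(d : K)‖ ≤ (p : ℝ)⁻¹ * 1 := by
              rw [hpK]
              refine mul_le_mul_of_nonneg_left (norm_natCast_le_one K d) hppos.le
          _ = (p : ℝ)⁻¹ := mul_one _
      calc ‖β - ω‖ ^ (p - k) * ‖((p.choose k : ℕ) : K)‖
          ≤ ‖β - ω‖ ^ 2 * (p : ℝ)⁻¹ :=
            mul_le_mul (pow_le_pow_of_le_one (norm_nonneg _) hτ.le (by omega)) hC
              (norm_nonneg _) (by positivity)
        _ = (p : ℝ)⁻¹ * (‖β - ω‖ * ‖β - ω‖) := by ring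
  rw [aux_binom hp.pos]
  have hsplit : ∑ k ∈ range p, ω ^ k * (β - ω) ^ (p - k) * (p.choose k)
      = (∑ k ∈ range (p-1), ω ^ k * (β - ω) ^ (p - k) * (p.choose k))
        + ω ^ (p-1) * (β - ω) ^ (p - (p-1)) * (p.choose (p-1)) := by
    rw [← Finset.sum_range_succ, hp1]
  rw [hsplit, norm_add_eq_max_of_norm_ne_norm (by rw [hlast]; exact hprefix.ne),
    hlast, max_eq_right hprefix.le]

/-- For `x ≠ 0`, `‖x‖ = p ^ (-ordp p x)` (as a real power). -/
lemma aux_rpow_ordp {p : ℕ} (hp : 1 < (p : ℝ)) {K : Type*} [NormedField K] {x : K} (hx : x ≠ 0) :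
    (p : ℝ) ^ (-(ordp p x)) = ‖x‖ := by
  have hppos : (0:ℝ) < p := lt_trans one_pos hp
  have hlogp : Real.log p ≠ 0 := ne_of_gt (Real.log_pos hp)
  rw [ordp, neg_neg, Real.rpow_def_of_pos hppos, mul_comm, div_mul_cancel₀ _ hlogp]
  exact Real.exp_log (norm_pos_iff.mpr hx)

lemma aux_ordp_eq_add {p : ℕ} (hp : 1 < (p : ℝ)) {K : Type*} [NormedField K] {x y : K}
    (hy : y ≠ 0) (k : ℕ) (h : ‖x‖ = ((p : ℝ)⁻¹) ^ k * ‖y‖) : ordp p x = k + ordp p y := by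
  have hynorm : (0:ℝ) < ‖y‖ := norm_pos_iff.mpr hy
  have hppos : (0:ℝ) < p := lt_trans one_pos hp
  have hlogp : Real.log p ≠ 0 := ne_of_gt (Real.log_pos hp)
  rw [ordp, ordp, h, Real.log_mul (by positivity) (ne_of_gt hynorm), Real.log_pow,
    Real.log_inv]
  field_simp
  ring

/-- for `α ∈ ℚ̄_p` with `|α|_p = 1` not a root of unity, with Teichmüller
representative `ξ` of order `N`, minimal `s ≥ 0` with `p^s (p-1) ord_p(α - ξ) > 1`, and
`r = min(ord_p n, s)`: if `N ∤ n` then `ord_p(α^n - 1) = 0`, and if `N ∣ n` then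
`ord_p(α^n - 1) = ord_p(n) + ord_p(α^{p^r} - ξ^{p^r}) - r`. -/
theorem ordp_pow_sub_one
    (p : ℕ) [Fact p.Prime]
    (K : Type*) [NormedField K] [Algebra ℚ_[p] K] [IsAlgClosure ℚ_[p] K]
    (hext : ∀ x : ℚ_[p], ‖algebraMap ℚ_[p] K x‖ = ‖x‖)
    (α : K) (hα : ‖α‖ = 1) (hαru : ¬ IsOfFinOrder α)
    (ξ : K) (hξ : IsOfFinOrder ξ) (hξp : (orderOf ξ).Coprime p) (hξα : ‖α - ξ‖ < 1)
    (s : ℕ)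
    (hs : (p : ℝ) ^ s * ((p : ℝ) - 1) * ordp p (α - ξ) > 1)
    (hsmin : ∀ s' : ℕ, s' < s → ¬ ((p : ℝ) ^ s' * ((p : ℝ) - 1) * ordp p (α - ξ) > 1))
    (n : ℕ) (hn : 0 < n) :
    (¬ orderOf ξ ∣ n → ordp p (α ^ n - 1) = 0) ∧
    (orderOf ξ ∣ n →
      ordp p (α ^ n - 1) =
        (padicValNat p n : ℝ) +
          ordp p (α ^ p ^ min (padicValNat p n) s - ξ ^ p ^ min (padicValNat p n) s) -
          (min (padicValNat p n) s : ℝ)) := by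
  have hp : p.Prime := Fact.out
  have hpR1 : (1:ℝ) < p := by exact_mod_cast hp.one_lt
  have hpRpos : (0:ℝ) < p := lt_trans one_pos hpR1
  have hnat : ∀ m : ℕ, ‖(m : K)‖ = ‖(m : ℚ_[p])‖ := fun m => by
    rw [← map_natCast (algebraMap ℚ_[p] K) m, hext]
  have hnat1 : ∀ m : ℕ, ‖(m : K)‖ ≤ 1 := fun m => by
    rw [hnat m]
    have := Padic.norm_int_le_one (p := p) (m : ℤ)
    push_cast at this
    exact this
  haveI hud : IsUltrametricDist K :=
    IsUltrametricDist.isUltrametricDist_of_forall_norm_natCast_le_one hnat1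
  have hpK : ‖(p : K)‖ = (p:ℝ)⁻¹ := by rw [hnat]; exact Padic.norm_p
  have hcop : ∀ m : ℕ, ¬ p ∣ m → ‖(m : K)‖ = 1 := by
    intro m hm
    rw [hnat]
    have h1 : ((m : ℚ) : ℚ_[p]) = (m : ℚ_[p]) := by push_cast; rfl
    rw [← h1, Padic.eq_padicNorm, (padicNorm.nat_eq_one_iff (p := p) m).mpr hm]
    norm_num
  have hNpos : 0 < orderOf ξ := hξ.orderOf_pos
  have hpN : ¬ p ∣ orderOf ξ := by
    intro h
    have h2 : p ∣ Nat.gcd (orderOf ξ) p := Nat.dvd_gcd h dvd_rfl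
    rw [hξp] at h2
    exact hp.one_lt.ne' (Nat.eq_one_of_dvd_one h2)
  have hξnorm : ‖ξ‖ = 1 := by
    have h1 : ξ ^ orderOf ξ = 1 := pow_orderOf_eq_one ξ
    have h2 : ‖ξ‖ ^ orderOf ξ = 1 := by rw [← norm_pow, h1, norm_one]
    rcases lt_trichotomy ‖ξ‖ 1 with h | h | h
    · exfalso
      have := pow_lt_one₀ (norm_nonneg ξ) h hNpos.ne'
      rw [h2] at this; exact lt_irrefl 1 this
    · exact h
    · exfalso
      have := one_lt_pow₀ h hNpos.ne'
      rw [h2] at this; exact lt_irrefl 1 this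
  have hne : ∀ M : ℕ, 0 < M → α ^ M ≠ ξ ^ M := by
    intro M hM heq
    refine hαru (isOfFinOrder_iff_pow_eq_one.mpr ⟨M * orderOf ξ, by positivity, ?_⟩)
    rw [pow_mul, heq, ← pow_mul, mul_comm, pow_mul, pow_orderOf_eq_one, one_pow]
  have hαξ : α ≠ ξ := by
    intro h
    have := hne 1 one_pos
    simp [h] at this
  constructor
  · -- Case N ∤ n
    intro hndvd
    have hxin : ξ ^ n ≠ 1 := fun h => hndvd (orderOf_dvd_of_pow_eq_one h)
    have h2 : ‖ξ ^ n - 1‖ = 1 := by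
      rcases lt_or_ge ‖ξ ^ n - 1‖ 1 with hlt | hge
      · exfalso
        have h3 := aux_pow_sub_eq (β := ξ ^ n) (ω := (1:K)) (m := orderOf ξ)
          norm_one hlt (hcop _ hpN)
        rw [one_pow, ← pow_mul, mul_comm, pow_mul, pow_orderOf_eq_one, one_pow,
          sub_self, norm_zero] at h3
        exact hxin (sub_eq_zero.mp (norm_eq_zero.mp h3.symm))
      · refine le_antisymm ?_ hge
        have h4 : ξ ^ n - 1 = ξ ^ n + (-1) := by ring
        rw [h4]
        refine (IsUltrametricDist.norm_add_le_max _ _).trans ?_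
        simp [norm_pow, hξnorm]
    have h4 : ‖α ^ n - ξ ^ n‖ ≤ ‖α - ξ‖ := aux_pow_sub_le hα.le hξnorm.le n
    have h5 : α ^ n - 1 = (α ^ n - ξ ^ n) + (ξ ^ n - 1) := by ring
    have h6 : ‖α ^ n - 1‖ = 1 := by
      rw [h5, IsUltrametricDist.norm_add_eq_max_of_norm_ne_norm
        (by rw [h2]; exact ne_of_lt (h4.trans_lt hξα)), h2,
        max_eq_right (h4.trans hξα.le)]
    rw [ordp, h6, Real.log_one, zero_div, neg_zero]
  · -- Case N ∣ n
    intro hdvd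
    set t := padicValNat p n with htdef
    set m := n / p ^ t with hmdef
    have hnm : p ^ t * m = n := by
      rw [hmdef, htdef, ← Nat.factorization_def n hp]
      exact Nat.ordProj_mul_ordCompl_eq_self n p
    have hmdvd : ¬ p ∣ m := by
      rw [hmdef, htdef, ← Nat.factorization_def n hp]
      exact Nat.not_dvd_ordCompl hp hn.ne'
    -- the sequence of norms
    set u : ℕ → ℝ := fun k => ‖α ^ p ^ k - ξ ^ p ^ k‖ with hudef
    have hupos : ∀ k, 0 < u k := fun k =>
      norm_pos_iff.mpr (sub_ne_zero.mpr (hne (p ^ k) (pow_pos hp.pos k)))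
    have hωk : ∀ k, ‖ξ ^ p ^ k‖ = 1 := fun k => by rw [norm_pow, hξnorm, one_pow]
    have hpowα : ∀ k, α ^ p ^ (k+1) = (α ^ p ^ k) ^ p := fun k => by
      rw [← pow_mul, pow_succ]
    have hpowξ : ∀ k, ξ ^ p ^ (k+1) = (ξ ^ p ^ k) ^ p := fun k => by
      rw [← pow_mul, pow_succ]
    have hu1 : ∀ k, u k < 1 := by
      intro k
      induction k with
      | zero => simpa [hudef] using hξα
      | succ k ih =>
        have h := aux_step_le hp hpK.le (hωk k) ih.le
        rw [← hpowα, ← hpowξ] at h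
        refine lt_of_le_of_lt h (max_lt ?_ ?_)
        · exact pow_lt_one₀ (hupos k).le ih hp.pos.ne'
        · have h1 : (p:ℝ)⁻¹ ≤ 1 := by
            rw [inv_le_one_iff₀]; right; exact hpR1.le
          nlinarith [hupos k, ih, h1, hpRpos]
    -- step 1 : ‖α^n - 1‖ = u t
    have hξn : ξ ^ n = 1 := orderOf_dvd_iff_pow_eq_one.mp hdvd
    have hstep1 : ‖α ^ n - 1‖ = u t := by
      have h1 : α ^ n - 1 = (α ^ p ^ t) ^ m - (ξ ^ p ^ t) ^ m := by
        rw [← pow_mul, ← pow_mul, hnm, hξn]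
      rw [h1]
      exact aux_pow_sub_eq (hωk t) (hu1 t) (hcop m hmdvd)
    -- the valuation v = ordp (α - ξ) and the chain below s
    set v : ℝ := ordp p (α - ξ) with hvdef
    have hu0 : u 0 = (p:ℝ) ^ (-v) := by
      rw [hudef]
      simp only [pow_zero, pow_one]
      exact (aux_rpow_ordp hpR1 (sub_ne_zero.mpr hαξ)).symm
    have hrpow_le : ∀ a b : ℝ, a ≤ b → (p:ℝ) ^ (-b) ≤ (p:ℝ) ^ (-a) := fun a b hab =>
      (Real.rpow_le_rpow_left_iff hpR1).mpr (neg_le_neg hab)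
    have hchainlow : ∀ k, k ≤ s → u k ≤ (p:ℝ) ^ (-((p:ℝ) ^ k * v)) := by
      intro k
      induction k with
      | zero => intro _; rw [hu0]; simp
      | succ k ih =>
        intro hks
        have hk' : k ≤ s := Nat.le_of_succ_le hks
        have ihk := ih hk'
        have h := aux_step_le hp hpK.le (hωk k) (hu1 k).le
        rw [← hpowα, ← hpowξ] at h
        refine h.trans (max_le ?_ ?_)
        · -- u k ^ p ≤ p ^ (- p^(k+1) v)
          calc u k ^ p ≤ ((p:ℝ) ^ (-((p:ℝ) ^ k * v))) ^ p :=
                pow_le_pow_left₀ (hupos k).le ihk p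
            _ = (p:ℝ) ^ (-((p:ℝ) ^ (k+1) * v)) := by
                rw [← Real.rpow_natCast ((p:ℝ) ^ (-((p:ℝ) ^ k * v))) p, ← Real.rpow_mul hpRpos.le]
                congr 1
                ring
        · -- p⁻¹ * u k ≤ p ^ (- p^(k+1) v)
          have h1 : (p:ℝ)⁻¹ * u k ≤ (p:ℝ) ^ (-(1 + (p:ℝ) ^ k * v)) := by
            calc (p:ℝ)⁻¹ * u k ≤ (p:ℝ)⁻¹ * (p:ℝ) ^ (-((p:ℝ) ^ k * v)) :=
                  mul_le_mul_of_nonneg_left ihk (by positivity)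
              _ = (p:ℝ) ^ (-(1 + (p:ℝ) ^ k * v)) := by
                  rw [neg_add, Real.rpow_add hpRpos, Real.rpow_neg_one]
          refine h1.trans (hrpow_le _ _ ?_)
          -- p^(k+1) v ≤ 1 + p^k v,  from hsmin k
          have h2 : ¬ ((p : ℝ) ^ k * ((p : ℝ) - 1) * v > 1) := hsmin k hks
          push_neg at h2
          have hps : (p:ℝ) ^ (k+1) * v = (p:ℝ) ^ k * ((p:ℝ) - 1) * v + (p:ℝ) ^ k * v := by
            ring
          linarith [h2]
    -- invariant at s
    have hinvs : u s ^ (p - 1) < (p:ℝ)⁻¹ := by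
      have h1 : u s ^ (p - 1) ≤ (p:ℝ) ^ (-((p:ℝ) ^ s * v * (p - 1))) := by
        calc u s ^ (p - 1) ≤ ((p:ℝ) ^ (-((p:ℝ) ^ s * v))) ^ (p - 1) :=
              pow_le_pow_left₀ (hupos s).le (hchainlow s le_rfl) _
          _ = (p:ℝ) ^ (-((p:ℝ) ^ s * v * ((p:ℕ) - 1 : ℕ))) := by
              rw [← Real.rpow_natCast ((p:ℝ) ^ (-((p:ℝ) ^ s * v))) (p - 1),
                ← Real.rpow_mul hpRpos.le]
              congr 1
              ring
          _ = (p:ℝ) ^ (-((p:ℝ) ^ s * v * ((p:ℝ) - 1))) := by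
              congr 2
              have : ((p - 1 : ℕ) : ℝ) = (p:ℝ) - 1 := by
                have := hp.one_lt
                push_cast [Nat.cast_sub hp.one_lt.le]
                ring
              rw [this]
      refine h1.trans_lt ?_
      have h2 : (p:ℝ)⁻¹ = (p:ℝ) ^ (-(1:ℝ)) := by
        rw [Real.rpow_neg_one]
      rw [h2]
      refine (Real.rpow_lt_rpow_left_iff hpR1).mpr ?_
      have : 1 < (p:ℝ) ^ s * ((p:ℝ) - 1) * v := hs
      nlinarith [this]
    -- chain above s
    have hchain : ∀ d : ℕ, u (s + d) = ((p:ℝ)⁻¹) ^ d * u s ∧ u (s + d) ^ (p - 1) < (p:ℝ)⁻¹ := by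
      intro d
      induction d with
      | zero => simpa using hinvs
      | succ d ih =>
        have hne' : α ^ p ^ (s + d) ≠ ξ ^ p ^ (s + d) := hne _ (pow_pos hp.pos _)
        have heq : u (s + (d+1)) = (p:ℝ)⁻¹ * u (s + d) := by
          have h := aux_step_eq hp hpK (hωk (s+d)) (hu1 (s+d)) hne' ih.2
          have h2 : s + (d+1) = (s + d) + 1 := by omega
          rw [hudef]
          simp only [h2]
          rw [hpowα, hpowξ]
          exact h
        constructor
        · rw [heq, ih.1, pow_succ]; ring
        · rw [heq, mul_pow]
          have hb : ((p:ℝ)⁻¹) ^ (p - 1) * u (s + d) ^ (p - 1) ≤ u (s + d) ^ (p - 1) := by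
            calc ((p:ℝ)⁻¹) ^ (p - 1) * u (s + d) ^ (p - 1)
                ≤ 1 * u (s + d) ^ (p - 1) := by
                  refine mul_le_mul_of_nonneg_right ?_ (by positivity)
                  exact pow_le_one₀ (by positivity)
                    (by rw [inv_le_one_iff₀]; right; exact hpR1.le)
              _ = u (s + d) ^ (p - 1) := one_mul _
          exact hb.trans_lt ih.2
    -- conclusion
    set r := min t s with hrdef
    have hrt : r ≤ t := min_le_left _ _
    have hfinal : ‖α ^ n - 1‖ = ((p:ℝ)⁻¹) ^ (t - r) * ‖α ^ p ^ r - ξ ^ p ^ r‖ := by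
      rcases le_or_gt t s with hts | hst
      · have hr : r = t := min_eq_left hts
        rw [hstep1, hr]
        simp [hudef]
      · have hr : r = s := min_eq_right hst.le
        have h1 := (hchain (t - s)).1
        have h2 : s + (t - s) = t := by omega
        rw [h2] at h1
        rw [hstep1, h1, hr]
    have hy : α ^ p ^ r - ξ ^ p ^ r ≠ 0 := sub_ne_zero.mpr (hne _ (pow_pos hp.pos _))
    have := aux_ordp_eq_add hpR1 hy (t - r) hfinal
    rw [this]
    have hcast : ((t - r : ℕ) : ℝ) = (t : ℝ) - r := by
      push_cast [Nat.cast_sub hrt]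
      ring
    rw [hcast]
    have hrcast : ((r : ℕ) : ℝ) = min (t : ℝ) (s : ℝ) := by
      rw [hrdef]
      push_cast
      rfl
    rw [hrcast]
    ring
end

section
/- Let f ∈ ℤ[t] be a nonzero polynomial which does not vanish at any root of unity, let p be a prime, and let β_1, …, β_d ∈ ℚ̄_p be the roots of f counted with multiplicity. Set μ_p(f) := −m_p(f)/log p, B_{p,n}(f) := {β ∈ ℚ̄_p : f(β) = 0, |β|_p = 1, |β^n − 1|_p < 1}, and λ_{p,n}(f) := #{j ∈ {1,…,d} : β_j ∈ B_{p,n}(f)}. For β ∈ ℚ̄_p with |β|_p = 1, let ξ(β) be its Teichmüller representative, let s_p(β) := min{s ∈ ℤ_{≥0} : p^s (p−1) ord_p(β − ξ(β)) > 1}, and r_{p,n}(β) := min(ord_p(n), s_p(β)). Then for every n ∈ ℕ, ord_p(Δ_n(f)) = μ_p(f)·n + λ_{p,n}(f)·ord_p(n) + ν_{p,n}(f), where ν_{p,n}(f) := Σ_{j : β_j ∈ B_{p,n}(f)} ( ord_p(β_j^{p^{r_{p,n}(β_j)}} − ξ(β_j)^{p^{r_{p,n}(β_j)}}) − r_{p,n}(β_j)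 ). -/
open Polynomial

open scoped Classical

set_option linter.unusedSectionVars false
set_option linter.unnecessarySimpa false
set_option maxHeartbeats 1000000

section PLHelpers

open IsUltrametricDist Finset

variable {p : ℕ} [hp : Fact p.Prime] {K : Type*} [NormedField K] [IsUltrametricDist K]


lemma norm_le_one_of_sub_lt {u : K} (h : ‖u - 1‖ < 1) : ‖u‖ ≤ 1 := by
  have h2 : u = (u - 1) + 1 := by ring
  rw [h2]
  exact (norm_add_le_max _ _).trans (by simp [max_le_iff, h.le])

lemma pow_sub_one_norm_le {u : K} (hu : ‖u‖ ≤ 1) (k : ℕ) : ‖u ^ k - 1‖ ≤ ‖u - 1‖ := by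
  induction k with
  | zero => simpa using norm_nonneg _
  | succ k ih =>
    have h : u ^ (k+1) - 1 = u ^ k * (u - 1) + (u ^ k - 1) := by ring
    rw [h]
    refine (norm_add_le_max _ _).trans (max_le ?_ ih)
    rw [norm_mul]
    calc ‖u ^ k‖ * ‖u - 1‖ ≤ 1 * ‖u - 1‖ := by
          gcongr
          rw [norm_pow]; exact pow_le_one₀ (norm_nonneg u) hu
      _ = ‖u - 1‖ := one_mul _

lemma norm_pow_sub_one_eq {u : K} (h1 : ‖u - 1‖ < 1) {m : ℕ} (hm : ‖(m : K)‖ = 1) :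
    ‖u ^ m - 1‖ = ‖u - 1‖ := by
  have hu := norm_le_one_of_sub_lt h1
  have key : u ^ m - 1 = (∑ i ∈ range m, u ^ i) * (u - 1) := (geom_sum_mul u m).symm
  have hsplit : (∑ i ∈ range m, u ^ i) = (∑ i ∈ range m, (u ^ i - 1)) + (m : K) := by
    rw [Finset.sum_sub_distrib, Finset.sum_const, card_range, nsmul_eq_mul, mul_one]
    ring
  have hlt : ‖∑ i ∈ range m, (u ^ i - 1)‖ < 1 :=
    lt_of_le_of_lt (norm_sum_le_of_forall_le_of_nonneg (norm_nonneg _)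
      (fun i _ => pow_sub_one_norm_le hu i)) h1
  have hg : ‖∑ i ∈ range m, u ^ i‖ = 1 := by
    rw [hsplit, norm_add_eq_max_of_norm_ne_norm (by rw [hm]; exact hlt.ne), hm]
    exact max_eq_right hlt.le
  rw [key, norm_mul, hg, one_mul]

lemma eq_one_of_finOrder_norm_sub_lt {ζ : K} (hfin : IsOfFinOrder ζ)
    (hord : ‖((orderOf ζ : ℕ) : K)‖ = 1) (h : ‖ζ - 1‖ < 1) : ζ = 1 := by
  have h2 := norm_pow_sub_one_eq h hord
  rw [pow_orderOf_eq_one, sub_self, norm_zero] at h2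
  have h3 : ζ - 1 = 0 := norm_eq_zero.1 h2.symm
  exact sub_eq_zero.1 h3


lemma pow_p_sub_one_expand (u : K) :
    u ^ p - 1 = (p : K) * (u - 1) +
      ∑ k ∈ range (p - 1), (u - 1) ^ (k + 2) * (p.choose (k + 2) : K) := by
  have h1 : u ^ p = ∑ k ∈ range (p + 1), (u - 1) ^ k * (p.choose k : K) := by
    conv_lhs => rw [show u = (u - 1) + 1 by ring]
    rw [add_pow]
    simp
  obtain ⟨q, hq⟩ : ∃ q, p = q + 2 := ⟨p - 2, by have := hp.out.two_le; omega⟩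
  rw [h1, hq]
  rw [Finset.sum_range_succ' _ (q + 2), Finset.sum_range_succ' _ (q + 1)]
  simp only [pow_zero, one_mul, Nat.choose_zero_right, Nat.cast_one, pow_one,
    Nat.choose_one_right, zero_add, show q + 2 - 1 = q + 1 from rfl,
    show ∀ x : ℕ, x + 1 + 1 = x + 2 from fun x => rfl]
  push_cast
  ring


lemma term_bound {u : K} (hu1 : ‖u - 1‖ ≤ 1) {k : ℕ} (hk : k ∈ range (p - 1)) :
    ‖(u - 1) ^ (k + 2) * (p.choose (k + 2) : K)‖ ≤
      max (‖(p : K)‖ * ‖u - 1‖ ^ 2) (‖u - 1‖ ^ p) := by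
  rw [norm_mul, norm_pow]
  have hk2 : k + 2 ≤ p := by have := mem_range.1 hk; omega
  rcases eq_or_lt_of_le hk2 with he | hlt
  · rw [he, Nat.choose_self]
    simpa using le_max_right _ _
  · obtain ⟨c, hc⟩ := hp.out.dvd_choose_self (by omega) hlt
    refine le_max_of_le_left ?_
    rw [hc]
    push_cast
    rw [norm_mul]
    have h1 : ‖u - 1‖ ^ (k + 2) ≤ ‖u - 1‖ ^ 2 :=
      pow_le_pow_of_le_one (norm_nonneg _) hu1 (by omega)
    have h2 : ‖(p : K)‖ * ‖(c : K)‖ ≤ ‖(p : K)‖ * 1 :=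
      mul_le_mul_of_nonneg_left (norm_natCast_le_one K c) (norm_nonneg _)
    calc ‖u - 1‖ ^ (k + 2) * (‖(p : K)‖ * ‖(c : K)‖)
        ≤ ‖u - 1‖ ^ 2 * (‖(p : K)‖ * 1) :=
          mul_le_mul h1 h2 (by positivity) (by positivity)
      _ = ‖(p : K)‖ * ‖u - 1‖ ^ 2 := by ring

lemma norm_pow_p_sub_one_le {u : K} (hu1 : ‖u - 1‖ ≤ 1) :
    ‖u ^ p - 1‖ ≤ max (‖(p : K)‖ * ‖u - 1‖) (‖u - 1‖ ^ p) := by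
  have hsq : ‖u - 1‖ ^ 2 ≤ ‖u - 1‖ := by
    calc ‖u - 1‖ ^ 2 ≤ ‖u - 1‖ ^ 1 := pow_le_pow_of_le_one (norm_nonneg _) hu1 one_le_two
      _ = ‖u - 1‖ := pow_one _
  rw [pow_p_sub_one_expand u]
  refine (norm_add_le_max _ _).trans (max_le ?_ ?_)
  · rw [norm_mul]; exact le_max_left _ _
  · refine le_trans (norm_sum_le_of_forall_le_of_nonneg
      (le_max_of_le_right (by positivity)) fun i hi => term_bound hu1 hi) ?_
    exact max_le_max (mul_le_mul_of_nonneg_left hsq (norm_nonneg _)) le_rfl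

lemma norm_pow_p_sub_one_eq {u : K} (h0 : 0 < ‖u - 1‖) (h1 : ‖u - 1‖ < 1)
    (hpK : 0 < ‖(p : K)‖)
    (hcond : ‖u - 1‖ ^ (p - 1) < ‖(p : K)‖) :
    ‖u ^ p - 1‖ = ‖(p : K)‖ * ‖u - 1‖ := by
  have hb : max (‖(p : K)‖ * ‖u - 1‖ ^ 2) (‖u - 1‖ ^ p) < ‖(p : K)‖ * ‖u - 1‖ := by
    refine max_lt ?_ ?_
    · have hw : ‖u - 1‖ ^ 2 < ‖u - 1‖ := by nlinarith
      exact mul_lt_mul_of_pos_left hw hpK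
    · have key : ‖u - 1‖ ^ p = ‖u - 1‖ ^ (p - 1) * ‖u - 1‖ := by
        rw [← pow_succ]
        congr 1
        have := hp.out.two_le; omega
      rw [key]
      exact mul_lt_mul_of_pos_right hcond h0
  have hC : ‖∑ k ∈ range (p - 1), (u - 1) ^ (k + 2) * (p.choose (k + 2) : K)‖
      < ‖(p : K)‖ * ‖u - 1‖ :=
    lt_of_le_of_lt (norm_sum_le_of_forall_le_of_nonneg
      (le_trans (by positivity) (le_max_left _ _)) fun i hi => term_bound h1.le hi) hb
  have hpw : ‖(p : K) * (u - 1)‖ = ‖(p : K)‖ * ‖u - 1‖ := norm_mul _ _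
  rw [pow_p_sub_one_expand u,
    norm_add_eq_max_of_norm_ne_norm (by rw [hpw]; exact hC.ne'), hpw, max_eq_left hC.le]

variable (hpK : ‖(p : K)‖ = (p : ℝ)⁻¹)

lemma pinv_facts : (0:ℝ) < (p:ℝ)⁻¹ ∧ (p:ℝ)⁻¹ < 1 := by
  have h1 : (1:ℝ) < p := by exact_mod_cast hp.out.one_lt
  constructor
  · positivity
  · rw [inv_lt_one_iff₀]; right; exact h1

include hpK in
lemma stage_s : ∀ (j : ℕ) (u : K), (∀ k, 0 < k → u ^ k ≠ 1) → ‖u - 1‖ < 1 →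
    (‖u - 1‖ ^ (p - 1)) ^ (p ^ j) < (p:ℝ)⁻¹ →
    0 < ‖u ^ (p ^ j) - 1‖ ∧ ‖u ^ (p ^ j) - 1‖ < 1 ∧
      ‖u ^ (p ^ j) - 1‖ ^ (p - 1) < (p:ℝ)⁻¹ := by
  intro j
  induction j with
  | zero =>
    intro u hu h1 hc
    have hne : u ≠ 1 := by
      intro h; exact hu 1 one_pos (by rw [h, pow_one])
    have h0 : 0 < ‖u - 1‖ := norm_pos_iff.2 (sub_ne_zero.2 hne)
    simp only [pow_zero, pow_one] at *
    exact ⟨h0, h1, by simpa using hc⟩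
  | succ j ih =>
    intro u hu h1 hc
    have hppos := hp.out.pos
    have hpinv := pinv_facts (p := p)
    have hne : u ≠ 1 := fun h => hu 1 one_pos (by rw [h, pow_one])
    have h0 : 0 < ‖u - 1‖ := norm_pos_iff.2 (sub_ne_zero.2 hne)
    set w := ‖u - 1‖ with hw
    have hup : ∀ k, 0 < k → (u ^ p) ^ k ≠ 1 := by
      intro k hk
      rw [← pow_mul]
      exact hu _ (Nat.mul_pos hppos hk)
    have h1' : ‖u ^ p - 1‖ < 1 :=
      (pow_sub_one_norm_le (norm_le_one_of_sub_lt h1) p).trans_lt h1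
    have hexp : 1 ≤ (p - 1) * p ^ j := by
      have h2 := hp.out.two_le
      have h3 : 0 < p ^ j := Nat.pow_pos hppos
      exact Nat.mul_pos (by omega) h3
    have hc' : (‖u ^ p - 1‖ ^ (p - 1)) ^ (p ^ j) < (p:ℝ)⁻¹ := by
      have hb := norm_pow_p_sub_one_le (p := p) (u := u) h1.le
      rw [hpK] at hb
      have hmax : 0 ≤ max ((p:ℝ)⁻¹ * w) (w ^ p) := le_trans (by positivity) (le_max_left _ _)
      calc (‖u ^ p - 1‖ ^ (p - 1)) ^ (p ^ j) = ‖u ^ p - 1‖ ^ ((p - 1) * p ^ j) := by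
            rw [pow_mul]
        _ ≤ (max ((p:ℝ)⁻¹ * w) (w ^ p)) ^ ((p - 1) * p ^ j) := by
            gcongr
        _ < (p:ℝ)⁻¹ := by
            rcases max_cases ((p:ℝ)⁻¹ * w) (w ^ p) with ⟨hm, _⟩ | ⟨hm, _⟩ <;> rw [hm]
            · -- ((p⁻¹) * w) ^ e < p⁻¹
              rw [mul_pow]
              have e1 : ((p:ℝ)⁻¹) ^ ((p - 1) * p ^ j) ≤ (p:ℝ)⁻¹ := by
                calc ((p:ℝ)⁻¹) ^ ((p - 1) * p ^ j) ≤ ((p:ℝ)⁻¹) ^ 1 :=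
                      pow_le_pow_of_le_one hpinv.1.le hpinv.2.le hexp
                  _ = (p:ℝ)⁻¹ := pow_one _
              have e2 : w ^ ((p - 1) * p ^ j) < 1 :=
                pow_lt_one₀ (norm_nonneg _) h1 (by omega)
              calc ((p:ℝ)⁻¹) ^ ((p - 1) * p ^ j) * w ^ ((p - 1) * p ^ j)
                  ≤ (p:ℝ)⁻¹ * w ^ ((p - 1) * p ^ j) := by
                    apply mul_le_mul_of_nonneg_right e1 (by positivity)
                _ < (p:ℝ)⁻¹ * 1 := by
                    apply mul_lt_mul_of_pos_left e2 hpinv.1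
                _ = (p:ℝ)⁻¹ := mul_one _
            · -- (w ^ p) ^ e = (w^(p-1))^(p^(j+1))
              have : (w ^ p) ^ ((p - 1) * p ^ j) = (w ^ (p - 1)) ^ p ^ (j + 1) := by
                rw [← pow_mul, ← pow_mul, pow_succ]
                congr 1
                ring
              rw [this]
              exact hc
    have := ih (u ^ p) hup h1' hc'
    have hrw : (u ^ p) ^ (p ^ j) = u ^ (p ^ (j + 1)) := by
      rw [← pow_mul, pow_succ]
      congr 1
      ring
    rwa [hrw] at this

include hpK in
lemma beyond_s : ∀ (k : ℕ) (u : K), (∀ j, 0 < j → u ^ j ≠ 1) →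
    ‖u - 1‖ ^ (p - 1) < (p:ℝ)⁻¹ →
    ‖u ^ (p ^ k) - 1‖ = ((p:ℝ)⁻¹) ^ k * ‖u - 1‖ := by
  intro k
  induction k with
  | zero => intro u _ _; simp
  | succ k ih =>
    intro u hu hc
    have hpinv := pinv_facts (p := p)
    have hne : u ≠ 1 := fun h => hu 1 one_pos (by rw [h, pow_one])
    have h0 : 0 < ‖u - 1‖ := norm_pos_iff.2 (sub_ne_zero.2 hne)
    have hp1 : 1 ≤ p - 1 := by have := hp.out.two_le; omega
    have h1 : ‖u - 1‖ < 1 := by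
      by_contra hcon
      push_neg at hcon
      have : (1:ℝ) ≤ ‖u - 1‖ ^ (p - 1) := one_le_pow₀ hcon
      linarith [hpinv.2]
    have heq : ‖u ^ p - 1‖ = (p:ℝ)⁻¹ * ‖u - 1‖ := by
      rw [← hpK]
      exact norm_pow_p_sub_one_eq h0 h1 (by rw [hpK]; exact hpinv.1) (by rw [hpK]; exact hc)
    have hup : ∀ j, 0 < j → (u ^ p) ^ j ≠ 1 := by
      intro j hj
      rw [← pow_mul]
      exact hu _ (Nat.mul_pos hp.out.pos hj)
    have hc' : ‖u ^ p - 1‖ ^ (p - 1) < (p:ℝ)⁻¹ := by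
      rw [heq, mul_pow]
      have e1 : ((p:ℝ)⁻¹) ^ (p - 1) ≤ (p:ℝ)⁻¹ := by
        calc ((p:ℝ)⁻¹) ^ (p - 1) ≤ ((p:ℝ)⁻¹) ^ 1 :=
              pow_le_pow_of_le_one hpinv.1.le hpinv.2.le hp1
          _ = (p:ℝ)⁻¹ := pow_one _
      have e2 : ‖u - 1‖ ^ (p - 1) < 1 := pow_lt_one₀ (norm_nonneg _) h1 (by omega)
      calc ((p:ℝ)⁻¹) ^ (p - 1) * ‖u - 1‖ ^ (p - 1) ≤ (p:ℝ)⁻¹ * ‖u - 1‖ ^ (p - 1) :=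
            mul_le_mul_of_nonneg_right e1 (by positivity)
        _ < (p:ℝ)⁻¹ * 1 := mul_lt_mul_of_pos_left e2 hpinv.1
        _ = (p:ℝ)⁻¹ := mul_one _
    have := ih (u ^ p) hup hc'
    have hrw : (u ^ p) ^ (p ^ k) = u ^ (p ^ (k + 1)) := by
      rw [← pow_mul, pow_succ]
      congr 1
      ring
    rw [hrw] at this
    rw [this, heq]
    ring

include hpK in
lemma local_norm (u : K) (hu : ∀ k, 0 < k → u ^ k ≠ 1) (h1 : ‖u - 1‖ < 1)
    {m : ℕ} (hm : ‖(m : K)‖ = 1) (v sv : ℕ)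
    (hs' : (‖u - 1‖ ^ (p - 1)) ^ (p ^ sv) < (p:ℝ)⁻¹) :
    ‖u ^ (p ^ v * m) - 1‖ =
      ((p:ℝ)⁻¹) ^ (v - min v sv) * ‖u ^ (p ^ min v sv) - 1‖ := by
  have hu1 := norm_le_one_of_sub_lt h1
  have h2 : ‖u ^ (p ^ v * m) - 1‖ = ‖u ^ (p ^ v) - 1‖ := by
    rw [pow_mul]
    exact norm_pow_sub_one_eq ((pow_sub_one_norm_le hu1 _).trans_lt h1) hm
  rcases le_or_gt v sv with hvs | hsv
  · rw [min_eq_left hvs, h2, Nat.sub_self, pow_zero, one_mul]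
  · rw [min_eq_right hsv.le]
    obtain ⟨hpos, hlt, hcond⟩ := stage_s hpK sv u hu h1 hs'
    have hb := beyond_s hpK (v - sv) (u ^ (p ^ sv))
      (fun j hj => by rw [← pow_mul]; exact hu _ (Nat.mul_pos (Nat.pow_pos hp.out.pos) hj))
      hcond
    rw [h2, ← hb, ← pow_mul, ← pow_add, show sv + (v - sv) = v by omega]


lemma logp_pos : (0:ℝ) < Real.log p := Real.log_pos (by exact_mod_cast hp.out.one_lt)

lemma ordp_mul {x y : K} (hx : x ≠ 0) (hy : y ≠ 0) :
    ordp p (x * y) = ordp p x + ordp p y := by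
  unfold ordp
  rw [norm_mul, Real.log_mul (norm_ne_zero_iff.2 hx) (norm_ne_zero_iff.2 hy)]
  ring

lemma ordp_pow (x : K) (n : ℕ) : ordp p (x ^ n) = n * ordp p x := by
  unfold ordp
  rw [norm_pow, Real.log_pow]
  ring

lemma ordp_of_norm_one {x : K} (h : ‖x‖ = 1) : ordp p x = 0 := by
  unfold ordp; rw [h, Real.log_one]; simp

lemma ordp_shift {x y : K} (a : ℕ) (hy : y ≠ 0)
    (h : ‖x‖ = ((p:ℝ)⁻¹) ^ a * ‖y‖) :
    ordp p x = a + ordp p y := by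
  have hp0 : (0:ℝ) < p := by exact_mod_cast hp.out.pos
  have hL : Real.log p ≠ 0 := (logp_pos (p := p)).ne'
  unfold ordp
  rw [h, Real.log_mul (by positivity) (norm_ne_zero_iff.2 hy), Real.log_pow, Real.log_inv]
  field_simp
  ring

lemma hs_convert {w : ℝ} (h0 : 0 < w) (h1 : w < 1) {sv : ℕ}
    (h : (p:ℝ) ^ sv * ((p:ℝ) - 1) * (-(Real.log w / Real.log p)) > 1) :
    (w ^ (p - 1)) ^ (p ^ sv) < (p:ℝ)⁻¹ := by
  have hp0 : (0:ℝ) < p := by exact_mod_cast hp.out.pos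
  have hL : (0:ℝ) < Real.log p := logp_pos (p := p)
  rw [← pow_mul]
  have key : Real.log (w ^ ((p - 1) * p ^ sv)) < Real.log ((p:ℝ)⁻¹) := by
    rw [Real.log_pow, Real.log_inv]
    have hcast : (((p - 1) * p ^ sv : ℕ) : ℝ) = ((p:ℝ) - 1) * (p:ℝ) ^ sv := by
      push_cast [Nat.cast_sub hp.out.one_le]
      ring
    rw [hcast]
    have h4 : (p:ℝ) ^ sv * ((p:ℝ) - 1) * (-(Real.log w / Real.log p)) * Real.log p =
        (p:ℝ) ^ sv * ((p:ℝ) - 1) * (-Real.log w) := by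
      field_simp
    have h5 := mul_lt_mul_of_pos_right h hL
    rw [one_mul, h4] at h5
    nlinarith [h5]
  exact (Real.log_lt_log_iff (by positivity) (by positivity)).1 key

lemma ordp_multiset_prod (R : Multiset K) (g : K → K) (h : ∀ x ∈ R, g x ≠ 0) :
    ordp p (R.map g).prod = (R.map (fun x => ordp p (g x))).sum := by
  induction R using Multiset.induction_on with
  | empty => simp [ordp]
  | cons a t ih =>
    have hprod : (t.map g).prod ≠ 0 := by
      apply Multiset.prod_ne_zero
      intro h0
      obtain ⟨x, hx, hgx⟩ := Multiset.mem_map.1 h0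
      exact h x (Multiset.mem_cons_of_mem hx) hgx
    simp only [Multiset.map_cons, Multiset.prod_cons, Multiset.sum_cons]
    rw [ordp_mul (h a (Multiset.mem_cons_self a t)) hprod,
      ih (fun x hx => h x (Multiset.mem_cons_of_mem hx))]

lemma log_multiset_prod (R : Multiset K) (g : K → ℝ) (h : ∀ x ∈ R, 0 < g x) :
    0 < (R.map g).prod ∧
      Real.log (R.map g).prod = (R.map (fun x => Real.log (g x))).sum := by
  induction R using Multiset.induction_on with
  | empty => simp
  | cons a t ih =>
    obtain ⟨hpos, hlog⟩ := ih (fun x hx => h x (Multiset.mem_cons_of_mem hx))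
    have ha := h a (Multiset.mem_cons_self a t)
    simp only [Multiset.map_cons, Multiset.prod_cons, Multiset.sum_cons]
    exact ⟨mul_pos ha hpos, by rw [Real.log_mul ha.ne' hpos.ne', hlog]⟩

lemma filter_map_sum (R : Multiset K) (pr : K → Prop) [DecidablePred pr] (g : K → ℝ) :
    ((R.filter pr).map g).sum = (R.map (fun x => if pr x then g x else 0)).sum := by
  induction R using Multiset.induction_on with
  | empty => simp
  | cons a t ih =>
    by_cases h : pr a <;>
      simp [Multiset.filter_cons, h, ih]

lemma card_filter_mul (R : Multiset K) (pr : K → Prop) [DecidablePred pr] (c : ℝ) :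
    (Multiset.card (R.filter pr) : ℝ) * c =
      (R.map (fun x => if pr x then c else 0)).sum := by
  induction R using Multiset.induction_on with
  | empty => simp
  | cons a t ih =>
    by_cases h : pr a <;>
      simp [Multiset.filter_cons, h, ← ih] <;> push_cast <;> ring


end PLHelpers

open IsUltrametricDist in
/-- exact formula
`ord_p(Δ_n(f)) = μ_p(f)·n + λ_{p,n}(f)·ord_p(n) + ν_{p,n}(f)`
for a nonzero `f ∈ ℤ[t]` not vanishing at any root of unity.  Here `ξ β` denotes the
Teichmüller representative of a root `β` of `f` on the `p`-adic unit circle, and `s β` the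
minimal nonnegative integer with `p^(s β) (p-1) ord_p(β - ξ β) > 1`. -/
theorem ordp_pierceLehmer_exact
    (p : ℕ) [Fact p.Prime]
    (K : Type*) [NormedField K] [Algebra ℚ_[p] K] [IsAlgClosure ℚ_[p] K]
    (hext : ∀ x : ℚ_[p], ‖algebraMap ℚ_[p] K x‖ = ‖x‖)
    (f : Polynomial ℤ) (hf : f ≠ 0)
    (hru : ∀ ζ : K, IsOfFinOrder ζ → (f.map (Int.castRingHom K)).eval ζ ≠ 0)
    (ξ : K → K)
    (hξ : ∀ β ∈ (f.map (Int.castRingHom K)).roots, ‖β‖ = 1 →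
      IsOfFinOrder (ξ β) ∧ (orderOf (ξ β)).Coprime p ∧ ‖β - ξ β‖ < 1)
    (s : K → ℕ)
    (hs : ∀ β ∈ (f.map (Int.castRingHom K)).roots, ‖β‖ = 1 →
      ((p : ℝ) ^ s β * ((p : ℝ) - 1) * ordp p (β - ξ β) > 1 ∧
        ∀ t : ℕ, t < s β → ¬ ((p : ℝ) ^ t * ((p : ℝ) - 1) * ordp p (β - ξ β) > 1)))
    (n : ℕ) (hn : 0 < n) :
    ordp p (pierceLehmer K f n) =
      (-(Real.log (mahlerMeasure K f)) / Real.log p) * (n : ℝ) +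
      (Multiset.card (((f.map (Int.castRingHom K)).roots).filter
          (fun β => ‖β‖ = 1 ∧ ‖β ^ n - 1‖ < 1)) : ℝ) * (padicValNat p n : ℝ) +
      ((((f.map (Int.castRingHom K)).roots).filter
          (fun β => ‖β‖ = 1 ∧ ‖β ^ n - 1‖ < 1)).map
        (fun β =>
          ordp p (β ^ p ^ min (padicValNat p n) (s β) - ξ β ^ p ^ min (padicValNat p n) (s β)) -
            (min (padicValNat p n) (s β) : ℝ))).sum := by
  have hpp : p.Prime := Fact.out
  have hchar : CharZero K := charZero_of_injective_algebraMap (algebraMap ℚ_[p] K).injective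
  have hnat : ∀ k : ℕ, ‖(k : K)‖ = ‖(k : ℚ_[p])‖ := fun k => by
    rw [← map_natCast (algebraMap ℚ_[p] K), hext]
  haveI : IsUltrametricDist K :=
    isUltrametricDist_of_forall_norm_natCast_le_one (fun k => by
      rw [hnat k]
      exact_mod_cast Padic.norm_int_le_one (k : ℤ))
  have hpK : ‖(p : K)‖ = (p : ℝ)⁻¹ := by rw [hnat]; exact Padic.norm_p
  have hcop : ∀ m : ℕ, m.Coprime p → ‖(m : K)‖ = 1 := by
    intro m hc
    rw [hnat]
    have h1 : ‖((m : ℤ) : ℚ_[p])‖ ≤ 1 := Padic.norm_int_le_one _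
    have h2 : ¬ ‖((m : ℤ) : ℚ_[p])‖ < 1 := by
      rw [Padic.norm_intCast_lt_one_iff]
      intro hdvd
      have hdm : p ∣ m := by exact_mod_cast hdvd
      exact (hpp.coprime_iff_not_dvd.1 hc.symm) hdm
    have h3 : ((m : ℤ) : ℚ_[p]) = ((m : ℕ) : ℚ_[p]) := by push_cast; rfl
    rw [h3] at h1 h2
    exact le_antisymm h1 (not_lt.1 h2)
  unfold pierceLehmer _root_.mahlerMeasure
  set F := f.map (Int.castRingHom K) with hF
  set R := F.roots with hRdef
  have hF0 : F ≠ 0 := by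
    rw [hF, Ne, Polynomial.map_eq_zero_iff (RingHom.injective_int _)]
    exact hf
  have hroot : ∀ β ∈ R, Polynomial.eval β F = 0 := fun β hβ => (Polynomial.mem_roots'.1 hβ).2
  have hnofin : ∀ β ∈ R, ¬ IsOfFinOrder β := fun β hβ hfin => hru β hfin (hroot β hβ)
  have hpow_ne : ∀ β ∈ R, ∀ k, 0 < k → β ^ k ≠ 1 := by
    intro β hβ k hk hk1
    exact hnofin β hβ (isOfFinOrder_iff_pow_eq_one.2 ⟨k, hk, hk1⟩)
  have hβn0 : ∀ β ∈ R, β ^ n - 1 ≠ 0 := fun β hβ h =>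
    hpow_ne β hβ n hn (by rwa [sub_eq_zero] at h)
  set v := padicValNat p n with hv
  obtain ⟨m, hnvm, hmcop⟩ : ∃ m, n = p ^ v * m ∧ m.Coprime p := by
    refine ⟨n / p ^ v, ?_, ?_⟩
    · have hfac : n.factorization p = v := by rw [Nat.factorization_def n hpp]
      conv_lhs => rw [← Nat.ordProj_mul_ordCompl_eq_self n p]
      rw [hfac]
    · have h4 := Nat.coprime_ordCompl hpp hn.ne'
      have hfac : n.factorization p = v := by rw [Nat.factorization_def n hpp]
      rw [hfac] at h4
      exact h4.symm
  have hmK : ‖(m : K)‖ = 1 := hcop m hmcop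
  have hlc : F.leadingCoeff ≠ 0 := Polynomial.leadingCoeff_ne_zero.2 hF0
  -- key per-root identity
  have key : ∀ β ∈ R, ordp p (β ^ n - 1) =
      (-(Real.log (max 1 ‖β‖)) / Real.log p) * (n : ℝ) +
      (if ‖β‖ = 1 ∧ ‖β ^ n - 1‖ < 1 then
        (v : ℝ) + (ordp p (β ^ p ^ min v (s β) - ξ β ^ p ^ min v (s β)) - (min v (s β) : ℝ))
      else 0) := by
    intro β hβ
    rcases lt_trichotomy ‖β‖ 1 with hlt | heq | hgt
    · -- ‖β‖ < 1
      have hb1 : ‖β ^ n‖ < 1 := by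
        rw [norm_pow]; exact pow_lt_one₀ (norm_nonneg β) hlt hn.ne'
      have h1 : ‖β ^ n - 1‖ = 1 := by
        have heq2 : β ^ n - 1 = β ^ n + (-1) := by ring
        rw [heq2, norm_add_eq_max_of_norm_ne_norm
          (by rw [norm_neg, norm_one]; exact hb1.ne), norm_neg, norm_one]
        exact max_eq_right hb1.le
      rw [if_neg (fun hcon => hlt.ne hcon.1), ordp_of_norm_one h1, max_eq_left hlt.le,
        Real.log_one]
      norm_num
    · -- ‖β‖ = 1
      by_cases hflt : ‖β ^ n - 1‖ < 1
      · obtain ⟨hfin, hcopr, hclose⟩ := hξ β hβ heq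
        obtain ⟨hs1, -⟩ := hs β hβ heq
        have hordpos : 0 < orderOf (ξ β) := hfin.orderOf_pos
        have hξnorm : ‖ξ β‖ = 1 := by
          have h1 : ‖ξ β‖ ^ orderOf (ξ β) = 1 := by
            rw [← norm_pow, pow_orderOf_eq_one, norm_one]
          rcases lt_trichotomy ‖ξ β‖ 1 with h | h | h
          · exact absurd h1 (by
              have := pow_lt_one₀ (norm_nonneg _) h hordpos.ne'
              exact this.ne)
          · exact h
          · exact absurd h1 (by
              have := one_lt_pow₀ h hordpos.ne'
              exact this.ne')
        have hξ0 : ξ β ≠ 0 := by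
          intro h; rw [h] at hξnorm; simp at hξnorm
        set c := ξ β with hc
        set u := β * c⁻¹ with hudef
        have hβeq : β = u * c := by
          rw [hudef]
          field_simp
        have hunorm : ‖u‖ = 1 := by
          rw [hudef, norm_mul, norm_inv, hξnorm, heq]; norm_num
        have husub : ‖u - 1‖ = ‖β - c‖ := by
          have h2 : u - 1 = (β - c) * c⁻¹ := by
            rw [hudef]
            field_simp
          rw [h2, norm_mul, norm_inv, hξnorm]; norm_num
        have hβc : β ≠ c := fun h => hnofin β hβ (h ▸ hfin)
        have h0 : 0 < ‖u - 1‖ := by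
          rw [husub]; exact norm_pos_iff.2 (sub_ne_zero.2 hβc)
        have h1 : ‖u - 1‖ < 1 := by rw [husub]; exact hclose
        have huk : ∀ k, 0 < k → u ^ k ≠ 1 := by
          intro k hk hk1
          have hbk : β ^ k = c ^ k := by
            calc β ^ k = (u * c) ^ k := by rw [← hβeq]
              _ = u ^ k * c ^ k := mul_pow u c k
              _ = c ^ k := by rw [hk1, one_mul]
          have hβfin : β ^ (k * orderOf c) = 1 := by
            rw [pow_mul, hbk, ← pow_mul, mul_comm, pow_mul, pow_orderOf_eq_one, one_pow]
          exact hpow_ne β hβ _ (Nat.mul_pos hk hordpos) hβfin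
        have hun_le : ‖u ^ n - 1‖ ≤ ‖u - 1‖ := pow_sub_one_norm_le (le_of_eq hunorm) n
        have hcn1 : c ^ n = 1 := by
          have hfin' : IsOfFinOrder (c ^ n) := hfin.pow
          have hdvd : orderOf (c ^ n) ∣ orderOf c := orderOf_pow_dvd n
          have hcop' : (orderOf (c ^ n)).Coprime p := Nat.Coprime.coprime_dvd_left hdvd hcopr
          apply eq_one_of_finOrder_norm_sub_lt hfin' (hcop _ hcop')
          have hdiff : c ^ n - 1 = (c ^ n - β ^ n) + (β ^ n - 1) := by ring
          have h2 : ‖c ^ n - β ^ n‖ < 1 := by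
            have h3 : c ^ n - β ^ n = -(c ^ n * (u ^ n - 1)) := by
              rw [hβeq, mul_pow]; ring
            rw [h3, norm_neg, norm_mul, norm_pow, hξnorm, one_pow, one_mul]
            exact hun_le.trans_lt h1
          rw [hdiff]
          exact (norm_add_le_max _ _).trans_lt (max_lt h2 hflt)
        have hβn : β ^ n = u ^ n := by rw [hβeq, mul_pow, hcn1, mul_one]
        have hs' : (‖u - 1‖ ^ (p - 1)) ^ (p ^ (s β)) < (p:ℝ)⁻¹ := by
          rw [husub]
          exact hs_convert (norm_pos_iff.2 (sub_ne_zero.2 hβc)) hclose hs1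
        set r := min v (s β) with hrdef
        have hloc := local_norm hpK u huk h1 hmK v (s β) hs'
        rw [← hrdef] at hloc
        have h3 : β ^ p ^ r - c ^ p ^ r = c ^ p ^ r * (u ^ p ^ r - 1) := by
          rw [hβeq]; ring
        have hnorm_eq : ‖β ^ n - 1‖ = ((p:ℝ)⁻¹) ^ (v - r) * ‖β ^ p ^ r - c ^ p ^ r‖ := by
          rw [h3, norm_mul, norm_pow, hξnorm, one_pow, one_mul, hβn]
          conv_lhs => rw [hnvm]
          exact hloc
        have hne2 : β ^ p ^ r - c ^ p ^ r ≠ 0 := by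
          rw [h3]
          exact mul_ne_zero (pow_ne_zero _ hξ0)
            (sub_ne_zero.2 (huk _ (Nat.pow_pos hpp.pos)))
        have hordp := ordp_shift (v - r) hne2 hnorm_eq
        rw [if_pos ⟨heq, hflt⟩, hordp, heq]
        rw [Nat.cast_sub (min_le_left v (s β))]
        rw [max_self, Real.log_one]
        push_cast
        ring
      · have hb1 : ‖β ^ n‖ = 1 := by rw [norm_pow, heq, one_pow]
        have hle : ‖β ^ n - 1‖ ≤ 1 := by
          have h2 : β ^ n - 1 = β ^ n + (-1) := by ring
          rw [h2]
          exact (norm_add_le_max _ _).trans (by simp [hb1])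
        have h1 : ‖β ^ n - 1‖ = 1 := le_antisymm hle (not_lt.1 hflt)
        rw [if_neg (fun hcon => hflt hcon.2), ordp_of_norm_one h1, heq, max_self,
          Real.log_one]
        norm_num
    · -- ‖β‖ > 1
      have h3 : (1:ℝ) < ‖β ^ n‖ := by
        rw [norm_pow]; exact one_lt_pow₀ hgt hn.ne'
      have h1 : ‖β ^ n - 1‖ = ‖β‖ ^ n := by
        have h2 : β ^ n - 1 = β ^ n + (-1) := by ring
        rw [h2, norm_add_eq_max_of_norm_ne_norm
          (by rw [norm_neg, norm_one]; exact h3.ne'), norm_neg, norm_one,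
          max_eq_left h3.le, norm_pow]
      rw [if_neg (fun hcon => hgt.ne' hcon.1), max_eq_right hgt.le]
      unfold ordp
      rw [h1, Real.log_pow]
      push_cast
      ring
  -- global assembly
  have hprodne : (R.map (fun α => α ^ n - 1)).prod ≠ 0 := by
    apply Multiset.prod_ne_zero
    intro h0
    obtain ⟨x, hx, hgx⟩ := Multiset.mem_map.1 h0
    exact hβn0 x hx hgx
  have hmax_pos : ∀ β ∈ R, (0:ℝ) < max 1 ‖β‖ := fun β _ => lt_of_lt_of_le one_pos (le_max_left _ _)
  obtain ⟨hMpos, hMlog⟩ := log_multiset_prod R (fun β => max 1 ‖β‖) hmax_pos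
  rw [ordp_mul (pow_ne_zero n hlc) hprodne, ordp_pow,
    ordp_multiset_prod R _ hβn0,
    Multiset.map_congr rfl key,
    Real.log_mul (norm_ne_zero_iff.2 hlc) hMpos.ne', hMlog,
    filter_map_sum R _ (fun β =>
      ordp p (β ^ p ^ min v (s β) - ξ β ^ p ^ min v (s β)) - (min v (s β) : ℝ)),
    card_filter_mul R _ ((v : ℝ))]
  have hsplit : (R.map (fun β =>
      (-(Real.log (max 1 ‖β‖)) / Real.log p) * (n : ℝ) +
      (if ‖β‖ = 1 ∧ ‖β ^ n - 1‖ < 1 then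
        (v : ℝ) + (ordp p (β ^ p ^ min v (s β) - ξ β ^ p ^ min v (s β)) - (min v (s β) : ℝ))
      else 0))).sum
      = (R.map (fun β => Real.log (max 1 ‖β‖))).sum * (-(n : ℝ) / Real.log p)
      + ((R.map (fun β => if ‖β‖ = 1 ∧ ‖β ^ n - 1‖ < 1 then (v : ℝ) else 0)).sum
      + (R.map (fun β => if ‖β‖ = 1 ∧ ‖β ^ n - 1‖ < 1 then
          ordp p (β ^ p ^ min v (s β) - ξ β ^ p ^ min v (s β)) - (min v (s β) : ℝ)
        else 0)).sum) := by
    rw [← Multiset.sum_map_add, ← Multiset.sum_map_mul_right, ← Multiset.sum_map_add]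
    apply congrArg Multiset.sum
    apply Multiset.map_congr rfl
    intro β hβ
    by_cases h : ‖β‖ = 1 ∧ ‖β ^ n - 1‖ < 1
    · rw [if_pos h, if_pos h, if_pos h]; ring
    · rw [if_neg h, if_neg h, if_neg h]; ring
  rw [hsplit]
  unfold ordp
  ring
end

section
/- Let f ∈ ℤ[t] be a nonzero polynomial which does not vanish at any root of unity, and let p be a prime. Then |Δ_n(f)|_p^{1/n} → M_p(f) as n → ∞. -/
open Polynomial Filter

namespace PierceLehmerAux

open IsUltrametricDist

variable {p : ℕ} [hp : Fact p.Prime] {K : Type*} [NormedField K] [Algebra ℚ_[p] K]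

lemma norm_natCast_le_one' (hext : ∀ x : ℚ_[p], ‖algebraMap ℚ_[p] K x‖ = ‖x‖) (n : ℕ) :
    ‖(n : K)‖ ≤ 1 := by
  rw [← map_natCast (algebraMap ℚ_[p] K) n, hext]
  simpa using Padic.norm_int_le_one (p := p) (n : ℤ)

lemma ultra (hext : ∀ x : ℚ_[p], ‖algebraMap ℚ_[p] K x‖ = ‖x‖) : IsUltrametricDist K :=
  isUltrametricDist_of_forall_norm_natCast_le_one fun n => norm_natCast_le_one' hext n

lemma norm_p' (hext : ∀ x : ℚ_[p], ‖algebraMap ℚ_[p] K x‖ = ‖x‖) :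
    ‖(p : K)‖ = (p : ℝ)⁻¹ := by
  rw [← map_natCast (algebraMap ℚ_[p] K) p, hext]
  exact Padic.norm_p

lemma norm_p_pos (hext : ∀ x : ℚ_[p], ‖algebraMap ℚ_[p] K x‖ = ‖x‖) :
    0 < ‖(p : K)‖ := by
  rw [norm_p' hext]
  have : (0 : ℝ) < p := by exact_mod_cast hp.out.pos
  positivity

lemma norm_p_lt_one (hext : ∀ x : ℚ_[p], ‖algebraMap ℚ_[p] K x‖ = ‖x‖) :
    ‖(p : K)‖ < 1 := by
  rw [norm_p' hext, inv_lt_one_iff₀]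
  right
  exact_mod_cast hp.out.one_lt

lemma norm_coprime (hext : ∀ x : ℚ_[p], ‖algebraMap ℚ_[p] K x‖ = ‖x‖) {u : ℕ}
    (h : ¬ (p ∣ u)) : ‖(u : K)‖ = 1 := by
  rw [← map_natCast (algebraMap ℚ_[p] K) u, hext]
  have h1 : ‖((u : ℤ) : ℚ_[p])‖ ≤ 1 := Padic.norm_int_le_one _
  have h2 : ¬ ‖((u : ℤ) : ℚ_[p])‖ < 1 := by
    rw [Padic.norm_intCast_lt_one_iff]
    exact_mod_cast h
  have h3 : ‖((u : ℤ) : ℚ_[p])‖ = 1 := le_antisymm h1 (not_lt.mp h2)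
  simpa using h3

/-- In an ultrametric field, if `‖y - z‖ < ‖z‖` then `‖y‖ = ‖z‖`. -/
lemma norm_eq_of_sub_lt [IsUltrametricDist K] {y z : K} (h : ‖y - z‖ < ‖z‖) : ‖y‖ = ‖z‖ := by
  have e1 : z + (y - z) = y := by ring
  have hy : ‖y‖ ≤ max ‖z‖ ‖y - z‖ := by
    conv_lhs => rw [← e1]
    exact norm_add_le_max _ _
  have h1 : ‖y‖ ≤ ‖z‖ := hy.trans (max_le le_rfl h.le)
  have e2 : y + -(y - z) = z := by ring
  have hz : ‖z‖ ≤ max ‖y‖ ‖y - z‖ := by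
    conv_lhs => rw [← e2]
    have ht := norm_add_le_max y (-(y - z))
    rwa [norm_neg] at ht
  have h2 : ‖z‖ ≤ ‖y‖ := by
    rcases le_max_iff.mp hz with h' | h'
    · exact h'
    · exact absurd (lt_of_le_of_lt h' h) (lt_irrefl _)
  exact le_antisymm h1 h2

lemma one_add_pow_sub_one (x : K) (N : ℕ) :
    (1 + x) ^ N - 1 = ∑ i ∈ Finset.range N, x ^ (i + 1) * (N.choose (i + 1) : K) := by
  rw [add_comm (1 : K) x, add_pow]
  simp only [one_pow, mul_one]
  rw [Finset.sum_range_succ']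
  simp

lemma one_add_pow_sub_one' (x : K) (M : ℕ) :
    (1 + x) ^ (M + 1) - 1 =
      (∑ i ∈ Finset.range M, x ^ (i + 2) * ((M + 1).choose (i + 2) : K))
        + x * ((M + 1 : ℕ) : K) := by
  rw [one_add_pow_sub_one, Finset.sum_range_succ']
  simp [Nat.choose_one_right]

lemma norm_choose_le_norm_p (hext : ∀ x : ℚ_[p], ‖algebraMap ℚ_[p] K x‖ = ‖x‖)
    {i : ℕ} (h0 : i ≠ 0) (hi : i < p) : ‖(p.choose i : K)‖ ≤ ‖(p : K)‖ := by
  obtain ⟨t, ht⟩ := hp.out.dvd_choose_self h0 hi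
  rw [ht]
  push_cast
  rw [norm_mul]
  calc ‖(p : K)‖ * ‖(t : K)‖ ≤ ‖(p : K)‖ * 1 :=
        mul_le_mul_of_nonneg_left (norm_natCast_le_one' hext t) (norm_nonneg _)
    _ = ‖(p : K)‖ := mul_one _

/-- decay step: `‖(1+x)^p - 1‖ ≤ max (‖p‖ * ‖x‖) (‖x‖^p)`. -/
lemma step_le (hext : ∀ x : ℚ_[p], ‖algebraMap ℚ_[p] K x‖ = ‖x‖) {x : K} (hx : ‖x‖ ≤ 1) :
    ‖(1 + x) ^ p - 1‖ ≤ max (‖(p : K)‖ * ‖x‖) (‖x‖ ^ p) := by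
  haveI := ultra hext
  have hx0 : (0 : ℝ) ≤ ‖x‖ := norm_nonneg x
  rw [one_add_pow_sub_one]
  apply norm_sum_le_of_forall_le_of_nonneg
  · exact le_max_of_le_right (pow_nonneg hx0 p)
  · intro i hi
    rw [Finset.mem_range] at hi
    rcases eq_or_lt_of_le (show i + 1 ≤ p by omega) with he | hlt
    · apply le_max_of_le_right
      rw [norm_mul, norm_pow, he, Nat.choose_self]
      simp
    · apply le_max_of_le_left
      rw [norm_mul, norm_pow]
      have h1 : ‖x‖ ^ (i + 1) ≤ ‖x‖ := pow_le_of_le_one hx0 hx (Nat.succ_ne_zero i)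
      have h2 : ‖(p.choose (i + 1) : K)‖ ≤ ‖(p : K)‖ :=
        norm_choose_le_norm_p hext (Nat.succ_ne_zero i) hlt
      calc ‖x‖ ^ (i + 1) * ‖(p.choose (i + 1) : K)‖ ≤ ‖x‖ * ‖(p : K)‖ :=
            mul_le_mul h1 h2 (norm_nonneg _) hx0
        _ = ‖(p : K)‖ * ‖x‖ := mul_comm _ _

/-- exact step at `p`: if `‖x‖^(p-1) < ‖p‖` then `‖(1+x)^p - 1‖ = ‖p‖ * ‖x‖`. -/
lemma step_eq (hext : ∀ x : ℚ_[p], ‖algebraMap ℚ_[p] K x‖ = ‖x‖) {x : K}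
    (hx0 : 0 < ‖x‖) (hxp : ‖x‖ ^ (p - 1) < ‖(p : K)‖) :
    ‖(1 + x) ^ p - 1‖ = ‖(p : K)‖ * ‖x‖ := by
  haveI := ultra hext
  have hp2 : 2 ≤ p := hp.out.two_le
  have hx1 : ‖x‖ < 1 := by
    by_contra hc
    push_neg at hc
    have h1 : (1 : ℝ) ≤ ‖x‖ ^ (p - 1) := one_le_pow₀ hc
    exact absurd (lt_of_le_of_lt h1 hxp) (not_lt.mpr (norm_natCast_le_one' hext p))
  obtain ⟨M, hM⟩ : ∃ M, p = M + 1 := ⟨p - 1, by omega⟩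
  have hkey : (1 + x) ^ p - 1 - x * ((p : ℕ) : K) =
      ∑ i ∈ Finset.range M, x ^ (i + 2) * (p.choose (i + 2) : K) := by
    conv_lhs => rw [hM, one_add_pow_sub_one' x M]
    rw [← hM]
    ring
  have hznorm : ‖x * ((p : ℕ) : K)‖ = ‖(p : K)‖ * ‖x‖ := by
    rw [norm_mul, mul_comm]
  have hsum : ‖(1 + x) ^ p - 1 - x * ((p : ℕ) : K)‖ < ‖(p : K)‖ * ‖x‖ := by
    rw [hkey]
    have hC : max (‖(p : K)‖ * ‖x‖ ^ 2) (‖x‖ ^ p) < ‖(p : K)‖ * ‖x‖ := by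
      apply max_lt
      · have hsq : ‖x‖ ^ 2 < ‖x‖ := by nlinarith
        exact mul_lt_mul_of_pos_left hsq (norm_p_pos hext)
      · have hxpow : ‖x‖ ^ p = ‖x‖ ^ (p - 1) * ‖x‖ := by
          rw [← pow_succ]
          congr 1
          omega
        rw [hxpow]
        exact mul_lt_mul_of_pos_right hxp hx0
    refine lt_of_le_of_lt (norm_sum_le_of_forall_le_of_nonneg ?_ ?_) hC
    · exact le_max_of_le_right (pow_nonneg (norm_nonneg x) p)
    · intro i hi
      rw [Finset.mem_range] at hi
      have hip : i + 2 ≤ p := by omega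
      rcases eq_or_lt_of_le hip with he | hlt
      · apply le_max_of_le_right
        rw [norm_mul, norm_pow, he, Nat.choose_self]
        simp
      · apply le_max_of_le_left
        rw [norm_mul, norm_pow]
        have h2 : ‖(p.choose (i + 2) : K)‖ ≤ ‖(p : K)‖ :=
          norm_choose_le_norm_p hext (by omega) hlt
        have h1 : ‖x‖ ^ (i + 2) ≤ ‖x‖ ^ 2 :=
          pow_le_pow_of_le_one (norm_nonneg x) hx1.le (by omega)
        calc ‖x‖ ^ (i + 2) * ‖(p.choose (i + 2) : K)‖ ≤ ‖x‖ ^ 2 * ‖(p : K)‖ :=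
              mul_le_mul h1 h2 (norm_nonneg _) (pow_nonneg (norm_nonneg x) 2)
          _ = ‖(p : K)‖ * ‖x‖ ^ 2 := mul_comm _ _
  have hfin := norm_eq_of_sub_lt (y := (1 + x) ^ p - 1) (z := x * ((p : ℕ) : K))
    (by rw [hznorm]; exact hsum)
  rw [hfin, hznorm]

/-- coprime step: if `p ∤ u`, `u ≠ 0`, `0 < ‖x‖ < 1`, then `‖(1+x)^u - 1‖ = ‖x‖`. -/
lemma step_coprime (hext : ∀ x : ℚ_[p], ‖algebraMap ℚ_[p] K x‖ = ‖x‖) {x : K}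
    (hx0 : 0 < ‖x‖) (hx1 : ‖x‖ < 1) {u : ℕ} (hu : 0 < u) (hpu : ¬ (p ∣ u)) :
    ‖(1 + x) ^ u - 1‖ = ‖x‖ := by
  haveI := ultra hext
  obtain ⟨M, hM⟩ : ∃ M, u = M + 1 := ⟨u - 1, by omega⟩
  subst hM
  have hkey : (1 + x) ^ (M + 1) - 1 - x * ((M + 1 : ℕ) : K) =
      ∑ i ∈ Finset.range M, x ^ (i + 2) * ((M + 1).choose (i + 2) : K) := by
    rw [one_add_pow_sub_one']
    ring
  have hznorm : ‖x * ((M + 1 : ℕ) : K)‖ = ‖x‖ := by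
    rw [norm_mul, norm_coprime hext hpu, mul_one]
  have hsum : ‖(1 + x) ^ (M + 1) - 1 - x * ((M + 1 : ℕ) : K)‖ < ‖x‖ := by
    rw [hkey]
    have hsq : ‖x‖ ^ 2 < ‖x‖ := by nlinarith
    refine lt_of_le_of_lt (norm_sum_le_of_forall_le_of_nonneg
      (pow_nonneg (norm_nonneg x) 2) ?_) hsq
    intro i _
    rw [norm_mul, norm_pow]
    have h1 : ‖x‖ ^ (i + 2) ≤ ‖x‖ ^ 2 :=
      pow_le_pow_of_le_one (norm_nonneg x) hx1.le (by omega)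
    calc ‖x‖ ^ (i + 2) * ‖((M + 1).choose (i + 2) : K)‖ ≤ ‖x‖ ^ 2 * 1 :=
          mul_le_mul h1 (norm_natCast_le_one' hext _) (norm_nonneg _)
            (pow_nonneg (norm_nonneg x) 2)
      _ = ‖x‖ ^ 2 := mul_one _
  have hfin := norm_eq_of_sub_lt (y := (1 + x) ^ (M + 1) - 1) (z := x * ((M + 1 : ℕ) : K))
    (by rw [hznorm]; exact hsum)
  rw [hfin, hznorm]

/-- In an ultrametric field, `‖β^b - 1‖ ≤ ‖β - 1‖` whenever `‖β‖ ≤ 1`. -/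
lemma pow_sub_one_le [IsUltrametricDist K] {β : K} (hβ : ‖β‖ ≤ 1) (b : ℕ) :
    ‖β ^ b - 1‖ ≤ ‖β - 1‖ := by
  rw [← geom_sum_mul, norm_mul]
  have hsum : ‖∑ i ∈ Finset.range b, β ^ i‖ ≤ 1 := by
    apply norm_sum_le_of_forall_le_of_nonneg zero_le_one
    intro i _
    rw [norm_pow]
    exact pow_le_one₀ (norm_nonneg β) hβ
  calc ‖∑ i ∈ Finset.range b, β ^ i‖ * ‖β - 1‖ ≤ 1 * ‖β - 1‖ :=
        mul_le_mul_of_nonneg_right hsum (norm_nonneg _)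
    _ = ‖β - 1‖ := one_mul _

lemma norm_pow_sub_one_le_one [IsUltrametricDist K] {α : K} (hα : ‖α‖ ≤ 1) (n : ℕ) :
    ‖α ^ n - 1‖ ≤ 1 := by
  have h : ‖α ^ n + -1‖ ≤ max ‖α ^ n‖ ‖(-1 : K)‖ := norm_add_le_max _ _
  rw [← sub_eq_add_neg, norm_neg, norm_one, norm_pow] at h
  exact h.trans (max_le (pow_le_one₀ (norm_nonneg α) hα) le_rfl)

/-- Pigeonhole: some positive power of α is close to 1. -/
lemma exists_pow_close (hext : ∀ x : ℚ_[p], ‖algebraMap ℚ_[p] K x‖ = ‖x‖)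
    [Algebra.IsAlgebraic ℚ_[p] K] {α : K} (hα1 : ‖α‖ = 1) :
    ∃ m : ℕ, 0 < m ∧ ‖α ^ m - 1‖ < 1 := by
  letI : NormedSpace ℚ_[p] K :=
    ⟨fun c x => le_of_eq (by rw [Algebra.smul_def, norm_mul, hext])⟩
  have hint : IsIntegral ℚ_[p] α := (Algebra.IsAlgebraic.isAlgebraic α).isIntegral
  have hfg : (Algebra.adjoin ℚ_[p] ({α} : Set K)).toSubmodule.FG := hint.fg_adjoin_singleton
  set M : Submodule ℚ_[p] K := (Algebra.adjoin ℚ_[p] ({α} : Set K)).toSubmodule with hMdef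
  haveI : FiniteDimensional ℚ_[p] M := Module.Finite.iff_fg.mpr hfg
  haveI : ProperSpace M := FiniteDimensional.proper ℚ_[p] M
  have hmem : ∀ n : ℕ, α ^ n ∈ M := fun n => by
    rw [hMdef, Subalgebra.mem_toSubmodule]
    exact pow_mem (Algebra.self_mem_adjoin_singleton ℚ_[p] α) n
  set u : ℕ → M := fun n => ⟨α ^ n, hmem n⟩ with hu
  have hnorm : ∀ n : ℕ, ‖α ^ n‖ = 1 := fun n => by rw [norm_pow, hα1, one_pow]
  have hball : ∀ n, u n ∈ Metric.closedBall (0 : M) 1 := by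
    intro n
    rw [Metric.mem_closedBall, dist_zero_right]
    show ‖(⟨α ^ n, hmem n⟩ : M)‖ ≤ 1
    rw [Submodule.coe_norm]
    exact (hnorm n).le
  obtain ⟨x, -, φ, hφ, hconv⟩ :=
    (isCompact_closedBall (0 : M) 1).tendsto_subseq hball
  rw [Metric.tendsto_atTop] at hconv
  obtain ⟨N, hN⟩ := hconv (1 / 2) (by norm_num)
  have hd : dist (u (φ (N + 1))) (u (φ N)) < 1 := by
    calc dist (u (φ (N + 1))) (u (φ N)) ≤
        dist (u (φ (N + 1))) x + dist (u (φ N)) x := dist_triangle_right _ _ _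
      _ < 1 / 2 + 1 / 2 := add_lt_add (hN _ (by omega)) (hN _ (by omega))
      _ = 1 := by norm_num
  have hlt : φ N < φ (N + 1) := hφ (by omega)
  refine ⟨φ (N + 1) - φ N, by omega, ?_⟩
  have hdist : dist (α ^ φ (N + 1)) (α ^ φ N) < 1 := by
    have he : dist (u (φ (N + 1))) (u (φ N)) = dist (α ^ φ (N + 1)) (α ^ φ N) :=
      Subtype.dist_eq _ _
    rwa [he] at hd
  rw [dist_eq_norm] at hdist
  have hfactor : α ^ φ (N + 1) - α ^ φ N = α ^ φ N * (α ^ (φ (N + 1) - φ N) - 1) := by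
    rw [mul_sub, mul_one, ← pow_add]
    congr 2
    omega
  rw [hfactor, norm_mul, hnorm, one_mul] at hdist
  exact hdist

/-- lower bound for powers of an element close to 1 which is not a root of unity. -/
lemma beta_lower (hext : ∀ x : ℚ_[p], ‖algebraMap ℚ_[p] K x‖ = ‖x‖) {β : K}
    (hβne : ∀ n : ℕ, 0 < n → β ^ n ≠ 1) (hβlt : ‖β - 1‖ < 1) :
    ∃ C0 : ℝ, 0 < C0 ∧ ∀ k : ℕ, 0 < k → C0 / k ≤ ‖β ^ k - 1‖ := by
  haveI := ultra hext
  set s : ℕ → ℝ := fun j => ‖β ^ p ^ j - 1‖ with hs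
  have hβj : ∀ j : ℕ, 1 + (β ^ p ^ j - 1) = β ^ p ^ j := fun j => by ring
  have hspos : ∀ j, 0 < s j := by
    intro j
    show (0 : ℝ) < ‖β ^ p ^ j - 1‖
    rw [norm_pos_iff, sub_ne_zero]
    exact hβne _ (pow_pos hp.out.pos j)
  have hs0lt : s 0 < 1 := by
    show ‖β ^ p ^ 0 - 1‖ < 1
    rw [pow_zero, pow_one]
    exact hβlt
  have hsrec : ∀ j, β ^ p ^ (j + 1) - 1 = (1 + (β ^ p ^ j - 1)) ^ p - 1 := by
    intro j
    rw [hβj, ← pow_mul, pow_succ]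
  set c : ℝ := max ‖(p : K)‖ (s 0 ^ (p - 1)) with hc
  have hppos := norm_p_pos hext
  have hplt := norm_p_lt_one hext
  have hc0 : 0 < c := lt_max_of_lt_left hppos
  have hc1 : c < 1 := by
    apply max_lt hplt
    exact pow_lt_one₀ (hspos 0).le hs0lt (by have := hp.out.two_le; omega)
  have hdecay : ∀ j, s j ≤ c ^ j * s 0 := by
    intro j
    induction j with
    | zero => simp
    | succ j ih =>
      have hsj1 : s j ≤ s 0 := by
        calc s j ≤ c ^ j * s 0 := ih
          _ ≤ 1 * s 0 := mul_le_mul_of_nonneg_right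
              (pow_le_one₀ hc0.le hc1.le) (hspos 0).le
          _ = s 0 := one_mul _
      have hsjle1 : s j ≤ 1 := hsj1.trans hs0lt.le
      have hstep : s (j + 1) ≤ max (‖(p : K)‖ * s j) (s j ^ p) := by
        show ‖β ^ p ^ (j + 1) - 1‖ ≤ _
        rw [hsrec j]
        exact step_le hext hsjle1
      have h1 : ‖(p : K)‖ * s j ≤ c * s j :=
        mul_le_mul_of_nonneg_right (le_max_left _ _) (hspos j).le
      have h2 : s j ^ p ≤ c * s j := by
        have hsp : s j ^ p = s j ^ (p - 1) * s j := by
          rw [← pow_succ]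
          congr 1
          have := hp.out.two_le
          omega
        rw [hsp]
        apply mul_le_mul_of_nonneg_right _ (hspos j).le
        calc s j ^ (p - 1) ≤ s 0 ^ (p - 1) :=
              pow_le_pow_left₀ (hspos j).le hsj1 _
          _ ≤ c := le_max_right _ _
      calc s (j + 1) ≤ max (‖(p : K)‖ * s j) (s j ^ p) := hstep
        _ ≤ c * s j := max_le h1 h2
        _ ≤ c * (c ^ j * s 0) := mul_le_mul_of_nonneg_left ih hc0.le
        _ = c ^ (j + 1) * s 0 := by ring
  have hsle1 : ∀ j, s j < 1 := by
    intro j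
    calc s j ≤ c ^ j * s 0 := hdecay j
      _ ≤ 1 * s 0 := mul_le_mul_of_nonneg_right (pow_le_one₀ hc0.le hc1.le) (hspos 0).le
      _ = s 0 := one_mul _
      _ < 1 := hs0lt
  have htend : Tendsto (fun j : ℕ => c ^ j * s 0) atTop (nhds 0) := by
    have ht := tendsto_pow_atTop_nhds_zero_of_lt_one hc0.le hc1
    simpa using ht.mul_const (s 0)
  obtain ⟨J, hJ⟩ : ∃ J : ℕ, s J < ‖(p : K)‖ := by
    obtain ⟨J, hJ⟩ := (htend.eventually (eventually_lt_nhds hppos)).exists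
    exact ⟨J, lt_of_le_of_lt (hdecay J) hJ⟩
  have hSJ : ∀ k : ℕ, s (J + k) = ‖(p : K)‖ ^ k * s J := by
    intro k
    induction k with
    | zero => simp
    | succ k ih =>
      have hsJk_lt : s (J + k) < ‖(p : K)‖ := by
        rw [ih]
        calc ‖(p : K)‖ ^ k * s J ≤ 1 * s J :=
              mul_le_mul_of_nonneg_right (pow_le_one₀ hppos.le hplt.le) (hspos J).le
          _ = s J := one_mul _
          _ < ‖(p : K)‖ := hJ
      have hpow : s (J + k) ^ (p - 1) < ‖(p : K)‖ := by
        calc s (J + k) ^ (p - 1) ≤ s (J + k) ^ 1 :=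
              pow_le_pow_of_le_one (hspos _).le (hsle1 _).le
              (by have := hp.out.two_le; omega)
          _ = s (J + k) := pow_one _
          _ < ‖(p : K)‖ := hsJk_lt
      have hstep : s (J + (k + 1)) = ‖(p : K)‖ * s (J + k) := by
        show ‖β ^ p ^ (J + (k + 1)) - 1‖ = _
        rw [show J + (k + 1) = (J + k) + 1 by omega, hsrec (J + k)]
        exact step_eq hext (hspos (J + k)) hpow
      rw [hstep, ih]
      ring
  set C0 : ℝ := (Finset.range (J + 1)).inf' ⟨0, by simp⟩ s with hC0
  have hC0pos : 0 < C0 := by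
    rw [hC0]; apply (Finset.lt_inf'_iff _).mpr
    intro j _
    exact hspos j
  have hC0le : ∀ j ≤ J, C0 ≤ s j := by
    intro j hj
    exact Finset.inf'_le s (Finset.mem_range.mpr (by omega))
  have hC0J : C0 ≤ s J := hC0le J le_rfl
  have hlow : ∀ j, C0 * ‖(p : K)‖ ^ j ≤ s j := by
    intro j
    rcases le_or_gt j J with hj | hj
    · calc C0 * ‖(p : K)‖ ^ j ≤ C0 * 1 :=
          mul_le_mul_of_nonneg_left (pow_le_one₀ hppos.le hplt.le) hC0pos.le
        _ = C0 := mul_one _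
        _ ≤ s j := hC0le j hj
    · obtain ⟨k, hk⟩ : ∃ k, j = J + k := ⟨j - J, by omega⟩
      subst hk
      rw [hSJ k]
      have h1 : ‖(p : K)‖ ^ (J + k) ≤ ‖(p : K)‖ ^ k :=
        pow_le_pow_of_le_one hppos.le hplt.le (by omega)
      calc C0 * ‖(p : K)‖ ^ (J + k) ≤ C0 * ‖(p : K)‖ ^ k :=
            mul_le_mul_of_nonneg_left h1 hC0pos.le
        _ ≤ s J * ‖(p : K)‖ ^ k :=
            mul_le_mul_of_nonneg_right hC0J (pow_nonneg hppos.le k)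
        _ = ‖(p : K)‖ ^ k * s J := mul_comm _ _
  refine ⟨C0, hC0pos, ?_⟩
  intro k hk
  have hk0 : k ≠ 0 := hk.ne'
  obtain ⟨v, w, hdecomp, hwpos, hwco⟩ :
      ∃ v w : ℕ, p ^ v * w = k ∧ 0 < w ∧ ¬ (p ∣ w) :=
    ⟨k.factorization p, k / p ^ (k.factorization p),
      Nat.ordProj_mul_ordCompl_eq_self k p, Nat.ordCompl_pos p hk0,
      Nat.not_dvd_ordCompl hp.out hk0⟩
  have hβk : β ^ k = (1 + (β ^ p ^ v - 1)) ^ w := by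
    rw [hβj, ← pow_mul, hdecomp]
  have heq : ‖β ^ k - 1‖ = s v := by
    rw [hβk]
    exact step_coprime hext (hspos v) (hsle1 v) hwpos hwco
  rw [heq]
  refine le_trans ?_ (hlow v)
  have hpvk : (p : ℝ) ^ v ≤ (k : ℝ) := by
    exact_mod_cast Nat.le_of_dvd hk ⟨w, hdecomp.symm⟩
  have hpv0 : (0 : ℝ) < (p : ℝ) ^ v := by
    have : (0 : ℝ) < p := by exact_mod_cast hp.out.pos
    positivity
  have hinv : (k : ℝ)⁻¹ ≤ ((p : ℝ) ^ v)⁻¹ := by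
    apply inv_anti₀ hpv0 hpvk
  calc C0 / (k : ℝ) = C0 * (k : ℝ)⁻¹ := div_eq_mul_inv _ _
    _ ≤ C0 * ((p : ℝ) ^ v)⁻¹ := mul_le_mul_of_nonneg_left hinv hC0pos.le
    _ = C0 * ‖(p : K)‖ ^ v := by rw [norm_p' hext, inv_pow]

/-- The key lower bound: for `α` of norm one which is not a root of unity,
`‖α^n - 1‖ ≥ C / n`. -/
lemma exists_lower_bound (hext : ∀ x : ℚ_[p], ‖algebraMap ℚ_[p] K x‖ = ‖x‖)
    [Algebra.IsAlgebraic ℚ_[p] K] {α : K} (hα1 : ‖α‖ = 1) (hα : ¬ IsOfFinOrder α) :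
    ∃ C : ℝ, 0 < C ∧ C ≤ 1 ∧ ∀ n : ℕ, 0 < n → C / n ≤ ‖α ^ n - 1‖ := by
  haveI := ultra hext
  have hne : ∀ n : ℕ, 0 < n → α ^ n ≠ 1 := by
    intro n hn h
    exact hα (isOfFinOrder_iff_pow_eq_one.mpr ⟨n, hn, h⟩)
  have hnorm_pow : ∀ n : ℕ, ‖α ^ n‖ = 1 := fun n => by rw [norm_pow, hα1, one_pow]
  have hex : ∃ m : ℕ, 0 < m ∧ ‖α ^ m - 1‖ < 1 := exists_pow_close hext hα1
  classical
  obtain ⟨m, hmpos, hmlt, hmin⟩ :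
      ∃ m : ℕ, 0 < m ∧ ‖α ^ m - 1‖ < 1 ∧
        ∀ r : ℕ, r < m → ¬(0 < r ∧ ‖α ^ r - 1‖ < 1) :=
    ⟨Nat.find hex, (Nat.find_spec hex).1, (Nat.find_spec hex).2,
      fun r hr => Nat.find_min hex hr⟩
  have hmul : ∀ k : ℕ, ‖α ^ (m * k) - 1‖ < 1 := by
    intro k
    rw [pow_mul]
    exact lt_of_le_of_lt (pow_sub_one_le (by rw [hnorm_pow]) k) hmlt
  have hnotdvd : ∀ n : ℕ, 0 < n → ¬ (m ∣ n) → ‖α ^ n - 1‖ = 1 := by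
    intro n hn hdvd
    by_contra hne1
    have hle1 : ‖α ^ n - 1‖ ≤ 1 := norm_pow_sub_one_le_one hα1.le n
    have hlt1 : ‖α ^ n - 1‖ < 1 := lt_of_le_of_ne hle1 hne1
    apply hdvd
    rcases Nat.eq_zero_or_pos (n % m) with hr0 | hrpos
    · exact Nat.dvd_of_mod_eq_zero hr0
    · exfalso
      have hr : n % m < m := Nat.mod_lt n hmpos
      have hrlt : ‖α ^ (n % m) - 1‖ < 1 := by
        have hdecomp : α ^ (n % m) - 1 =
            (α ^ n - 1) - α ^ (n % m) * (α ^ (m * (n / m)) - 1) := by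
          have he : α ^ n = α ^ (n % m) * α ^ (m * (n / m)) := by
            rw [← pow_add, Nat.mod_add_div]
          rw [he]
          ring
        rw [hdecomp]
        have h2 : ‖α ^ (n % m) * (α ^ (m * (n / m)) - 1)‖ < 1 := by
          rw [norm_mul, hnorm_pow, one_mul]
          exact hmul (n / m)
        calc ‖(α ^ n - 1) - α ^ (n % m) * (α ^ (m * (n / m)) - 1)‖ ≤
              max ‖α ^ n - 1‖ ‖α ^ (n % m) * (α ^ (m * (n / m)) - 1)‖ := by
                have ht := norm_add_le_max (α ^ n - 1)
                  (-(α ^ (n % m) * (α ^ (m * (n / m)) - 1)))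
                simpa [sub_eq_add_neg] using ht
          _ < 1 := max_lt hlt1 h2
      exact hmin (n % m) hr ⟨hrpos, hrlt⟩
  have hβne : ∀ k : ℕ, 0 < k → (α ^ m) ^ k ≠ 1 := by
    intro k hk
    rw [← pow_mul]
    exact hne _ (Nat.mul_pos hmpos hk)
  obtain ⟨C0, hC0pos, hβlow⟩ := beta_lower hext hβne hmlt
  refine ⟨min C0 1, lt_min hC0pos one_pos, min_le_right _ _, ?_⟩
  intro n hn
  have hn0 : (0 : ℝ) < n := by exact_mod_cast hn
  by_cases hdvd : m ∣ n
  · obtain ⟨k, hk⟩ := hdvd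
    have hkpos : 0 < k := by
      rcases Nat.eq_zero_or_pos k with h0 | h0
      · subst h0
        rw [Nat.mul_zero] at hk
        omega
      · exact h0
    have hk0 : (0 : ℝ) < k := by exact_mod_cast hkpos
    have hkn : (k : ℝ) ≤ (n : ℝ) := by
      have hle : k ≤ n := by
        calc k ≤ m * k := Nat.le_mul_of_pos_left k hmpos
          _ = n := hk.symm
      exact_mod_cast hle
    have hαβ : α ^ n = (α ^ m) ^ k := by rw [← pow_mul, ← hk]
    rw [hαβ]
    calc min C0 1 / (n : ℝ) ≤ C0 / (k : ℝ) :=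
          div_le_div₀ hC0pos.le (min_le_left _ _) hk0 hkn
      _ ≤ ‖(α ^ m) ^ k - 1‖ := hβlow k hkpos
  · rw [hnotdvd n hn hdvd]
    have hn1 : (1 : ℝ) ≤ n := by exact_mod_cast hn
    calc min C0 1 / (n : ℝ) ≤ 1 / (n : ℝ) :=
          div_le_div₀ zero_le_one (min_le_right _ _) hn0 le_rfl
      _ ≤ 1 := by rw [div_le_one hn0]; exact hn1

/-- per-root limit. -/
lemma per_root (hext : ∀ x : ℚ_[p], ‖algebraMap ℚ_[p] K x‖ = ‖x‖)
    [Algebra.IsAlgebraic ℚ_[p] K] {α : K} (hα : ¬ IsOfFinOrder α) :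
    Tendsto (fun n : ℕ => ‖α ^ n - 1‖ ^ ((n : ℝ)⁻¹)) atTop (nhds (max 1 ‖α‖)) := by
  haveI := ultra hext
  rcases lt_trichotomy ‖α‖ 1 with h | h | h
  · rw [max_eq_left h.le]
    apply Tendsto.congr' _ tendsto_const_nhds
    filter_upwards [eventually_ge_atTop 1] with n hn
    have h1 : ‖α ^ n - 1‖ = 1 := by
      have hlt : ‖(α ^ n - 1) - (-1)‖ < ‖(-1 : K)‖ := by
        have e : (α ^ n - 1) - (-1) = α ^ n := by ring
        rw [e, norm_neg, norm_one, norm_pow]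
        exact pow_lt_one₀ (norm_nonneg α) h (by omega)
      simpa using norm_eq_of_sub_lt hlt
    rw [h1, Real.one_rpow]
  · rw [h, max_self]
    obtain ⟨C, hCpos, hCle1, hC⟩ := exists_lower_bound hext h hα
    have upper : ∀ᶠ n : ℕ in atTop, ‖α ^ n - 1‖ ^ ((n : ℝ)⁻¹) ≤ 1 := by
      filter_upwards [eventually_ge_atTop 1] with n hn
      exact Real.rpow_le_one (norm_nonneg _) (norm_pow_sub_one_le_one h.le n) (by positivity)
    have lower : ∀ᶠ n : ℕ in atTop,
        (C / n) ^ ((n : ℝ)⁻¹) ≤ ‖α ^ n - 1‖ ^ ((n : ℝ)⁻¹) := by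
      filter_upwards [eventually_ge_atTop 1] with n hn
      have hn0 : (0 : ℝ) < n := by exact_mod_cast (by omega : 0 < n)
      exact Real.rpow_le_rpow (by positivity) (hC n (by omega)) (by positivity)
    have hlim : Tendsto (fun n : ℕ => (C / n) ^ ((n : ℝ)⁻¹)) atTop (nhds 1) := by
      have h1 : Tendsto (fun n : ℕ => C ^ ((n : ℝ)⁻¹)) atTop (nhds 1) := by
        have hinv : Tendsto (fun n : ℕ => ((n : ℝ))⁻¹) atTop (nhds 0) :=
          tendsto_inv_atTop_zero.comp tendsto_natCast_atTop_atTop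
        have ht := Filter.Tendsto.rpow
          (tendsto_const_nhds : Tendsto (fun _ : ℕ => C) atTop (nhds C))
          hinv (Or.inl hCpos.ne')
        simpa using ht
      have h2 : Tendsto (fun n : ℕ => ((n : ℝ)) ^ ((n : ℝ)⁻¹)) atTop (nhds 1) := by
        have ht : Tendsto (fun x : ℝ => x ^ (1 / x)) atTop (nhds 1) := tendsto_rpow_div
        have ht2 := ht.comp tendsto_natCast_atTop_atTop
        simpa [Function.comp_def, one_div] using ht2
      have hdiv := h1.div h2 one_ne_zero
      apply Tendsto.congr' _ (by simpa using hdiv)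
      filter_upwards [eventually_ge_atTop 1] with n hn
      simp only [Pi.div_apply]
      rw [Real.div_rpow hCpos.le (Nat.cast_nonneg n)]
    exact tendsto_of_tendsto_of_tendsto_of_le_of_le' hlim tendsto_const_nhds lower upper
  · rw [max_eq_right h.le]
    apply Tendsto.congr' _ tendsto_const_nhds
    filter_upwards [eventually_ge_atTop 1] with n hn
    have h1 : ‖α ^ n - 1‖ = ‖α‖ ^ n := by
      have hlt : ‖(α ^ n - 1) - α ^ n‖ < ‖α ^ n‖ := by
        have e : (α ^ n - 1) - α ^ n = -1 := by ring
        rw [e, norm_neg, norm_one, norm_pow]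
        exact one_lt_pow₀ h (by omega)
      have hres := norm_eq_of_sub_lt hlt
      rwa [norm_pow] at hres
    rw [h1, ← Real.rpow_natCast ‖α‖ n, ← Real.rpow_mul (norm_nonneg α),
      mul_inv_cancel₀ (Nat.cast_ne_zero.mpr (by omega)), Real.rpow_one]

lemma norm_multiset_prod (s : Multiset K) : ‖s.prod‖ = (s.map fun x : K => ‖x‖).prod := by
  induction s using Multiset.induction_on with
  | empty => simp
  | cons a t ih => simp [ih]

lemma prod_nonneg' (s : Multiset ℝ) (h : ∀ x ∈ s, (0 : ℝ) ≤ x) : 0 ≤ s.prod := by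
  revert h
  induction s using Multiset.induction_on with
  | empty => intro _; simp
  | cons a t ih =>
    intro h
    rw [Multiset.prod_cons]
    exact mul_nonneg (h a (Multiset.mem_cons_self a t))
      (ih fun x hx => h x (Multiset.mem_cons_of_mem hx))

lemma prod_rpow' (s : Multiset ℝ) (h : ∀ x ∈ s, (0 : ℝ) ≤ x) (c : ℝ) :
    s.prod ^ c = (s.map (fun x => x ^ c)).prod := by
  revert h
  induction s using Multiset.induction_on with
  | empty => intro _; simp
  | cons a t ih =>
    intro h
    rw [Multiset.prod_cons, Multiset.map_cons, Multiset.prod_cons,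
      Real.mul_rpow (h a (Multiset.mem_cons_self a t))
        (prod_nonneg' t fun x hx => h x (Multiset.mem_cons_of_mem hx)),
      ih fun x hx => h x (Multiset.mem_cons_of_mem hx)]

lemma multiset_tendsto (hext : ∀ x : ℚ_[p], ‖algebraMap ℚ_[p] K x‖ = ‖x‖)
    [Algebra.IsAlgebraic ℚ_[p] K] (s : Multiset K)
    (hs : ∀ α ∈ s, ¬ IsOfFinOrder α) :
    Tendsto (fun n : ℕ => (s.map (fun α => ‖α ^ n - 1‖ ^ ((n : ℝ)⁻¹))).prod) atTop
      (nhds ((s.map (fun α => max 1 ‖α‖)).prod)) := by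
  revert hs
  induction s using Multiset.induction_on with
  | empty =>
    intro _
    simpa using (tendsto_const_nhds : Tendsto (fun _ : ℕ => (1 : ℝ)) atTop (nhds 1))
  | cons a t ih =>
    intro hs
    simp only [Multiset.map_cons, Multiset.prod_cons]
    exact (per_root hext (hs a (Multiset.mem_cons_self a t))).mul
      (ih fun x hx => hs x (Multiset.mem_cons_of_mem hx))

end PierceLehmerAux

/-- if a nonzero `f ∈ ℤ[t]` does not vanish at any root of unity, then
`|Δ_n(f)|_p^{1/n} → M_p(f)` as `n → ∞`. -/
theorem padic_abs_pierceLehmer_pow_inv_tendsto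
    (p : ℕ) [Fact p.Prime]
    (K : Type*) [NormedField K] [Algebra ℚ_[p] K] [IsAlgClosure ℚ_[p] K]
    (hext : ∀ x : ℚ_[p], ‖algebraMap ℚ_[p] K x‖ = ‖x‖)
    (f : Polynomial ℤ) (hf : f ≠ 0)
    (hru : ∀ ζ : K, IsOfFinOrder ζ → (f.map (Int.castRingHom K)).eval ζ ≠ 0) :
    Tendsto (fun n : ℕ => ‖pierceLehmer K f n‖ ^ ((n : ℝ)⁻¹)) atTop
      (nhds (mahlerMeasure K f)) := by
  classical
  have hroots : ∀ α ∈ (f.map (Int.castRingHom K)).roots, ¬ IsOfFinOrder α := fun α hα hfin =>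
    hru α hfin (Polynomial.isRoot_of_mem_roots hα)
  have hmain := PierceLehmerAux.multiset_tendsto hext _ hroots
  have htend : Tendsto (fun n : ℕ => ‖(f.map (Int.castRingHom K)).leadingCoeff‖ *
      (((f.map (Int.castRingHom K)).roots).map
        (fun α => ‖α ^ n - 1‖ ^ ((n : ℝ)⁻¹))).prod) atTop
      (nhds (mahlerMeasure K f)) := by
    unfold _root_.mahlerMeasure
    exact tendsto_const_nhds.mul hmain
  apply Tendsto.congr' _ htend
  filter_upwards [eventually_ge_atTop 1] with n hn
  have hn0 : (n : ℝ) ≠ 0 := Nat.cast_ne_zero.mpr (by omega)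
  symm
  have h1 : ‖pierceLehmer K f n‖ = ‖(f.map (Int.castRingHom K)).leadingCoeff‖ ^ n *
      (((f.map (Int.castRingHom K)).roots).map (fun α => ‖α ^ n - 1‖)).prod := by
    unfold pierceLehmer
    rw [norm_mul, norm_pow, PierceLehmerAux.norm_multiset_prod, Multiset.map_map]
    rfl
  rw [h1, Real.mul_rpow (pow_nonneg (norm_nonneg _) n)
    (PierceLehmerAux.prod_nonneg' _ (by
      intro x hx
      obtain ⟨a, -, rfl⟩ := Multiset.mem_map.mp hx
      exact norm_nonneg _))]
  congr 1
  · rw [← Real.rpow_natCast ‖(f.map (Int.castRingHom K)).leadingCoeff‖ n,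
      ← Real.rpow_mul (norm_nonneg _), mul_inv_cancel₀ hn0, Real.rpow_one]
  · rw [PierceLehmerAux.prod_rpow' _ (by
      intro x hx
      obtain ⟨a, -, rfl⟩ := Multiset.mem_map.mp hx
      exact norm_nonneg _), Multiset.map_map]
    rfl
end

section
/- Let f ∈ ℤ[t] be a nonzero polynomial which does not vanish at any root of unity, and let p and ℓ be two distinct rational primes. Then there exist a constant k_0 ∈ ℕ and an integer ν ∈ ℤ such that for every integer k ≥ k_0 one has ord_p(Δ_{ℓ^k}(f)) = μ_p(f)·ℓ^k + ν, where μ_p(f) := −m_p(f)/log p. -/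
open Polynomial

private lemma eventually_prod_aux {α : Type*} (N : ℕ → ℕ) (g : ℕ → α → ℝ) (h : α → ℝ) :
    ∀ (M : Multiset α), (∀ a ∈ M, ∃ k₀ e, 0 < e ∧ ∀ k, k₀ ≤ k → g k a = h a ^ N k * e) →
    ∃ k₀ E, 0 < E ∧ ∀ k, k₀ ≤ k → (M.map (g k)).prod = (M.map h).prod ^ N k * E := by
  intro M
  induction M using Multiset.induction_on with
  | empty => exact fun _ => ⟨0, 1, one_pos, by simp⟩
  | cons a M ih =>
    intro H
    obtain ⟨k₁, e, he, h1⟩ := H a (Multiset.mem_cons_self a M)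
    obtain ⟨k₂, E, hE, h2⟩ := ih (fun b hb => H b (Multiset.mem_cons_of_mem hb))
    refine ⟨max k₁ k₂, e * E, mul_pos he hE, fun k hk => ?_⟩
    rw [Multiset.map_cons, Multiset.prod_cons, Multiset.map_cons, Multiset.prod_cons,
      h1 k (le_trans (le_max_left _ _) hk), h2 k (le_trans (le_max_right _ _) hk), mul_pow]
    ring

private lemma norm_pow_sub_one_of_lt {K : Type*} [NormedDivisionRing K] [IsUltrametricDist K]
    {x : K} (hx : ‖x‖ < 1) {n : ℕ} (hn : n ≠ 0) : ‖x ^ n - 1‖ = 1 := by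
  have h1 : ‖x ^ n‖ < 1 := by
    rw [norm_pow]; exact pow_lt_one₀ (norm_nonneg x) hx hn
  have hne : ‖x ^ n‖ ≠ ‖(-1 : K)‖ := by rw [norm_neg, norm_one]; exact ne_of_lt h1
  have := IsUltrametricDist.norm_add_eq_max_of_norm_ne_norm hne
  rw [← sub_eq_add_neg] at this
  rw [this, norm_neg, norm_one, max_eq_right h1.le]

private lemma norm_pow_sub_one_of_gt {K : Type*} [NormedDivisionRing K] [IsUltrametricDist K]
    {x : K} (hx : 1 < ‖x‖) {n : ℕ} (hn : n ≠ 0) : ‖x ^ n - 1‖ = ‖x‖ ^ n := by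
  have h1 : 1 < ‖x ^ n‖ := by rw [norm_pow]; exact one_lt_pow₀ hx hn
  have hne : ‖x ^ n‖ ≠ ‖(-1 : K)‖ := by rw [norm_neg, norm_one]; exact ne_of_gt h1
  have := IsUltrametricDist.norm_add_eq_max_of_norm_ne_norm hne
  rw [← sub_eq_add_neg] at this
  rw [this, norm_neg, norm_one, max_eq_left h1.le, norm_pow]

private lemma norm_pow_prime_sub_one {K : Type*} [NormedField K] [IsUltrametricDist K]
    {β : K} (hβ : ‖β - 1‖ < 1) {l : ℕ} (hl : ‖(l : K)‖ = 1) :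
    ‖β ^ l - 1‖ = ‖β - 1‖ := by
  have hβ1 : ‖β‖ ≤ 1 := by
    have : β = (β - 1) + 1 := by ring
    rw [this]
    refine le_trans (IsUltrametricDist.norm_add_le_max _ _) ?_
    rw [norm_one]; exact max_le hβ.le le_rfl
  have key : ∀ i : ℕ, ‖β ^ i - 1‖ ≤ ‖β - 1‖ := by
    intro i; induction i with
    | zero => simp
    | succ i ih =>
      have h : β ^ (i + 1) - 1 = β ^ i * (β - 1) + (β ^ i - 1) := by ring
      rw [h]
      refine le_trans (IsUltrametricDist.norm_add_le_max _ _) (max_le ?_ ih)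
      rw [norm_mul, norm_pow]
      calc ‖β‖ ^ i * ‖β - 1‖ ≤ 1 * ‖β - 1‖ :=
            mul_le_mul_of_nonneg_right (pow_le_one₀ (norm_nonneg β) hβ1) (norm_nonneg _)
        _ = ‖β - 1‖ := one_mul _
  have hdiff : ‖(∑ i ∈ Finset.range l, β ^ i) - (l : K)‖ < 1 := by
    have h : (∑ i ∈ Finset.range l, β ^ i) - (l : K)
        = ∑ i ∈ Finset.range l, (β ^ i - 1) := by
      rw [Finset.sum_sub_distrib]; simp
    rw [h]
    refine lt_of_le_of_lt
      (IsUltrametricDist.norm_sum_le_of_forall_le_of_nonneg (norm_nonneg (β - 1))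
        (fun i _ => key i)) hβ
  have hsum : ‖∑ i ∈ Finset.range l, β ^ i‖ = 1 := by
    have h : (∑ i ∈ Finset.range l, β ^ i)
        = (l : K) + ((∑ i ∈ Finset.range l, β ^ i) - (l : K)) := by ring
    have hne : ‖(l : K)‖ ≠ ‖(∑ i ∈ Finset.range l, β ^ i) - (l : K)‖ := by
      rw [hl]; exact (ne_of_gt hdiff)
    rw [h, IsUltrametricDist.norm_add_eq_max_of_norm_ne_norm hne, hl,
      max_eq_left hdiff.le]
  rw [← geom_sum_mul, norm_mul, hsum, one_mul]


private lemma ultra_norm_sub_le_max {K : Type*} [NormedDivisionRing K] [IsUltrametricDist K]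
    (x y : K) : ‖x - y‖ ≤ max ‖x‖ ‖y‖ := by
  rw [sub_eq_add_neg]
  simpa [norm_neg] using IsUltrametricDist.norm_add_le_max x (-y)

private lemma ultra_norm_sub_eq_right {K : Type*} [NormedDivisionRing K] [IsUltrametricDist K]
    {x y : K} (h : ‖x‖ < ‖y‖) : ‖x - y‖ = ‖y‖ := by
  have hne : ‖x‖ ≠ ‖(-y : K)‖ := by rw [norm_neg]; exact ne_of_lt h
  rw [sub_eq_add_neg, IsUltrametricDist.norm_add_eq_max_of_norm_ne_norm hne, norm_neg,
    max_eq_right h.le]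

private lemma ultra_norm_sub_eq_left {K : Type*} [NormedDivisionRing K] [IsUltrametricDist K]
    {x y : K} (h : ‖y‖ < ‖x‖) : ‖x - y‖ = ‖x‖ := by
  have := ultra_norm_sub_eq_right (x := y) (y := x) h
  rw [← norm_neg, neg_sub] at this
  exact this

private lemma unit_root_eventual {K : Type*} [NormedField K] [IsUltrametricDist K]
    {α : K} (hα : ‖α‖ = 1) (hnr : ∀ m : ℕ, m ≠ 0 → α ^ m ≠ 1)
    {l : ℕ} (hl : ‖(l : K)‖ = 1) (hl0 : l ≠ 0) :
    ∃ k₀ e, 0 < e ∧ ∀ k, k₀ ≤ k → ‖α ^ l ^ k - 1‖ = e := by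
  by_cases hconst : ∀ k, ‖α ^ l ^ k - 1‖ = 1
  · exact ⟨0, 1, one_pos, fun k _ => hconst k⟩
  · push_neg at hconst
    obtain ⟨j, hj⟩ := hconst
    have hle : ∀ k : ℕ, ‖α ^ l ^ k - 1‖ ≤ 1 := by
      intro k
      refine le_trans (ultra_norm_sub_le_max _ _) ?_
      rw [norm_pow, hα, one_pow, norm_one]
      exact max_le le_rfl le_rfl
    have hjlt : ‖α ^ l ^ j - 1‖ < 1 := lt_of_le_of_ne (hle j) hj
    have hpos : 0 < ‖α ^ l ^ j - 1‖ := by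
      rw [norm_pos_iff, sub_ne_zero]
      exact hnr (l ^ j) (pow_ne_zero j hl0)
    refine ⟨j, ‖α ^ l ^ j - 1‖, hpos, ?_⟩
    intro k hk
    induction k, hk using Nat.le_induction with
    | base => rfl
    | succ k hk ih =>
      have hk1 : ‖α ^ l ^ k - 1‖ < 1 := by rw [ih]; exact hjlt
      have : α ^ l ^ (k + 1) = (α ^ l ^ k) ^ l := by
        rw [← pow_mul, pow_succ]
      rw [this, norm_pow_prime_sub_one hk1 hl, ih]


private lemma one_le_prod_max {K : Type*} [NormedField K] (M : Multiset K) :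
    1 ≤ (M.map (fun a => max 1 ‖a‖)).prod := by
  refine Multiset.one_le_prod ?_
  intro x hx
  obtain ⟨a, _, rfl⟩ := Multiset.mem_map.mp hx
  exact le_max_left _ _

open scoped Classical in
private lemma newton_coeff {K : Type*} [NormedField K] [IsUltrametricDist K] :
    ∀ (M : Multiset K) (c : K), c ≠ 0 →
    (‖(C c * (M.map (fun a => X - C a)).prod).coeff
        (Multiset.card M - (M.filter (fun x => 1 < ‖x‖)).card)‖
      = ‖c‖ * (M.map (fun a => max 1 ‖a‖)).prod)
    ∧ (∀ j, (Multiset.card M - (M.filter (fun x => 1 < ‖x‖)).card) < j →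
        ‖(C c * (M.map (fun a => X - C a)).prod).coeff j‖
          < ‖c‖ * (M.map (fun a => max 1 ‖a‖)).prod)
    ∧ (∀ j, ‖(C c * (M.map (fun a => X - C a)).prod).coeff j‖
          ≤ ‖c‖ * (M.map (fun a => max 1 ‖a‖)).prod) := by
  intro M
  induction M using Multiset.induction_on with
  | empty =>
    intro c hc
    have hcpos : 0 < ‖c‖ := norm_pos_iff.mpr hc
    refine ⟨by simp, ?_, ?_⟩
    · intro j hj
      simp only [Multiset.map_zero, Multiset.prod_zero, mul_one, Multiset.filter_zero,
        Multiset.card_zero] at *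
      rw [coeff_C, if_neg (by omega)]
      simpa using hcpos
    · intro j
      simp only [Multiset.map_zero, Multiset.prod_zero, mul_one]
      rw [coeff_C]
      split
      · exact le_rfl
      · simpa using hcpos.le
  | cons a M ih =>
    intro c hc
    obtain ⟨ih1, ih2, ih3⟩ := ih c hc
    have hcpos : 0 < ‖c‖ := norm_pos_iff.mpr hc
    set g : K[X] := C c * (M.map (fun a => X - C a)).prod with hg
    set B' : ℝ := ‖c‖ * (M.map (fun a => max 1 ‖a‖)).prod with hB'
    have hB'pos : 0 < B' := mul_pos hcpos (lt_of_lt_of_le one_pos (one_le_prod_max M))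
    set s' : ℕ := (M.filter (fun x => 1 < ‖x‖)).card with hs'
    set t' : ℕ := Multiset.card M - s' with ht'
    have hs'le : s' ≤ Multiset.card M := by
      rw [hs']; exact Multiset.card_le_card (Multiset.filter_le _ M)
    -- the new polynomial
    have hgnew : C c * ((a ::ₘ M).map (fun a => X - C a)).prod = (X - C a) * g := by
      rw [Multiset.map_cons, Multiset.prod_cons, hg]; ring
    have hBnew : ‖c‖ * ((a ::ₘ M).map (fun a => max 1 ‖a‖)).prod = B' * max 1 ‖a‖ := by
      rw [Multiset.map_cons, Multiset.prod_cons, hB']; ring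
    have hcoeff : ∀ j : ℕ, ((X - C a) * g).coeff j
        = (if j = 0 then 0 else g.coeff (j - 1)) - a * g.coeff j := by
      intro j
      rw [sub_mul, coeff_sub, coeff_C_mul]
      cases j with
      | zero => simp [mul_coeff_zero]
      | succ j => simp [coeff_X_mul]
    have hxle : ∀ j : ℕ, ‖(if j = 0 then (0:K) else g.coeff (j - 1))‖ ≤ B' := by
      intro j
      split
      · simpa using hB'pos.le
      · exact ih3 _
    by_cases hA : 1 < ‖a‖
    · -- big root case
      have hmax : max 1 ‖a‖ = ‖a‖ := max_eq_right hA.le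
      have hscons : ((a ::ₘ M).filter (fun x => 1 < ‖x‖)).card = s' + 1 := by
        rw [Multiset.filter_cons, if_pos hA]
        simp [hs', add_comm]
      have htcons : Multiset.card (a ::ₘ M) - ((a ::ₘ M).filter (fun x => 1 < ‖x‖)).card = t' := by
        rw [hscons, Multiset.card_cons, ht']
        omega
      have hBpos : B' < B' * ‖a‖ := by
        nlinarith
      refine ⟨?_, ?_, ?_⟩
      · rw [htcons, hgnew, hBnew, hmax, hcoeff]
        have hy : ‖a * g.coeff t'‖ = ‖a‖ * B' := by rw [norm_mul, ih1]
        have hx : ‖(if t' = 0 then (0:K) else g.coeff (t' - 1))‖ < ‖a * g.coeff t'‖ := by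
          rw [hy]
          exact lt_of_le_of_lt (hxle t') (by nlinarith)
        rw [ultra_norm_sub_eq_right hx, hy]
        ring
      · intro j hj
        rw [htcons] at hj
        rw [hgnew, hBnew, hmax, hcoeff]
        refine lt_of_le_of_lt (ultra_norm_sub_le_max _ _) (max_lt ?_ ?_)
        · exact lt_of_le_of_lt (hxle j) hBpos
        · rw [norm_mul]
          calc ‖a‖ * ‖g.coeff j‖ < ‖a‖ * B' := by
                have := ih2 j hj
                nlinarith [norm_nonneg a, lt_trans one_pos hA]
            _ = B' * ‖a‖ := mul_comm _ _
      · intro j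
        rw [hgnew, hBnew, hmax, hcoeff]
        refine le_trans (ultra_norm_sub_le_max _ _) (max_le ?_ ?_)
        · exact le_trans (hxle j) hBpos.le
        · rw [norm_mul]
          calc ‖a‖ * ‖g.coeff j‖ ≤ ‖a‖ * B' := by
                have := ih3 j
                nlinarith [norm_nonneg a, lt_trans one_pos hA]
            _ = B' * ‖a‖ := mul_comm _ _
    · -- small root case
      push_neg at hA
      have hmax : max 1 ‖a‖ = 1 := max_eq_left hA
      have hscons : ((a ::ₘ M).filter (fun x => 1 < ‖x‖)).card = s' := by
        rw [Multiset.filter_cons, if_neg (not_lt.mpr hA)]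
        simp [hs']
      have htcons : Multiset.card (a ::ₘ M) - ((a ::ₘ M).filter (fun x => 1 < ‖x‖)).card
          = t' + 1 := by
        rw [hscons, Multiset.card_cons, ht']
        omega
      have hyB : ∀ j, t' < j → ‖a * g.coeff j‖ < B' := by
        intro j hj
        rw [norm_mul]
        calc ‖a‖ * ‖g.coeff j‖ ≤ 1 * ‖g.coeff j‖ :=
              mul_le_mul_of_nonneg_right hA (norm_nonneg _)
          _ = ‖g.coeff j‖ := one_mul _
          _ < B' := ih2 j hj
      refine ⟨?_, ?_, ?_⟩
      · rw [htcons, hgnew, hBnew, hmax, mul_one, hcoeff]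
        have hx : ‖(if t' + 1 = 0 then (0:K) else g.coeff (t' + 1 - 1))‖ = B' := by
          rw [if_neg (Nat.succ_ne_zero t')]
          simpa using ih1
        have hy : ‖a * g.coeff (t' + 1)‖ < B' := hyB _ (Nat.lt_succ_self t')
        rw [ultra_norm_sub_eq_left (by rw [hx]; exact hy), hx]
      · intro j hj
        rw [htcons] at hj
        rw [hgnew, hBnew, hmax, mul_one, hcoeff]
        refine lt_of_le_of_lt (ultra_norm_sub_le_max _ _) (max_lt ?_ ?_)
        · rw [if_neg (by omega : ¬ j = 0)]
          exact ih2 _ (by omega)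
        · exact hyB j (by omega)
      · intro j
        rw [hgnew, hBnew, hmax, mul_one, hcoeff]
        refine le_trans (ultra_norm_sub_le_max _ _) (max_le (hxle j) ?_)
        rw [norm_mul]
        calc ‖a‖ * ‖g.coeff j‖ ≤ 1 * ‖g.coeff j‖ :=
              mul_le_mul_of_nonneg_right hA (norm_nonneg _)
          _ = ‖g.coeff j‖ := one_mul _
          _ ≤ B' := ih3 j


private lemma aeval_ringhom_comm {A B : Type*} [CommRing A] [CommRing B] (f : Polynomial ℤ)
    (ψ : A →+* B) (x : A) :
    ψ ((Polynomial.aeval x) f) = (Polynomial.aeval (ψ x)) f := by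
  rw [Polynomial.aeval_def, Polynomial.aeval_def, Polynomial.hom_eval₂,
    RingHom.eq_intCast' (ψ.comp (algebraMap ℤ A)), RingHom.eq_intCast' (algebraMap ℤ B)]

private lemma prod_roots_int (K : Type*) [Field K] [CharZero K] [IsAlgClosed K]
    (f : Polynomial ℤ) {n : ℕ} (hn : n ≠ 0) :
    ∃ m : ℤ, ((((X : K[X]) ^ n - 1).roots).map (fun ζ => (Polynomial.aeval ζ) f)).prod
      = (m : K) := by
  have hnpos : 0 < n := Nat.pos_of_ne_zero hn
  set n' : ℕ+ := ⟨n, hnpos⟩ with hn'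
  let L := CyclotomicField n' ℚ
  haveI : NeZero ((n' : ℕ) : ℚ) := ⟨by exact_mod_cast n'.ne_zero⟩
  haveI : IsCyclotomicExtension {(n' : ℕ)} ℚ L :=
    CyclotomicField.isCyclotomicExtension (n := (n' : ℕ)) (K := ℚ)
  haveI : FiniteDimensional ℚ L := IsCyclotomicExtension.finiteDimensional {(n' : ℕ)} ℚ L
  haveI : IsGalois ℚ L := IsCyclotomicExtension.isGalois {(n' : ℕ)} ℚ L
  set gL : L[X] := (X : L[X]) ^ n - 1 with hgL
  have hmapL : ((X : ℚ[X]) ^ n - 1).map (algebraMap ℚ L) = gL := by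
    simp [hgL, Polynomial.map_sub, Polynomial.map_pow]
  have hsplitL : Splits gL := by
    rw [← hmapL]
    have := IsCyclotomicExtension.splits_X_pow_sub_one (n := (n' : ℕ)) (S := {(n' : ℕ)}) (K := ℚ) (L := L)
      (Set.mem_singleton (n' : ℕ))
    simpa [hn'] using this
  set r : L := ((gL.roots).map (fun ζ => (Polynomial.aeval ζ) f)).prod with hr
  -- Galois invariance of r
  have hinv : ∀ σ : L ≃ₐ[ℚ] L, σ r = r := by
    intro σ
    have hσmap : gL.map (σ : L →+* L) = gL := by
      simp [hgL, Polynomial.map_sub, Polynomial.map_pow]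
    have hroots : (gL.roots).map (σ : L →+* L) = gL.roots := by
      conv_rhs => rw [← hσmap]
      rw [hsplitL.roots_map]
    calc σ r = ((gL.roots).map (fun ζ => σ ((Polynomial.aeval ζ) f))).prod := by
          rw [hr, map_multiset_prod, Multiset.map_map]; rfl
      _ = (((gL.roots).map (σ : L →+* L)).map (fun ζ => (Polynomial.aeval ζ) f)).prod := by
          rw [Multiset.map_map]
          congr 1
          refine Multiset.map_congr rfl (fun ζ _ => ?_)
          simp only [Function.comp_apply]
          exact aeval_ringhom_comm f (σ : L →+* L) ζ
      _ = r := by rw [hroots, hr]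
  have hbot : r ∈ (⊥ : IntermediateField ℚ L) := by
    rw [← IsGalois.fixedField_fixingSubgroup (⊥ : IntermediateField ℚ L)]
    exact fun σ => hinv σ
  obtain ⟨q, hq⟩ := IntermediateField.mem_bot.mp hbot
  -- integrality of r over ℤ
  have hint : IsIntegral ℤ r := by
    rw [hr]
    have : ((gL.roots).map (fun ζ => (Polynomial.aeval ζ) f)).prod ∈ integralClosure ℤ L := by
      refine Subalgebra.multiset_prod_mem _ ?_
      intro x hx
      obtain ⟨ζ, hζ, rfl⟩ := Multiset.mem_map.mp hx
      have hζint : IsIntegral ℤ ζ := by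
        refine ⟨(X : ℤ[X]) ^ n - 1, ?_, ?_⟩
        · simpa using Polynomial.monic_X_pow_sub_C (1 : ℤ) hn
        · have hroot : gL.eval ζ = 0 := Polynomial.isRoot_of_mem_roots hζ
          simpa [hgL, Polynomial.eval₂_sub, Polynomial.eval₂_pow] using hroot
      exact IsIntegral.of_mem_of_fg _ hζint.fg_adjoin_singleton _
        (Polynomial.aeval_mem_adjoin_singleton ℤ ζ)
    exact this
  have hqint : IsIntegral ℤ q := by
    rw [← hq] at hint
    exact (isIntegral_algebraMap_iff (algebraMap ℚ L).injective).mp hint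
  obtain ⟨m, hm⟩ := IsIntegrallyClosed.isIntegral_iff.mp hqint
  refine ⟨m, ?_⟩
  -- transfer to K via an embedding
  haveI : NoZeroSMulDivisors ℚ K :=
    inferInstance
  haveI : Algebra.IsAlgebraic ℚ L := Algebra.IsAlgebraic.of_finite ℚ L
  let φ : L →ₐ[ℚ] K := IsAlgClosed.lift
  have hmapK : gL.map (φ : L →+* K) = (X : K[X]) ^ n - 1 := by
    simp [hgL, Polynomial.map_sub, Polynomial.map_pow]
  have hrootsK : ((X : K[X]) ^ n - 1).roots = (gL.roots).map (φ : L →+* K) := by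
    rw [← hmapK, hsplitL.roots_map]
  have : (((X : K[X]) ^ n - 1).roots.map (fun ζ => (Polynomial.aeval ζ) f)).prod = φ r := by
    rw [hrootsK, hr, map_multiset_prod, Multiset.map_map, Multiset.map_map]
    congr 1
    refine Multiset.map_congr rfl (fun ζ _ => ?_)
    simp only [Function.comp_apply]
    exact (aeval_ringhom_comm f (φ : L →+* K) ζ).symm
  rw [this, ← hq, φ.commutes, ← hm]
  simp

private lemma pierceLehmer_eq_prod (K : Type*) [Field K] [IsAlgClosed K]
    (f : Polynomial ℤ) {n : ℕ} (hn : n ≠ 0) :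
    pierceLehmer K f n
      = (-1) ^ (Multiset.card (f.map (Int.castRingHom K)).roots * n) *
        ((((X : K[X]) ^ n - 1).roots).map (fun ζ => (Polynomial.aeval ζ) f)).prod := by
  set fb : K[X] := f.map (Int.castRingHom K) with hfb
  set c : K := fb.leadingCoeff with hc
  set R : Multiset K := fb.roots with hR
  set gK : K[X] := (X : K[X]) ^ n - 1 with hgK
  have hmono : gK.Monic := by
    have := Polynomial.monic_X_pow_sub_C (1 : K) hn
    simpa [hgK] using this
  have hgsplit : Splits gK := IsAlgClosed.splits gK
  have hcard : Multiset.card gK.roots = n := by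
    rw [splits_iff_card_roots.mp hgsplit, hgK]
    have := Polynomial.natDegree_X_pow_sub_C (R := K) (n := n) (r := 1)
    simpa using this
  have hgprod : gK = (gK.roots.map (fun a => X - C a)).prod :=
    hgsplit.eq_prod_roots_of_monic hmono
  have hfbsplit : fb = C c * (R.map (fun a => X - C a)).prod :=
    (IsAlgClosed.splits fb).eq_prod_roots
  -- evaluate fb at a point
  have hfbeval : ∀ ζ : K, (Polynomial.aeval ζ) f = c * (R.map (fun α => ζ - α)).prod := by
    intro ζ
    have h1 : (Polynomial.aeval ζ) f = fb.eval ζ := by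
      rw [Polynomial.aeval_def, hfb, Polynomial.eval_map, algebraMap_int_eq]
    rw [h1]
    conv_lhs => rw [hfbsplit]
    rw [eval_mul, eval_C, eval_multiset_prod, Multiset.map_map]
    exact congrArg (fun z => c * z)
      (congrArg Multiset.prod (Multiset.map_congr rfl (fun α _ => by simp)))
  -- evaluate gK at a point
  have hgeval : ∀ α : K, α ^ n - 1 = (gK.roots.map (fun ζ => α - ζ)).prod := by
    intro α
    have h1 : gK.eval α = α ^ n - 1 := by simp [hgK]
    rw [← h1]
    conv_lhs => rw [hgprod]
    rw [eval_multiset_prod, Multiset.map_map]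
    exact congrArg Multiset.prod (Multiset.map_congr rfl (fun ζ _ => by simp))
  have key : ((gK.roots).map (fun ζ => (Polynomial.aeval ζ) f)).prod
      = (-1) ^ (Multiset.card R * n) * pierceLehmer K f n := by
    calc ((gK.roots).map (fun ζ => (Polynomial.aeval ζ) f)).prod
        = ((gK.roots).map (fun ζ => c * (R.map (fun α => ζ - α)).prod)).prod := by
          exact congrArg _ (Multiset.map_congr rfl (fun ζ _ => hfbeval ζ))
      _ = c ^ n * ((gK.roots).map (fun ζ => (R.map (fun α => ζ - α)).prod)).prod := by
          rw [Multiset.prod_map_mul, Multiset.map_const', Multiset.prod_replicate, hcard]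
      _ = c ^ n * (R.map (fun α => ((gK.roots).map (fun ζ => ζ - α)).prod)).prod := by
          rw [Multiset.prod_map_prod_map]
      _ = c ^ n * (R.map (fun α => (-1 : K) ^ n * (α ^ n - 1))).prod := by
          congr 1
          refine congrArg Multiset.prod (Multiset.map_congr rfl (fun α _ => ?_))
          have h2 : Multiset.map (fun ζ => ζ - α) gK.roots
              = Multiset.map (fun ζ => (-1 : K) * (α - ζ)) gK.roots :=
            Multiset.map_congr rfl (fun ζ _ => by ring)
          rw [h2, Multiset.prod_map_mul, Multiset.map_const', Multiset.prod_replicate, hcard,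
            ← hgeval α]
      _ = (-1) ^ (Multiset.card R * n) * pierceLehmer K f n := by
          rw [Multiset.prod_map_mul, Multiset.map_const', Multiset.prod_replicate,
            ← pow_mul, pierceLehmer]
          ring
  rw [key, ← mul_assoc, ← pow_add]
  have : Even (Multiset.card R * n + Multiset.card R * n) := ⟨Multiset.card R * n, rfl⟩
  rw [this.neg_one_pow, one_mul]

/-- for `f ∈ ℤ[t]` nonzero and not vanishing at roots of unity, and for two
distinct primes `p ≠ ℓ`, there are `k₀ ∈ ℕ` and `ν ∈ ℤ` such that
`ord_p(Δ_{ℓ^k}(f)) = μ_p(f)·ℓ^k + ν` for all `k ≥ k₀`, where `μ_p(f) = -m_p(f)/log p`. -/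
theorem ordp_pierceLehmer_ell_pow_tower
    (p : ℕ) [Fact p.Prime]
    (ℓ : ℕ) (hℓ : ℓ.Prime) (hℓp : ℓ ≠ p)
    (K : Type*) [NormedField K] [Algebra ℚ_[p] K] [IsAlgClosure ℚ_[p] K]
    (hext : ∀ x : ℚ_[p], ‖algebraMap ℚ_[p] K x‖ = ‖x‖)
    (f : Polynomial ℤ) (hf : f ≠ 0)
    (hru : ∀ ζ : K, IsOfFinOrder ζ → (f.map (Int.castRingHom K)).eval ζ ≠ 0) :
    ∃ (k₀ : ℕ) (ν : ℤ), ∀ k : ℕ, k₀ ≤ k →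
      ordp p (pierceLehmer K f (ℓ ^ k)) =
        (-(Real.log (mahlerMeasure K f)) / Real.log p) * ((ℓ : ℝ) ^ k) + (ν : ℝ) := by
  have hp : p.Prime := Fact.out
  haveI : CharZero K := charZero_of_injective_algebraMap (algebraMap ℚ_[p] K).injective
  haveI : IsAlgClosed K := IsAlgClosure.isAlgClosed ℚ_[p]
  have hnormZ : ∀ m : ℤ, ‖(m : K)‖ = ‖((m : ℚ_[p]))‖ := by
    intro m
    rw [show ((m : K)) = algebraMap ℚ_[p] K ((m : ℚ_[p])) from (map_intCast _ m).symm, hext]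
  haveI : IsUltrametricDist K := by
    refine IsUltrametricDist.isUltrametricDist_of_forall_norm_natCast_le_one (fun n => ?_)
    rw [show ((n : K)) = (((n : ℤ) : K)) by push_cast; rfl, hnormZ]
    exact Padic.norm_int_le_one _
  have hl0 : ℓ ≠ 0 := hℓ.pos.ne'
  have hlnorm : ‖((ℓ : ℕ) : K)‖ = 1 := by
    rw [show ((ℓ : ℕ) : K) = (((ℓ : ℕ) : ℤ) : K) by push_cast; rfl, hnormZ]
    have hle := Padic.norm_int_le_one (p := p) ((ℓ : ℕ) : ℤ)
    have hnlt : ¬ ‖(((ℓ : ℕ) : ℤ) : ℚ_[p])‖ < 1 := by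
      rw [Padic.norm_intCast_lt_one_iff]
      rw [Int.natCast_dvd_natCast]
      intro hdvd
      exact hℓp ((Nat.prime_dvd_prime_iff_eq hp hℓ).mp hdvd).symm
    exact le_antisymm hle (not_lt.mp hnlt)
  have hplt : (1 : ℝ) < (p : ℝ) := by exact_mod_cast hp.one_lt
  have hlogp : 0 < Real.log p := Real.log_pos hplt
  set fb : Polynomial K := f.map (Int.castRingHom K) with hfbdef
  have hfb0 : fb ≠ 0 := by
    rw [hfbdef]
    have hinj : Function.Injective (Int.castRingHom K) :=
      fun a b h => Int.cast_injective (α := K) (by simpa using h)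
    exact (Polynomial.map_ne_zero_iff hinj).mpr hf
  set c : K := fb.leadingCoeff with hcdef
  have hc0 : c ≠ 0 := leadingCoeff_ne_zero.mpr hfb0
  have hcpos : 0 < ‖c‖ := norm_pos_iff.mpr hc0
  set R : Multiset K := fb.roots with hRdef
  have hnr : ∀ α ∈ R, ∀ m : ℕ, m ≠ 0 → α ^ m ≠ 1 := by
    intro α hα m hm h1
    have hfin : IsOfFinOrder α := isOfFinOrder_iff_pow_eq_one.mpr ⟨m, Nat.pos_of_ne_zero hm, h1⟩
    exact hru α hfin (Polynomial.isRoot_of_mem_roots hα)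
  have hper : ∀ α ∈ R, ∃ k₁ e, 0 < e ∧ ∀ k, k₁ ≤ k →
      ‖α ^ ℓ ^ k - 1‖ = (max 1 ‖α‖) ^ ℓ ^ k * e := by
    intro α hα
    rcases lt_trichotomy ‖α‖ 1 with hlt | heq | hgt
    · refine ⟨0, 1, one_pos, fun k _ => ?_⟩
      rw [norm_pow_sub_one_of_lt hlt (pow_ne_zero k hl0), max_eq_left hlt.le, one_pow, mul_one]
    · obtain ⟨k₁, e, he, hev⟩ := unit_root_eventual heq (hnr α hα) hlnorm hl0
      refine ⟨k₁, e, he, fun k hk => ?_⟩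
      rw [hev k hk, heq, max_self, one_pow, one_mul]
    · refine ⟨0, 1, one_pos, fun k _ => ?_⟩
      rw [norm_pow_sub_one_of_gt hgt (pow_ne_zero k hl0), max_eq_right hgt.le, mul_one]
  obtain ⟨k₀, E, hE, hEv⟩ := eventually_prod_aux (fun k => ℓ ^ k)
    (fun k α => ‖α ^ ℓ ^ k - 1‖) (fun α => max 1 ‖α‖) R hper
  set P : ℝ := (R.map (fun α => max 1 ‖α‖)).prod with hPdef
  have hP1 : (1 : ℝ) ≤ P := one_le_prod_max R
  set M : ℝ := ‖c‖ * P with hMdef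
  have hMeq : mahlerMeasure K f = M := rfl
  have hMpos : 0 < M := mul_pos hcpos (lt_of_lt_of_le one_pos hP1)
  have hnormPL : ∀ k, k₀ ≤ k → ‖pierceLehmer K f (ℓ ^ k)‖ = M ^ ℓ ^ k * E := by
    intro k hk
    rw [show pierceLehmer K f (ℓ ^ k) = c ^ ℓ ^ k * ((R.map (fun α => α ^ ℓ ^ k - 1)).prod)
      from rfl]
    have hprodnorm : ∀ s : Multiset K, ‖s.prod‖ = (s.map (fun x : K => ‖x‖)).prod :=
      fun s => map_multiset_prod (normHom : K →*₀ ℝ) s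
    rw [norm_mul, norm_pow, hprodnorm, Multiset.map_map]
    rw [show Multiset.map ((fun x : K => ‖x‖) ∘ fun α => α ^ ℓ ^ k - 1) R
      = Multiset.map (fun α => ‖α ^ ℓ ^ k - 1‖) R from rfl]
    rw [hEv k hk, hMdef, mul_pow]
    ring
  have hPLint : ∀ k : ℕ, ∃ m : ℤ, pierceLehmer K f (ℓ ^ k) = (m : K) := by
    intro k
    obtain ⟨m, hm⟩ := prod_roots_int K f (pow_ne_zero k hl0)
    refine ⟨(-1) ^ (Multiset.card R * ℓ ^ k) * m, ?_⟩
    rw [pierceLehmer_eq_prod K f (pow_ne_zero k hl0), hm]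
    push_cast
    ring
  have hPL0 : ∀ k : ℕ, pierceLehmer K f (ℓ ^ k) ≠ 0 := by
    intro k
    rw [show pierceLehmer K f (ℓ ^ k) = c ^ ℓ ^ k * ((R.map (fun α => α ^ ℓ ^ k - 1)).prod)
      from rfl]
    refine mul_ne_zero (pow_ne_zero _ hc0) (Multiset.prod_ne_zero ?_)
    intro h0
    obtain ⟨α, hα, hα0⟩ := Multiset.mem_map.mp h0
    exact hnr α hα (ℓ ^ k) (pow_ne_zero k hl0) (by
      have := sub_eq_zero.mp hα0
      simpa using this)
  obtain ⟨hN1, -, -⟩ := newton_coeff R c hc0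
  have hfbeq : C c * (R.map (fun a => X - C a)).prod = fb :=
    ((IsAlgClosed.splits fb).eq_prod_roots).symm
  rw [hfbeq] at hN1
  set t : ℕ := Multiset.card R - (Multiset.filter (fun x => 1 < ‖x‖) R).card with htdef
  have hcoefft : fb.coeff t = ((f.coeff t : ℤ) : K) := by
    rw [hfbdef, Polynomial.coeff_map]
    simp
  have hN1' : M = ‖((f.coeff t : ℤ) : K)‖ := by
    rw [← hcoefft, hN1, hMdef, hPdef]
  have ha0 : (f.coeff t : ℤ) ≠ 0 := by
    intro h
    rw [h] at hN1'
    simp at hN1'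
    exact (ne_of_gt hMpos) hN1'
  have haQ : ((f.coeff t : ℤ) : ℚ_[p]) ≠ 0 := Int.cast_ne_zero.mpr ha0
  set va : ℤ := ((f.coeff t : ℤ) : ℚ_[p]).valuation with hvadef
  have hMval : M = (p : ℝ) ^ (-va) := by
    rw [hN1', hnormZ, Padic.norm_eq_zpow_neg_valuation haQ]
  have hlogM : Real.log M = ((-va : ℤ) : ℝ) * Real.log p := by
    rw [hMval, Real.log_zpow]
  have hmu : -(Real.log (mahlerMeasure K f)) / Real.log p = (va : ℝ) := by
    rw [hMeq, hlogM]
    push_cast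
    field_simp
  have hord : ∀ k, k₀ ≤ k → ordp p (pierceLehmer K f (ℓ ^ k))
      = (va : ℝ) * (ℓ : ℝ) ^ k + (-(Real.log E) / Real.log p) := by
    intro k hk
    rw [ordp, hnormPL k hk, Real.log_mul (by positivity) (ne_of_gt hE), Real.log_pow, hlogM]
    push_cast
    field_simp
    ring
  obtain ⟨m₀, hm₀⟩ := hPLint k₀
  have hm₀0 : m₀ ≠ 0 := by
    intro h
    apply hPL0 k₀
    rw [hm₀, h]
    simp
  have hordPL₀ : ordp p (pierceLehmer K f (ℓ ^ k₀)) = (((m₀ : ℚ_[p]).valuation : ℤ) : ℝ) := by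
    rw [ordp, hm₀, hnormZ, Padic.norm_eq_zpow_neg_valuation (Int.cast_ne_zero.mpr hm₀0), Real.log_zpow]
    push_cast
    field_simp
  refine ⟨k₀, (m₀ : ℚ_[p]).valuation - va * (ℓ : ℤ) ^ k₀, fun k hk => ?_⟩
  rw [hord k hk, hmu]
  have h0 := hord k₀ le_rfl
  rw [hordPL₀] at h0
  push_cast
  push_cast at h0
  linarith
end

section
/- Let f ∈ ℤ[t] be a nonzero polynomial which does not vanish at any root of unity, and let ℓ_1, …, ℓ_r be distinct primes. Then for every j ∈ {1,…,r} there exist a nonnegative integer λ_j(f), an integer ν_j(f), and a constant k_0 ∈ ℕ such that for every n = ℓ_1^{k_1} ⋯ ℓ_r^{k_r} with min(k_1, …, k_r) ≥ k_0 one has ord_{ℓ_j}(Δ_n(f)) = μ_{ℓ_j}(f)·n + λ_j(f)·k_j + ν_j(f), where μ_{ℓ_j}(f) := −m_{ℓ_j}(f)/log ℓ_j. -/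
open Polynomial

open IsUltrametricDist Finset


section Helpers
variable {K : Type*} [NormedField K] [IsUltrametricDist K]

lemma norm_sub_eq_left {x y : K} (h : ‖y‖ < ‖x‖) : ‖x - y‖ = ‖x‖ := by
  rw [sub_eq_add_neg, norm_add_eq_max_of_norm_ne_norm (by rw [norm_neg]; exact (ne_of_gt h))]
  rw [norm_neg]; exact max_eq_left h.le

lemma norm_sub_eq_right {x y : K} (h : ‖x‖ < ‖y‖) : ‖x - y‖ = ‖y‖ := by
  rw [← norm_neg, neg_sub]; exact norm_sub_eq_left h

lemma norm_sub_le_max' (x y : K) : ‖x - y‖ ≤ max ‖x‖ ‖y‖ := by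
  rw [sub_eq_add_neg]
  simpa [norm_neg] using norm_add_le_max x (-y)

lemma multiset_log_prod (s : Multiset ℝ) (h : ∀ x ∈ s, x ≠ 0) :
    Real.log s.prod = (s.map Real.log).sum := by
  induction s using Multiset.induction_on with
  | empty => simp
  | cons a t ih =>
    simp only [Multiset.prod_cons, Multiset.map_cons, Multiset.sum_cons]
    rw [Real.log_mul (h a (Multiset.mem_cons_self a t)) ?_, ih (fun x hx => h x (Multiset.mem_cons_of_mem hx))]
    exact Multiset.prod_ne_zero (fun h0 => h 0 (Multiset.mem_cons_of_mem h0) rfl)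

lemma multiset_prod_pos (s : Multiset ℝ) (h : ∀ x ∈ s, 0 < x) : 0 < s.prod := by
  induction s using Multiset.induction_on with
  | empty => simp
  | cons a t ih =>
    simp only [Multiset.prod_cons]
    exact mul_pos (h a (Multiset.mem_cons_self a t))
      (ih (fun x hx => h x (Multiset.mem_cons_of_mem hx)))

end Helpers

section Helpers2
variable {K : Type*} [NormedField K] [IsUltrametricDist K]

lemma norm_add_eq_left {x y : K} (h : ‖y‖ < ‖x‖) : ‖x + y‖ = ‖x‖ := by
  rw [norm_add_eq_max_of_norm_ne_norm (ne_of_gt h)]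
  exact max_eq_left h.le

set_option linter.unusedSectionVars false

lemma one_add_pow_sub_one_eq (β : K) (u : ℕ) (hu : 1 ≤ u) :
    (1 + β)^u - 1 = β * u + ∑ i ∈ Finset.Ico 2 (u+1), β^i * (u.choose i : ℕ) := by
  have h := add_pow β 1 u
  simp only [one_pow, mul_one] at h
  rw [add_comm (1:K) β, h, Finset.range_eq_Ico,
    Finset.sum_eq_sum_Ico_succ_bot (by omega : 0 < u + 1),
    Finset.sum_eq_sum_Ico_succ_bot (by omega : 1 < u + 1)]
  simp [Nat.choose_one_right]

lemma norm_one_add_pow_sub_one_coprime {β : K} (hβ1 : ‖β‖ < 1)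
    (u : ℕ) (hu0 : 0 < u) (hn : ∀ m : ℕ, ‖((m:ℕ) : K)‖ ≤ 1) (hu1 : ‖((u:ℕ) : K)‖ = 1) :
    ‖(1 + β)^u - 1‖ = ‖β‖ := by
  rcases eq_or_ne β 0 with rfl | hβ0
  · simp
  have hb : 0 < ‖β‖ := norm_pos_iff.mpr hβ0
  rw [one_add_pow_sub_one_eq β u hu0]
  have hE : ‖∑ i ∈ Finset.Ico 2 (u+1), β^i * (u.choose i : ℕ)‖ ≤ ‖β‖^2 := by
    refine norm_sum_le_of_forall_le_of_nonneg (by positivity) (fun i hi => ?_)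
    rw [Finset.mem_Ico] at hi
    rw [norm_mul, norm_pow]
    calc ‖β‖^i * ‖((u.choose i : ℕ) : K)‖ ≤ ‖β‖^2 * 1 := by
          refine mul_le_mul ?_ (hn _) (norm_nonneg _) (by positivity)
          exact pow_le_pow_of_le_one (norm_nonneg _) hβ1.le hi.1
      _ = ‖β‖^2 := mul_one _
  have hbu : ‖β * (u : K)‖ = ‖β‖ := by rw [norm_mul, hu1, mul_one]
  rw [norm_add_eq_left, hbu]
  rw [hbu]
  refine lt_of_le_of_lt hE ?_
  nlinarith

lemma norm_one_add_pow_sub_one_p {β : K} (hβ0 : β ≠ 0) (p : ℕ) (hp : 2 ≤ p)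
    (hp1 : ‖((p:ℕ) : K)‖ < 1) (hsmall : ‖β‖^(p-1) < ‖((p:ℕ) : K)‖)
    (hC : ∀ i, 0 < i → i < p → ‖((p.choose i : ℕ) : K)‖ ≤ ‖((p:ℕ) : K)‖) :
    ‖(1 + β)^p - 1‖ = ‖((p:ℕ) : K)‖ * ‖β‖ := by
  have hb : 0 < ‖β‖ := norm_pos_iff.mpr hβ0
  have hpK : 0 < ‖((p:ℕ) : K)‖ := lt_of_le_of_lt (by positivity) hsmall
  have hβ1 : ‖β‖ < 1 := by
    by_contra h
    push_neg at h
    exact absurd (lt_of_le_of_lt (one_le_pow₀ h) (lt_trans hsmall hp1)) (lt_irrefl 1)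
  have hβp : ‖β‖^p < ‖((p:ℕ) : K)‖ * ‖β‖ := by
    have : ‖β‖^p = ‖β‖^(p-1) * ‖β‖ := by
      rw [← pow_succ]
      congr 1
      omega
    rw [this]
    exact mul_lt_mul_of_pos_right hsmall hb
  rw [one_add_pow_sub_one_eq β p (by omega)]
  have hE : ‖∑ i ∈ Finset.Ico 2 (p+1), β^i * (p.choose i : ℕ)‖
      < ‖((p:ℕ) : K)‖ * ‖β‖ := by
    have hD : max (‖β‖^2 * ‖((p:ℕ) : K)‖) (‖β‖^p) < ‖((p:ℕ) : K)‖ * ‖β‖ := by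
      refine max_lt ?_ hβp
      nlinarith [mul_pos (mul_pos hpK hb) (sub_pos.mpr hβ1)]
    refine lt_of_le_of_lt (norm_sum_le_of_forall_le_of_nonneg ?_ (fun i hi => ?_)) hD
    · exact le_max_of_le_right (by positivity)
    rw [Finset.mem_Ico] at hi
    rw [norm_mul, norm_pow]
    rcases eq_or_lt_of_le (by omega : i ≤ p) with rfl | hilt
    · simp only [Nat.choose_self, Nat.cast_one, norm_one, mul_one]
      exact le_max_of_le_right le_rfl
    · refine le_max_of_le_left ?_
      refine mul_le_mul ?_ (hC i (by omega) hilt) (norm_nonneg _) (by positivity)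
      exact pow_le_pow_of_le_one (norm_nonneg _) hβ1.le hi.1
  have hbp : ‖β * ((p:ℕ) : K)‖ = ‖((p:ℕ) : K)‖ * ‖β‖ := by
    rw [norm_mul, mul_comm]
  rw [norm_add_eq_left (by rw [hbp]; exact hE), hbp]

lemma norm_one_add_pow_sub_one_contraction {β : K} (hβ1 : ‖β‖ < 1) (p : ℕ) (hp : 2 ≤ p)
    (hC : ∀ i, 0 < i → i < p → ‖((p.choose i : ℕ) : K)‖ ≤ ‖((p:ℕ) : K)‖) :
    ‖(1 + β)^p - 1‖ ≤ ‖β‖ * max ‖((p:ℕ) : K)‖ (‖β‖^(p-1)) := by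
  have hb0 : (0:ℝ) ≤ ‖β‖ := norm_nonneg _
  have key : (1 + β)^p - 1 = ∑ i ∈ Finset.Ico 1 (p+1), β^i * (p.choose i : ℕ) := by
    have h := add_pow β 1 p
    simp only [one_pow, mul_one] at h
    rw [add_comm (1:K) β, h, Finset.range_eq_Ico,
      Finset.sum_eq_sum_Ico_succ_bot (by omega : 0 < p + 1)]
    simp
  rw [key]
  refine norm_sum_le_of_forall_le_of_nonneg (by positivity) (fun i hi => ?_)
  rw [Finset.mem_Ico] at hi
  rw [norm_mul, norm_pow]
  rcases eq_or_lt_of_le (by omega : i ≤ p) with heq | hilt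
  · subst heq
    simp only [Nat.choose_self, Nat.cast_one, norm_one, mul_one]
    have h2 : ‖β‖^i = ‖β‖ * ‖β‖^(i-1) := by
      rw [← pow_succ']
      congr 1
      omega
    rw [h2]
    exact mul_le_mul_of_nonneg_left (le_max_right _ _) hb0
  · calc ‖β‖^i * ‖((p.choose i : ℕ) : K)‖ ≤ ‖β‖ * ‖((p:ℕ) : K)‖ := by
          refine mul_le_mul ?_ (hC i (by omega) hilt) (norm_nonneg _) hb0
          simpa using pow_le_pow_of_le_one (norm_nonneg _) hβ1.le hi.1
      _ ≤ _ := mul_le_mul_of_nonneg_left (le_max_left _ _) hb0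

end Helpers2

section Iterate
variable {K : Type*} [NormedField K] [IsUltrametricDist K]

set_option linter.unusedSectionVars false

lemma exists_stable {β : K} (hβ1 : ‖β‖ < 1) (p : ℕ) (hp : 2 ≤ p)
    (hp1 : ‖((p:ℕ) : K)‖ < 1) (hp0 : 0 < ‖((p:ℕ) : K)‖)
    (hC : ∀ i, 0 < i → i < p → ‖((p.choose i : ℕ) : K)‖ ≤ ‖((p:ℕ) : K)‖) :
    ∃ s : ℕ, ‖(1 + β)^(p^s) - 1‖^(p-1) < ‖((p:ℕ) : K)‖ := by
  set P := ‖((p:ℕ) : K)‖ with hP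
  set Q := max P (‖β‖^(p-1)) with hQ
  have hb0 : (0:ℝ) ≤ ‖β‖ := norm_nonneg _
  have hQ1 : Q < 1 := max_lt hp1 (pow_lt_one₀ hb0 hβ1 (by omega))
  have hQ0 : 0 ≤ Q := le_trans hp0.le (le_max_left _ _)
  have bound : ∀ s : ℕ, ‖(1 + β)^(p^s) - 1‖ ≤ Q^s * ‖β‖ := by
    intro s
    induction s with
    | zero => simp
    | succ s ih =>
      have hd1 : ‖(1 + β)^(p^s) - 1‖ < 1 := by
        refine lt_of_le_of_lt ih ?_
        nlinarith [pow_le_one₀ hQ0 hQ1.le (n := s)]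
      have key : (1 + β)^(p^(s+1)) - 1 = (1 + ((1 + β)^(p^s) - 1))^p - 1 := by
        rw [add_sub_cancel, pow_succ, pow_mul]
      rw [key]
      refine le_trans (norm_one_add_pow_sub_one_contraction hd1 p hp hC) ?_
      have hδβ : ‖(1 + β)^(p^s) - 1‖ ≤ ‖β‖ := le_trans ih (by nlinarith [pow_le_one₀ hQ0 hQ1.le (n := s)])
      have hmax : max P (‖(1 + β)^(p^s) - 1‖^(p-1)) ≤ Q := by
        refine max_le (le_max_left _ _) (le_trans ?_ (le_max_right _ _))
        exact pow_le_pow_left₀ (norm_nonneg _) hδβ _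
      calc ‖(1 + β)^(p^s) - 1‖ * max P (‖(1 + β)^(p^s) - 1‖^(p-1))
          ≤ (Q^s * ‖β‖) * Q := by
            refine mul_le_mul ih hmax (le_max_of_le_left hp0.le) (by positivity)
        _ = Q^(s+1) * ‖β‖ := by ring
  have hex : ∃ s : ℕ, Q^s * ‖β‖ < P := by
    rcases eq_or_lt_of_le hb0 with h0 | hbpos
    · exact ⟨0, by rw [← h0]; simpa using hp0⟩
    · obtain ⟨s, hs⟩ := exists_pow_lt_of_lt_one (div_pos hp0 hbpos) hQ1
      exact ⟨s, by rwa [lt_div_iff₀ hbpos] at hs⟩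
  obtain ⟨s, hs⟩ := hex
  refine ⟨s, ?_⟩
  have hle : ‖(1 + β)^(p^s) - 1‖ ≤ 1 := by
    refine le_trans (bound s) ?_
    calc Q^s * ‖β‖ ≤ 1 * 1 :=
          mul_le_mul (pow_le_one₀ hQ0 hQ1.le) hβ1.le hb0 zero_le_one
      _ = 1 := mul_one 1
  calc ‖(1 + β)^(p^s) - 1‖^(p-1) ≤ ‖(1 + β)^(p^s) - 1‖ := by
        simpa using pow_le_pow_of_le_one (norm_nonneg _) hle (by omega : 1 ≤ p - 1)
    _ ≤ Q^s * ‖β‖ := bound s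
    _ < P := hs

lemma stable_formula {γ : K} (p : ℕ) (hp : 2 ≤ p) (hp1 : ‖((p:ℕ) : K)‖ < 1)
    (hp0 : 0 < ‖((p:ℕ) : K)‖)
    (hn : ∀ m : ℕ, ‖((m:ℕ) : K)‖ ≤ 1)
    (hC : ∀ i, 0 < i → i < p → ‖((p.choose i : ℕ) : K)‖ ≤ ‖((p:ℕ) : K)‖)
    (hne : ∀ n : ℕ, 0 < n → γ^n ≠ 1)
    (hsmall : ‖γ - 1‖^(p-1) < ‖((p:ℕ) : K)‖) :
    ∀ t u : ℕ, 0 < u → ‖((u:ℕ) : K)‖ = 1 →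
      ‖γ^(p^t * u) - 1‖ = ‖((p:ℕ) : K)‖^t * ‖γ - 1‖ := by
  have hγ1 : ‖γ - 1‖ < 1 := by
    by_contra h
    push_neg at h
    exact absurd (lt_of_le_of_lt (one_le_pow₀ h) (lt_trans hsmall hp1)) (lt_irrefl 1)
  intro t
  induction t with
  | zero =>
    intro u hu0 hu1
    have := norm_one_add_pow_sub_one_coprime hγ1 u hu0 hn (by exact_mod_cast hu1)
    rw [add_sub_cancel] at this
    simpa using this
  | succ t ih =>
    intro u hu0 hu1
    have key : γ^(p^(t+1) * u) - 1 = (1 + (γ^(p^t * u) - 1))^p - 1 := by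
      rw [add_sub_cancel, ← pow_mul]
      congr 2
      ring
    have ihu := ih u hu0 hu1
    have hδ0 : γ^(p^t * u) - 1 ≠ 0 := by
      intro h
      exact hne (p^t * u) (by positivity) (sub_eq_zero.mp h)
    have hδsmall : ‖γ^(p^t * u) - 1‖^(p-1) < ‖((p:ℕ) : K)‖ := by
      refine lt_of_le_of_lt ?_ hsmall
      refine pow_le_pow_left₀ (norm_nonneg _) ?_ _
      rw [ihu]
      calc ‖((p:ℕ) : K)‖^t * ‖γ - 1‖ ≤ 1 * ‖γ - 1‖ :=
            mul_le_mul_of_nonneg_right (pow_le_one₀ hp0.le hp1.le) (norm_nonneg _)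
        _ = ‖γ - 1‖ := one_mul _
    rw [key, norm_one_add_pow_sub_one_p hδ0 p hp hp1 hδsmall hC, ihu]
    ring
end Iterate

section Gauss
variable {K : Type*} [NormedField K] [IsUltrametricDist K]

set_option linter.unusedSectionVars false

lemma gauss_step {q : K[X]} {M : ℝ} (hM : 0 < M)
    (hub : ∀ i, ‖q.coeff i‖ ≤ M) (hat : ∃ i, ‖q.coeff i‖ = M) (a : K) :
    (∀ i, ‖(q * (X - C a)).coeff i‖ ≤ M * max 1 ‖a‖) ∧
    (∃ i, ‖(q * (X - C a)).coeff i‖ = M * max 1 ‖a‖) := by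
  have hcoeff : ∀ i, (q * (X - C a)).coeff i = (q * X).coeff i - a * q.coeff i := by
    intro i
    rw [mul_sub, Polynomial.coeff_sub, Polynomial.coeff_mul_C, mul_comm (q.coeff i) a]
  have hq0 : q ≠ 0 := by
    intro h
    obtain ⟨i, hi⟩ := hat
    rw [h] at hi
    simp at hi
    exact absurd hi.symm (ne_of_gt hM)
  constructor
  · intro i
    rw [hcoeff]
    cases i with
    | zero =>
      rw [Polynomial.coeff_mul_X_zero, zero_sub, norm_neg, norm_mul]
      calc ‖a‖ * ‖q.coeff 0‖ ≤ ‖a‖ * M := mul_le_mul_of_nonneg_left (hub 0) (norm_nonneg a)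
        _ ≤ M * max 1 ‖a‖ := by rw [mul_comm]; exact mul_le_mul_of_nonneg_left (le_max_right _ _) hM.le
    | succ n =>
      rw [Polynomial.coeff_mul_X]
      refine le_trans (norm_sub_le_max' _ _) (max_le ?_ ?_)
      · calc ‖q.coeff n‖ ≤ M := hub n
          _ ≤ M * max 1 ‖a‖ := le_mul_of_one_le_right hM.le (le_max_left _ _)
      · rw [norm_mul]
        calc ‖a‖ * ‖q.coeff (n+1)‖ ≤ ‖a‖ * M := mul_le_mul_of_nonneg_left (hub _) (norm_nonneg a)
          _ ≤ M * max 1 ‖a‖ := by rw [mul_comm]; exact mul_le_mul_of_nonneg_left (le_max_right _ _) hM.le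
  · -- attained
    set T : Finset ℕ := (Finset.range (q.natDegree + 1)).filter (fun i => ‖q.coeff i‖ = M) with hT
    have hmemT : ∀ i, ‖q.coeff i‖ = M → i ∈ T := by
      intro i hi
      rw [hT, Finset.mem_filter, Finset.mem_range]
      refine ⟨?_, hi⟩
      have : q.coeff i ≠ 0 := by
        intro h
        rw [h] at hi
        simp at hi
        exact absurd hi.symm (ne_of_gt hM)
      have := Polynomial.le_natDegree_of_ne_zero this
      omega
    have hTne : T.Nonempty := by
      obtain ⟨i, hi⟩ := hat
      exact ⟨i, hmemT i hi⟩
    have hTval : ∀ i ∈ T, ‖q.coeff i‖ = M := fun i hi => (Finset.mem_filter.mp hi).2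
    rcases le_or_gt ‖a‖ 1 with hA | hA
    · -- max index
      set i := T.max' hTne with hi
      have hiT : i ∈ T := T.max'_mem hTne
      have hlt : ‖a * q.coeff (i+1)‖ < M := by
        rcases eq_or_ne (q.coeff (i+1)) 0 with h0 | h0
        · rw [h0, mul_zero, norm_zero]; exact hM
        · have h1 : ‖q.coeff (i+1)‖ < M := by
            rcases eq_or_lt_of_le (hub (i+1)) with he | hl
            · exact absurd (T.le_max' _ (hmemT _ he)) (by omega)
            · exact hl
          rw [norm_mul]
          calc ‖a‖ * ‖q.coeff (i+1)‖ ≤ 1 * ‖q.coeff (i+1)‖ :=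
                mul_le_mul_of_nonneg_right hA (norm_nonneg _)
            _ = ‖q.coeff (i+1)‖ := one_mul _
            _ < M := h1
      refine ⟨i + 1, ?_⟩
      rw [hcoeff, Polynomial.coeff_mul_X, norm_sub_eq_left, hTval i hiT,
        max_eq_left hA, mul_one]
      rw [hTval i hiT]
      exact hlt
    · -- min index
      obtain ⟨i, hiT, hmin⟩ : ∃ i ∈ T, ∀ m ∈ T, i ≤ m :=
        ⟨T.min' hTne, T.min'_mem hTne, fun m hm => T.min'_le m hm⟩
      have hgoal : M * max 1 ‖a‖ = ‖a‖ * M := by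
        rw [max_eq_right hA.le, mul_comm]
      refine ⟨i, ?_⟩
      rw [hcoeff, hgoal]
      have hbig : ‖a * q.coeff i‖ = ‖a‖ * M := by rw [norm_mul, hTval i hiT]
      have hsmall2 : ‖(q * X).coeff i‖ < ‖a * q.coeff i‖ := by
        rw [hbig]
        cases i with
        | zero =>
          rw [Polynomial.coeff_mul_X_zero, norm_zero]
          positivity
        | succ n =>
          rw [Polynomial.coeff_mul_X]
          have hn : ‖q.coeff n‖ < M := by
            rcases eq_or_lt_of_le (hub n) with he | hl
            · have := hmin _ (hmemT _ he)
              omega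
            · exact hl
          calc ‖q.coeff n‖ < M := hn
            _ = 1 * M := (one_mul M).symm
            _ ≤ ‖a‖ * M := mul_le_mul_of_nonneg_right hA.le hM.le
      rw [norm_sub_eq_right hsmall2, hbig]

lemma gauss_aux (S : Multiset K) {lc : K} (hlc : lc ≠ 0) :
    (∀ i, ‖(C lc * (S.map (fun a => X - C a)).prod).coeff i‖ ≤
        ‖lc‖ * (S.map (fun a => max 1 ‖a‖)).prod) ∧
    (∃ i, ‖(C lc * (S.map (fun a => X - C a)).prod).coeff i‖ =
        ‖lc‖ * (S.map (fun a => max 1 ‖a‖)).prod) := by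
  induction S using Multiset.induction_on with
  | empty =>
    simp only [Multiset.map_zero, Multiset.prod_zero, mul_one]
    constructor
    · intro i
      rcases eq_or_ne i 0 with rfl | h
      · rw [Polynomial.coeff_C_zero]
      · rw [Polynomial.coeff_C, if_neg h, norm_zero]
        positivity
    · exact ⟨0, by rw [Polynomial.coeff_C_zero]⟩
  | cons a S ih =>
    have hM : 0 < ‖lc‖ * (S.map (fun a => max 1 ‖a‖)).prod := by
      refine mul_pos (norm_pos_iff.mpr hlc) (multiset_prod_pos _ ?_)
      intro x hx
      obtain ⟨b, _, rfl⟩ := Multiset.mem_map.mp hx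
      positivity
    have key : C lc * ((a ::ₘ S).map (fun a => X - C a)).prod =
        (C lc * (S.map (fun a => X - C a)).prod) * (X - C a) := by
      rw [Multiset.map_cons, Multiset.prod_cons]
      ring
    have hstep := gauss_step hM ih.1 ih.2 a
    rw [key]
    constructor
    · intro i
      refine le_trans (hstep.1 i) (le_of_eq ?_)
      rw [Multiset.map_cons, Multiset.prod_cons]
      ring
    · obtain ⟨i, hi⟩ := hstep.2
      refine ⟨i, hi.trans ?_⟩
      rw [Multiset.map_cons, Multiset.prod_cons]
      ring

end Gauss


section PerRoot
variable {K : Type*} [NormedField K] [IsUltrametricDist K]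

set_option linter.unusedSectionVars false
set_option maxHeartbeats 1000000

-- decomposition of the exponent
lemma N_decomp (r : ℕ) (ℓ : Fin r → ℕ) (j : Fin r) (ks k : Fin r → ℕ)
    (hge : ∀ i, ks i ≤ k i) :
    (∏ i, ℓ i ^ k i) = (∏ i, ℓ i ^ ks i) *
      ((ℓ j ^ (k j - ks j)) * ∏ i ∈ Finset.univ.erase j, ℓ i ^ (k i - ks i)) := by
  have h1 : (∏ i, ℓ i ^ k i) = (∏ i, ℓ i ^ ks i) * (∏ i, ℓ i ^ (k i - ks i)) := by
    rw [← Finset.prod_mul_distrib]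
    refine Finset.prod_congr rfl (fun i _ => ?_)
    rw [← pow_add]
    congr 1
    have := hge i
    omega
  rw [h1, Finset.mul_prod_erase Finset.univ (fun i => ℓ i ^ (k i - ks i)) (Finset.mem_univ j)]

lemma not_dvd_erase_prod (r : ℕ) (ℓ : Fin r → ℕ) (hℓ : ∀ i, (ℓ i).Prime)
    (hinj : Function.Injective ℓ) (j : Fin r) (d : Fin r → ℕ) :
    ¬ (ℓ j) ∣ ∏ i ∈ Finset.univ.erase j, ℓ i ^ d i := by
  rw [← Nat.Prime.coprime_iff_not_dvd (hℓ j)]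
  refine Nat.Coprime.prod_right (fun i hi => ?_)
  refine Nat.Coprime.pow_right _ ?_
  rw [Nat.coprime_primes (hℓ j) (hℓ i)]
  intro h
  exact (Finset.mem_erase.mp hi).1 (hinj h).symm

lemma per_root_asymptotic (r : ℕ) (ℓ : Fin r → ℕ) (hℓ : ∀ i, (ℓ i).Prime)
    (hinj : Function.Injective ℓ) (j : Fin r)
    (hn1 : ∀ m : ℕ, ‖((m : ℕ) : K)‖ ≤ 1)
    (hcop : ∀ u : ℕ, ¬ (ℓ j) ∣ u → ‖((u : ℕ) : K)‖ = 1)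
    (hpnorm : ‖((ℓ j : ℕ) : K)‖ = (ℓ j : ℝ)⁻¹)
    (α : K) (hne : ∀ n : ℕ, 0 < n → α ^ n ≠ 1) :
    ∃ (lam : ℕ) (c : ℝ) (k₀ : ℕ), ∀ k : Fin r → ℕ, (∀ i, k₀ ≤ k i) →
      Real.log ‖α ^ (∏ i, ℓ i ^ k i) - 1‖ =
        ((∏ i, ℓ i ^ k i : ℕ) : ℝ) * Real.log (max 1 ‖α‖)
          - ((lam : ℝ) * (k j : ℝ)) * Real.log (ℓ j) + c := by
  set p := ℓ j with hp
  have hp2 : 2 ≤ p := (hℓ j).two_le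
  have hppos : (0:ℝ) < p := by positivity
  have hp0 : 0 < ‖((p : ℕ) : K)‖ := by
    rw [hpnorm]; positivity
  have hp1 : ‖((p : ℕ) : K)‖ < 1 := by
    rw [hpnorm]
    rw [inv_lt_one_iff₀]
    right
    exact_mod_cast hp2
  have hC : ∀ i, 0 < i → i < p → ‖((p.choose i : ℕ) : K)‖ ≤ ‖((p : ℕ) : K)‖ := by
    intro i h0 hlt
    obtain ⟨m, hm⟩ := (hℓ j).dvd_choose_self (by omega) hlt
    rw [hm]
    push_cast
    rw [norm_mul]
    calc ‖((p:ℕ) : K)‖ * ‖((m:ℕ) : K)‖ ≤ ‖((p:ℕ) : K)‖ * 1 :=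
          mul_le_mul_of_nonneg_left (hn1 m) (norm_nonneg _)
      _ = _ := mul_one _
  have hNpos : ∀ k : Fin r → ℕ, 0 < ∏ i, ℓ i ^ k i := by
    intro k
    exact Finset.prod_pos (fun i _ => pow_pos (hℓ i).pos _)
  rcases lt_trichotomy ‖α‖ 1 with hα | hα | hα
  · -- |α| < 1
    refine ⟨0, 0, 0, fun k _ => ?_⟩
    have h1 : ‖α ^ (∏ i, ℓ i ^ k i) - 1‖ = 1 := by
      have : ‖α ^ (∏ i, ℓ i ^ k i)‖ < ‖(1:K)‖ := by
        rw [norm_one, norm_pow]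
        exact pow_lt_one₀ (norm_nonneg _) hα (by have := hNpos k; omega)
      rw [norm_sub_eq_right this, norm_one]
    rw [h1, Real.log_one, max_eq_left hα.le, Real.log_one]
    simp
  · -- |α| = 1
    have hmax : max 1 ‖α‖ = 1 := by rw [hα]; simp
    by_cases hex : ∃ ks : Fin r → ℕ, ‖α ^ (∏ i, ℓ i ^ ks i) - 1‖ < 1
    · obtain ⟨ks, hks⟩ := hex
      set β : K := α ^ (∏ i, ℓ i ^ ks i) - 1 with hβ
      have hβval : 1 + β = α ^ (∏ i, ℓ i ^ ks i) := by rw [hβ]; ring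
      obtain ⟨s₀, hs₀⟩ := exists_stable hks p hp2 hp1 hp0 hC
      set γ : K := α ^ ((∏ i, ℓ i ^ ks i) * p ^ s₀) with hγ
      have hγeq : γ = (1 + β)^(p ^ s₀) := by rw [hβval, ← pow_mul]
      have hγsmall : ‖γ - 1‖^(p-1) < ‖((p : ℕ) : K)‖ := by rw [hγeq]; exact hs₀
      have hγne : ∀ n : ℕ, 0 < n → γ ^ n ≠ 1 := by
        intro n hn h
        rw [hγ, ← pow_mul] at h
        refine hne _ ?_ h
        have h1 := hNpos ks
        have h2 : 0 < p ^ s₀ := pow_pos (hℓ j).pos _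
        positivity
      have hγ1 : γ ≠ 1 := by
        intro h
        exact hγne 1 one_pos (by rw [pow_one]; exact h)
      have hb : 0 < ‖γ - 1‖ := norm_pos_iff.mpr (sub_ne_zero.mpr hγ1)
      refine ⟨1, ((ks j + s₀ : ℕ) : ℝ) * Real.log p + Real.log ‖γ - 1‖,
        (Finset.univ.sup ks) + s₀, fun k hk => ?_⟩
      have hge : ∀ i, ks i ≤ k i := by
        intro i
        have h1 : ks i ≤ Finset.univ.sup ks := Finset.le_sup (Finset.mem_univ i)
        have := hk i
        omega
      set u : ℕ := ∏ i ∈ Finset.univ.erase j, ℓ i ^ (k i - ks i) with hu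
      have hund : ¬ p ∣ u := not_dvd_erase_prod r ℓ hℓ hinj j _
      have hu1 : ‖((u : ℕ) : K)‖ = 1 := hcop u hund
      have htj : ks j + s₀ ≤ k j := by
        have h1 : ks j ≤ Finset.univ.sup ks := Finset.le_sup (Finset.mem_univ j)
        have := hk j
        omega
      set t : ℕ := k j - (ks j + s₀) with ht
      have hNsplit : (∏ i, ℓ i ^ k i) = ((∏ i, ℓ i ^ ks i) * p ^ s₀) * (p ^ t * u) := by
        rw [N_decomp r ℓ j ks k hge, ← hu, ← hp]
        have : p ^ (k j - ks j) = p ^ s₀ * p ^ t := by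
          rw [← pow_add]
          congr 1
          omega
        rw [this]
        ring
      have hαγ : α ^ (∏ i, ℓ i ^ k i) = γ ^ (p ^ t * u) := by
        rw [hNsplit, hγ, ← pow_mul]
      have hval := stable_formula p hp2 hp1 hp0 hn1 hC hγne hγsmall t u
        (Nat.pos_of_ne_zero (by intro h; exact hund (h ▸ dvd_zero p))) hu1
      rw [hαγ, hval, hmax, Real.log_one, mul_zero]
      rw [Real.log_mul (by positivity) (by positivity), Real.log_pow, hpnorm,
        Real.log_inv]
      have hcast : (t : ℝ) = (k j : ℝ) - ((ks j + s₀ : ℕ) : ℝ) := by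
        rw [ht]
        push_cast [Nat.cast_sub htj]
        ring
      rw [hcast]
      push_cast
      ring
    · -- never close to 1
      push_neg at hex
      refine ⟨0, 0, 0, fun k _ => ?_⟩
      have h1 : ‖α ^ (∏ i, ℓ i ^ k i) - 1‖ = 1 := by
        refine le_antisymm ?_ (hex k)
        refine le_trans (norm_sub_le_max' _ _) ?_
        rw [norm_pow, hα, one_pow, norm_one]
        simp
      rw [h1, Real.log_one, hmax, Real.log_one]
      simp
  · -- |α| > 1
    refine ⟨0, 0, 0, fun k _ => ?_⟩
    have h1 : ‖α ^ (∏ i, ℓ i ^ k i) - 1‖ = ‖α‖ ^ (∏ i, ℓ i ^ k i) := by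
      have hlt : ‖(1:K)‖ < ‖α ^ (∏ i, ℓ i ^ k i)‖ := by
        rw [norm_one, norm_pow]
        exact one_lt_pow₀ hα (by have := hNpos k; omega)
      rw [norm_sub_eq_left hlt, norm_pow]
    rw [h1, Real.log_pow, max_eq_right hα.le]
    simp
end PerRoot


section MoreHelpers

lemma mem_le_sum_nat {s : Multiset ℕ} {x : ℕ} (h : x ∈ s) : x ≤ s.sum := by
  obtain ⟨t, rfl⟩ := Multiset.exists_cons_of_mem h
  rw [Multiset.sum_cons]
  exact Nat.le_add_right _ _

lemma natcast_multiset_sum (s : Multiset ℕ) :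
    ((s.sum : ℕ) : ℝ) = (s.map (fun x : ℕ => (x : ℝ))).sum := by
  induction s using Multiset.induction_on with
  | empty => simp
  | cons a t ih => simp [ih]

lemma norm_multiset_prod' {K : Type*} [NormedField K] (s : Multiset K) :
    ‖s.prod‖ = (s.map (fun x => ‖x‖)).prod := by
  induction s using Multiset.induction_on with
  | empty => simp
  | cons a t ih => simp [norm_mul, ih]

end MoreHelpers


lemma fixed_mem_range {F K : Type*} [Field F] [Field K] [Algebra F K]
    [IsAlgClosure F K] [CharZero F]
    (x : K) (hx : ∀ σ : K ≃ₐ[F] K, σ x = x) : x ∈ (algebraMap F K).range := by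
  classical
  haveI : Algebra.IsAlgebraic F K := IsAlgClosure.isAlgebraic
  haveI : IsAlgClosed K := IsAlgClosure.isAlgClosed F
  have hint : IsIntegral F x := (Algebra.IsAlgebraic.isAlgebraic x).isIntegral
  rw [← minpoly.degree_eq_one_iff]
  by_contra hdeg
  have hnd : 2 ≤ (minpoly F x).natDegree := by
    have h1 := minpoly.natDegree_pos hint
    have h2 : (minpoly F x).natDegree ≠ 1 := by
      intro h
      exact hdeg (by rw [Polynomial.degree_eq_natDegree (minpoly.ne_zero hint), h]; rfl)
    omega
  have hroots : ∀ y ∈ ((minpoly F x).map (algebraMap F K)).roots, x = y := by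
    intro y hy
    have hy0 : Polynomial.aeval y (minpoly F x) = 0 := by
      have h := (Polynomial.mem_roots (by
        exact Polynomial.map_ne_zero_iff (algebraMap F K).injective |>.mpr (minpoly.ne_zero hint))).mp hy
      rwa [Polynomial.IsRoot, Polynomial.eval_map, ← Polynomial.aeval_def] at h
    have hconj : IsConjRoot F x y := isConjRoot_of_aeval_eq_zero hint hy0
    obtain ⟨σ, hσ⟩ := hconj.exists_algEquiv
    have hfix := hx σ.symm
    have : y = x := by
      calc y = σ.symm (σ y) := by simp
        _ = σ.symm x := by rw [hσ]
        _ = x := hfix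
    exact this.symm
  have hsep : ((minpoly F x).map (algebraMap F K)).Separable :=
    ((minpoly.irreducible hint).separable).map
  have hsplit : ((minpoly F x).map (algebraMap F K)).roots.card =
      ((minpoly F x).map (algebraMap F K)).natDegree := by
    rw [← Polynomial.splits_iff_card_roots]
    exact IsAlgClosed.splits _
  have hnodup := Polynomial.nodup_roots hsep
  have hcard : 2 ≤ ((minpoly F x).map (algebraMap F K)).roots.card := by
    rw [hsplit, Polynomial.natDegree_map]
    exact hnd
  have hcount := Multiset.count_eq_card.mpr hroots
  have hle := Multiset.nodup_iff_count_le_one.mp hnodup x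
  omega

lemma pierceLehmer_fixed {F K : Type*} [Field F] [Field K] [Algebra F K]
    [IsAlgClosure F K] (f : Polynomial ℤ) (n : ℕ) (σ : K ≃ₐ[F] K) :
    σ (pierceLehmer K f n) = pierceLehmer K f n := by
  haveI : IsAlgClosed K := IsAlgClosure.isAlgClosed F
  set τ : K →+* K := σ.toAlgHom.toRingHom with hτ
  set g : K[X] := f.map (Int.castRingHom K) with hg
  have hmapg : g.map τ = g := by
    rw [hg, Polynomial.map_map]
    congr 1
    exact Subsingleton.elim _ _
  have hsplits : g.Splits := IsAlgClosed.splits g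
  have hrootsmap : g.roots.map τ = g.roots := by
    rw [← hsplits.roots_map τ, hmapg]
  have hlc : τ g.leadingCoeff = g.leadingCoeff := by
    conv_rhs => rw [← hmapg]
    rw [Polynomial.leadingCoeff_map_of_injective (τ.injective) g]
  show τ (pierceLehmer K f n) = pierceLehmer K f n
  unfold pierceLehmer
  rw [← hg, map_mul, map_pow, hlc]
  congr 1
  rw [map_multiset_prod, Multiset.map_map]
  have hfn : (⇑τ ∘ fun α => α ^ n - 1) = (fun α => α ^ n - 1) ∘ ⇑τ := by
    funext α; simp
  rw [hfn, ← Multiset.map_map, hrootsmap]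


set_option maxHeartbeats 2000000 in
/-- for `f ∈ ℤ[t]` nonzero and not vanishing at roots of unity, distinct
primes `ℓ_1, …, ℓ_r` and `j ∈ {1,…,r}`, there exist `λ_j(f) ≥ 0`, `ν_j(f) ∈ ℤ` and `k₀`
such that for every `n = ℓ_1^{k_1} ⋯ ℓ_r^{k_r}` with `min(k_1,…,k_r) ≥ k₀` one has
`ord_{ℓ_j}(Δ_n(f)) = μ_{ℓ_j}(f)·n + λ_j(f)·k_j + ν_j(f)`. -/
theorem ordp_pierceLehmer_multi_prime_tower
    (r : ℕ) (ℓ : Fin r → ℕ) (hℓ : ∀ i, (ℓ i).Prime) (hinj : Function.Injective ℓ)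
    (j : Fin r) [Fact (ℓ j).Prime]
    (K : Type*) [NormedField K] [Algebra ℚ_[ℓ j] K] [IsAlgClosure ℚ_[ℓ j] K]
    (hext : ∀ x : ℚ_[ℓ j], ‖algebraMap ℚ_[ℓ j] K x‖ = ‖x‖)
    (f : Polynomial ℤ) (hf : f ≠ 0)
    (hru : ∀ ζ : K, IsOfFinOrder ζ → (f.map (Int.castRingHom K)).eval ζ ≠ 0) :
    ∃ (lam : ℕ) (ν : ℤ) (k₀ : ℕ), ∀ k : Fin r → ℕ, (∀ i, k₀ ≤ k i) →
      ordp (ℓ j) (pierceLehmer K f (∏ i, ℓ i ^ k i)) =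
        (-(Real.log (mahlerMeasure K f)) / Real.log (ℓ j)) * ((∏ i, ℓ i ^ k i : ℕ) : ℝ) +
          (lam : ℝ) * (k j : ℝ) + (ν : ℝ) := by
  classical
  have hp2 : 2 ≤ ℓ j := (hℓ j).two_le
  have hlogp : (0:ℝ) < Real.log (ℓ j) := Real.log_pos (by exact_mod_cast hp2)
  -- ultrametric structure on K
  haveI hUD : IsUltrametricDist K := by
    refine isUltrametricDist_of_forall_norm_natCast_le_one (fun m => ?_)
    rw [← map_natCast (algebraMap ℚ_[ℓ j] K) m, hext]
    exact_mod_cast Padic.norm_int_le_one (p := ℓ j) (m : ℤ)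
  haveI : CharZero K := charZero_of_injective_algebraMap (algebraMap ℚ_[ℓ j] K).injective
  -- transfer of integer norms
  have hnormZ : ∀ m : ℤ, ‖((m : ℤ) : K)‖ = ‖((m : ℤ) : ℚ_[ℓ j])‖ := by
    intro m
    rw [← map_intCast (algebraMap ℚ_[ℓ j] K) m, hext]
  have hn1 : ∀ m : ℕ, ‖((m : ℕ) : K)‖ ≤ 1 := by
    intro m
    have h := hnormZ (m : ℤ)
    push_cast at h
    rw [h]
    exact_mod_cast Padic.norm_int_le_one (p := ℓ j) (m : ℤ)
  have hcop : ∀ u : ℕ, ¬ (ℓ j) ∣ u → ‖((u : ℕ) : K)‖ = 1 := by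
    intro u hu
    have h := hnormZ (u : ℤ)
    push_cast at h
    rw [h]
    have hle : ‖((u : ℕ) : ℚ_[ℓ j])‖ ≤ 1 := by
      exact_mod_cast Padic.norm_int_le_one (p := ℓ j) (u : ℤ)
    rcases eq_or_lt_of_le hle with he | hlt
    · exact he
    · exfalso
      have h2 : ((ℓ j : ℕ) : ℤ) ∣ (u : ℤ) := by
        refine (Padic.norm_intCast_lt_one_iff (k := (u : ℤ))).mp ?_
        exact_mod_cast hlt
      exact hu (by exact_mod_cast h2)
  have hpnorm : ‖((ℓ j : ℕ) : K)‖ = ((ℓ j : ℕ) : ℝ)⁻¹ := by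
    have h := hnormZ ((ℓ j : ℕ) : ℤ)
    push_cast at h
    rw [h]
    exact_mod_cast Padic.norm_p (p := ℓ j)
  -- the mapped polynomial and its roots
  have hg0 : f.map (Int.castRingHom K) ≠ 0 := by
    refine (Polynomial.map_ne_zero_iff ?_).mpr hf
    intro a b hab
    simp only [Int.coe_castRingHom] at hab
    exact Int.cast_injective hab
  have hrootpow : ∀ α ∈ (f.map (Int.castRingHom K)).roots, ∀ n : ℕ, 0 < n → α ^ n ≠ 1 := by
    intro α hα n hn h1
    exact hru α (isOfFinOrder_iff_pow_eq_one.mpr ⟨n, hn, h1⟩)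
      (Polynomial.isRoot_of_mem_roots hα)
  have hnpos : ∀ k : Fin r → ℕ, 0 < ∏ i, ℓ i ^ k i :=
    fun k => Finset.prod_pos (fun i _ => pow_pos (hℓ i).pos _)
  -- per-root asymptotics
  have hper : ∀ α : K, ∃ (lam : ℕ) (c : ℝ) (k₀ : ℕ), ∀ k : Fin r → ℕ, (∀ i, k₀ ≤ k i) →
      α ∈ (f.map (Int.castRingHom K)).roots →
      Real.log ‖α ^ (∏ i, ℓ i ^ k i) - 1‖ =
        ((∏ i, ℓ i ^ k i : ℕ) : ℝ) * Real.log (max 1 ‖α‖)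
          - ((lam : ℝ) * (k j : ℝ)) * Real.log (ℓ j) + c := by
    intro α
    by_cases hα : α ∈ (f.map (Int.castRingHom K)).roots
    · obtain ⟨lam, c, k₀, hs⟩ := per_root_asymptotic r ℓ hℓ hinj j hn1 hcop hpnorm α
        (hrootpow α hα)
      exact ⟨lam, c, k₀, fun k hk _ => hs k hk⟩
    · exact ⟨0, 0, 0, fun k hk h => absurd h hα⟩
  choose lamf cf k0f hspec using hper
  set R : Multiset K := (f.map (Int.castRingHom K)).roots with hRdef
  set LAM : ℕ := (R.map lamf).sum with hLAMdef
  set CC : ℝ := (R.map cf).sum with hCCdef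
  set K₀ : ℕ := (R.map k0f).sum with hK₀def
  have hk0le : ∀ α ∈ R, k0f α ≤ K₀ := fun α hα =>
    mem_le_sum_nat (Multiset.mem_map_of_mem _ hα)
  have hlc0 : (f.map (Int.castRingHom K)).leadingCoeff ≠ 0 :=
    Polynomial.leadingCoeff_ne_zero.mpr hg0
  have hlcpos : 0 < ‖(f.map (Int.castRingHom K)).leadingCoeff‖ := norm_pos_iff.mpr hlc0
  have hprodpos : 0 < (R.map (fun α => max 1 ‖α‖)).prod := by
    refine multiset_prod_pos _ (fun x hx => ?_)
    obtain ⟨b, _, rfl⟩ := Multiset.mem_map.mp hx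
    positivity
  have hM : mahlerMeasure K f =
      ‖(f.map (Int.castRingHom K)).leadingCoeff‖ * (R.map (fun α => max 1 ‖α‖)).prod := rfl
  have hMpos : 0 < mahlerMeasure K f := by rw [hM]; exact mul_pos hlcpos hprodpos
  have hlogM : Real.log (mahlerMeasure K f)
      = Real.log ‖(f.map (Int.castRingHom K)).leadingCoeff‖
        + (R.map (fun α => Real.log (max 1 ‖α‖))).sum := by
    rw [hM, Real.log_mul (ne_of_gt hlcpos) (ne_of_gt hprodpos),
      multiset_log_prod _ (fun x hx => ?_), Multiset.map_map]
    · rfl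
    · obtain ⟨b, _, rfl⟩ := Multiset.mem_map.mp hx
      positivity
  -- the Mahler measure is an integral power of p (via the Gauss norm)
  have hgfact : f.map (Int.castRingHom K) =
      C (f.map (Int.castRingHom K)).leadingCoeff * (R.map (fun a => X - C a)).prod := by
    haveI : IsAlgClosed K := IsAlgClosure.isAlgClosed ℚ_[ℓ j]
    exact (IsAlgClosed.splits _).eq_prod_roots
  obtain ⟨i0, hi0⟩ := (gauss_aux R hlc0).2
  rw [← hgfact] at hi0
  have hμ : ∃ z : ℤ, Real.log (mahlerMeasure K f) = (z : ℝ) * Real.log (ℓ j) := by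
    have hc : (f.map (Int.castRingHom K)).coeff i0 = ((f.coeff i0 : ℤ) : K) := by
      rw [Polynomial.coeff_map]
      rfl
    have hMv : mahlerMeasure K f = ‖((f.coeff i0 : ℤ) : ℚ_[ℓ j])‖ := by
      rw [hM, ← hi0, hc, hnormZ]
    have hx0 : ((f.coeff i0 : ℤ) : ℚ_[ℓ j]) ≠ 0 := by
      intro h
      rw [hMv, h, norm_zero] at hMpos
      exact lt_irrefl 0 hMpos
    refine ⟨-(((f.coeff i0 : ℤ) : ℚ_[ℓ j]).valuation), ?_⟩
    rw [hMv, Padic.norm_eq_zpow_neg_valuation hx0, Real.log_zpow]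
  obtain ⟨μz, hμz⟩ := hμ
  -- the main local formula
  have hmain : ∀ k : Fin r → ℕ, (∀ i, K₀ ≤ k i) →
      Real.log ‖pierceLehmer K f (∏ i, ℓ i ^ k i)‖
        = ((∏ i, ℓ i ^ k i : ℕ) : ℝ) * Real.log (mahlerMeasure K f)
          - ((LAM : ℝ) * (k j : ℝ)) * Real.log (ℓ j) + CC := by
    intro k hk
    have hn0 : 0 < ∏ i, ℓ i ^ k i := hnpos k
    have hfac : ∀ α ∈ R, α ^ (∏ i, ℓ i ^ k i) - 1 ≠ 0 := fun α hα =>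
      sub_ne_zero.mpr (hrootpow α hα _ hn0)
    have h1 : ‖pierceLehmer K f (∏ i, ℓ i ^ k i)‖
        = ‖(f.map (Int.castRingHom K)).leadingCoeff‖ ^ (∏ i, ℓ i ^ k i)
          * (R.map (fun α => ‖α ^ (∏ i, ℓ i ^ k i) - 1‖)).prod := by
      rw [pierceLehmer, norm_mul, norm_pow, norm_multiset_prod', Multiset.map_map]
      rfl
    have hprodne : (R.map (fun α => ‖α ^ (∏ i, ℓ i ^ k i) - 1‖)).prod ≠ 0 := by
      refine ne_of_gt (multiset_prod_pos _ (fun x hx => ?_))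
      obtain ⟨b, hb, rfl⟩ := Multiset.mem_map.mp hx
      exact norm_pos_iff.mpr (hfac b hb)
    have h2 : Real.log ‖pierceLehmer K f (∏ i, ℓ i ^ k i)‖
        = ((∏ i, ℓ i ^ k i : ℕ) : ℝ) * Real.log ‖(f.map (Int.castRingHom K)).leadingCoeff‖
          + (R.map (fun α => Real.log ‖α ^ (∏ i, ℓ i ^ k i) - 1‖)).sum := by
      rw [h1, Real.log_mul (pow_ne_zero _ (ne_of_gt hlcpos)) hprodne, Real.log_pow,
        multiset_log_prod _ (fun x hx => ?_), Multiset.map_map]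
      · rfl
      · obtain ⟨b, hb, rfl⟩ := Multiset.mem_map.mp hx
        exact ne_of_gt (norm_pos_iff.mpr (hfac b hb))
    have h3 : (R.map (fun α => Real.log ‖α ^ (∏ i, ℓ i ^ k i) - 1‖))
        = R.map (fun α => ((∏ i, ℓ i ^ k i : ℕ) : ℝ) * Real.log (max 1 ‖α‖)
            + ((-((k j : ℝ) * Real.log (ℓ j))) * (lamf α : ℝ) + cf α)) := by
      refine Multiset.map_congr rfl (fun α hα => ?_)
      have hs := hspec α k (fun i => le_trans (hk0le α hα) (hk i)) hα
      rw [hs]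
      ring
    have hcast : (R.map (fun α => ((lamf α : ℕ) : ℝ))).sum = ((LAM : ℕ) : ℝ) := by
      rw [hLAMdef, natcast_multiset_sum, Multiset.map_map]
      rfl
    rw [h2, h3, Multiset.sum_map_add, Multiset.sum_map_mul_left, Multiset.sum_map_add,
      Multiset.sum_map_mul_left, hcast, hlogM]
    push_cast
    ring
  -- integrality of the valuation of the Pierce–Lehmer numbers
  have hordint : ∀ n : ℕ, 0 < n →
      ∃ z : ℤ, Real.log ‖pierceLehmer K f n‖ = (z : ℝ) * Real.log (ℓ j) := by
    intro n hn
    have hΔ0 : pierceLehmer K f n ≠ 0 := by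
      rw [pierceLehmer]
      refine mul_ne_zero (pow_ne_zero _ hlc0) (Multiset.prod_ne_zero ?_)
      intro h0
      obtain ⟨α, hα, hval⟩ := Multiset.mem_map.mp h0
      exact (sub_ne_zero.mpr (hrootpow α hα n hn)) hval
    obtain ⟨x, hx⟩ := fixed_mem_range (F := ℚ_[ℓ j]) (pierceLehmer K f n)
      (fun σ => pierceLehmer_fixed f n σ)
    have hx0 : x ≠ 0 := by
      intro h
      rw [h, map_zero] at hx
      exact hΔ0 hx.symm
    refine ⟨-x.valuation, ?_⟩
    rw [← hx, hext, Padic.norm_eq_zpow_neg_valuation hx0, Real.log_zpow]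
  -- determine the integer constant
  obtain ⟨z0, hz0⟩ := hordint (∏ i, ℓ i ^ (fun _ : Fin r => K₀) i) (hnpos _)
  have hbase := hmain (fun _ => K₀) (fun i => le_rfl)
  rw [hz0, hμz] at hbase
  -- CC = (z0 - μz * n0 + LAM * K₀) * log p
  refine ⟨LAM, -z0 + μz * ((∏ i, ℓ i ^ (fun _ : Fin r => K₀) i : ℕ) : ℤ)
    - (LAM : ℤ) * (K₀ : ℤ), K₀, fun k hk => ?_⟩
  have hkey := hmain k hk
  rw [ordp, hkey, hμz]
  have hCC : CC = ((z0 : ℝ) - (μz : ℝ) * ((∏ i, ℓ i ^ (fun _ : Fin r => K₀) i : ℕ) : ℝ)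
      + (LAM : ℝ) * (K₀ : ℝ)) * Real.log (ℓ j) := by
    have := hbase
    push_cast at this ⊢
    nlinarith [this]
  rw [hCC]
  field_simp
  push_cast
  ring
end
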